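/- arXiv:2205.00596 — 4 statements merged into one kernel-verified Lean document; each statement's English description precedes it below -/
import Mathlib

section
/- Every element w of W has a unique presentation of the form w = τ_1^{i_1}·τ_2^{i_2}⋯τ_n^{i_n}; that is, there exists exactly one tuple of integers (i_1, …, i_n) with −k ≤ i_k ≤ k − 1 for every 1 ≤ k ≤ n such that w equals the product τ_1^{i_1}·τ_2^{i_2}⋯τ_n^{i_n} in W. -/
/-- The Coxeter matrix of type `Bₙ`, with the bond of order `4` between the
generators of indices `0` and `1` (the paper's convention): `s_i² = 1`,
`(s_0·s_1)⁴ = 1`, `(s_i·s_{i+1})³ = 1` for `1 ≤ i ≤ n-2`, and `(s_i·s_j)² = 1`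
for `|i-j| ≥ 2`. -/
def BCoxeterMatrix (n : ℕ) : CoxeterMatrix (Fin n) where
  M := Matrix.of fun i j : Fin n ↦
    if i = j then 1
      else if ((i : ℕ) = 0 ∧ (j : ℕ) = 1) ∨ ((j : ℕ) = 0 ∧ (i : ℕ) = 1) then 4
      else if (j : ℕ) + 1 = i ∨ (i : ℕ) + 1 = j then 3 else 2
  isSymm := by unfold Matrix.IsSymm; aesop
  diagonal := by simp
  off_diagonal := by aesop

variable {n : ℕ} {W : Type*} [Group W]

/-- The simple reflection `s_j` of the Coxeter system, for `0 ≤ j ≤ n-1`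
(junk value `1` for `j ≥ n`). -/
def sgen (cs : CoxeterSystem (BCoxeterMatrix n) W) (j : ℕ) : W :=
  if h : j < n then cs.simple ⟨j, h⟩ else 1

/-- `tau cs k` is the element `τ_k = s_0 · s_1 ⋯ s_{k-1}` (with `τ_0 = 1`). -/
def tau (cs : CoxeterSystem (BCoxeterMatrix n) W) (k : ℕ) : W :=
  ((List.range k).map (sgen cs)).prod

namespace OGSaux

section Dihedral
variable {G : Type*} [Group G] {p q : G}

lemma inv_self (h : p * p = 1) : p⁻¹ = p := inv_eq_of_mul_eq_one_right h

lemma comm_of_pow2 (hp : p * p = 1) (hq : q * q = 1) (h : (p * q) ^ 2 = 1) :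
    p * q = q * p := by
  have h1 : (p * q) * (p * q) = 1 := by rw [← sq]; exact h
  have h2 : (p * q)⁻¹ = q * p := by rw [mul_inv_rev, inv_self hp, inv_self hq]
  rw [← h2]; exact (inv_eq_of_mul_eq_one_right h1).symm

lemma braid3_of_pow3 (hp : p * p = 1) (hq : q * q = 1) (h : (p * q) ^ 3 = 1) :
    p * (q * p) = q * (p * q) := by
  rw [pow_succ, pow_succ, pow_one] at h
  have key : (p * (q * p)) * (q * (p * q)) = 1 := by
    simp only [mul_assoc] at h ⊢; exact h
  have h2 : (q * (p * q))⁻¹ = q * (p * q) := by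
    rw [mul_inv_rev, mul_inv_rev, inv_self hp, inv_self hq]
    simp [mul_assoc]
  rw [← h2]; exact eq_inv_of_mul_eq_one_left key

lemma braid4_of_pow4 (hp : p * p = 1) (hq : q * q = 1) (h : (p * q) ^ 4 = 1) :
    p * (q * (p * q)) = q * (p * (q * p)) := by
  have h1 : ((p * q) ^ 2) * ((p * q) ^ 2) = 1 := by
    rw [← pow_add]; exact h
  have h2 : ((p * q) ^ 2)⁻¹ = q * (p * (q * p)) := by
    rw [pow_two, mul_inv_rev, mul_inv_rev, inv_self hp, inv_self hq]
    simp [mul_assoc]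
  have h3 := eq_inv_of_mul_eq_one_left h1
  rw [h2] at h3
  rw [← h3, pow_two]; simp [mul_assoc]

end Dihedral

variable (cs : CoxeterSystem (BCoxeterMatrix n) W)

/-! ### matrix entries and basic generator relations -/

lemma BM_apply (i j : Fin n) : (BCoxeterMatrix n) i j =
    if i = j then 1
      else if ((i : ℕ) = 0 ∧ (j : ℕ) = 1) ∨ ((j : ℕ) = 0 ∧ (i : ℕ) = 1) then 4
      else if (j : ℕ) + 1 = i ∨ (i : ℕ) + 1 = j then 3 else 2 := rfl

lemma sgen_eq {j : ℕ} (h : j < n) : sgen cs j = cs.simple ⟨j, h⟩ := dif_pos h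

lemma sgen_eq_one {j : ℕ} (h : ¬ j < n) : sgen cs j = 1 := dif_neg h

lemma sgen_sq (j : ℕ) : sgen cs j * sgen cs j = 1 := by
  by_cases h : j < n
  · rw [sgen_eq cs h]; exact cs.simple_mul_simple_self _
  · rw [sgen_eq_one cs h]; simp

lemma sgen_inv (j : ℕ) : (sgen cs j)⁻¹ = sgen cs j := inv_self (sgen_sq cs j)

lemma sgen_pow_rel {a b : ℕ} (ha : a < n) (hb : b < n) :
    (sgen cs a * sgen cs b) ^ ((BCoxeterMatrix n) ⟨a, ha⟩ ⟨b, hb⟩) = 1 := by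
  rw [sgen_eq cs ha, sgen_eq cs hb]; exact cs.simple_mul_simple_pow _ _

lemma sgen_comm {a b : ℕ} (h : b + 2 ≤ a) : sgen cs a * sgen cs b = sgen cs b * sgen cs a := by
  by_cases han : a < n
  · have hbn : b < n := by omega
    apply comm_of_pow2 (sgen_sq cs a) (sgen_sq cs b)
    have := sgen_pow_rel cs han hbn
    rwa [BM_apply, if_neg (by simp [Fin.ext_iff]; omega), if_neg (by simp; omega),
      if_neg (by simp; omega)] at this
  · rw [sgen_eq_one cs han, one_mul, mul_one]

lemma sgen_braid3 {a : ℕ} (h1 : 1 ≤ a) (h2 : a + 1 < n) :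
    sgen cs a * (sgen cs (a+1) * sgen cs a) = sgen cs (a+1) * (sgen cs a * sgen cs (a+1)) := by
  apply braid3_of_pow3 (sgen_sq cs a) (sgen_sq cs (a+1))
  have := sgen_pow_rel cs (show a < n by omega) h2
  rwa [BM_apply, if_neg (by simp [Fin.ext_iff]), if_neg (by simp; omega),
    if_pos (by simp)] at this

lemma sgen_braid4 (h : 1 < n) :
    sgen cs 0 * (sgen cs 1 * (sgen cs 0 * sgen cs 1))
      = sgen cs 1 * (sgen cs 0 * (sgen cs 1 * sgen cs 0)) := by
  apply braid4_of_pow4 (sgen_sq cs 0) (sgen_sq cs 1)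
  have := sgen_pow_rel cs (show 0 < n by omega) h
  rwa [BM_apply, if_neg (by simp [Fin.ext_iff]), if_pos (by simp)] at this


/-! ### helpers for right-associated rewriting -/

section MulExt
variable {G : Type*} [Group G]

lemma mulext1 {a b : G} (h : a = b) (x : G) : a * x = b * x := by rw [h]

lemma mulext2 {a b c d : G} (h : a * b = c * d) (x : G) :
    a * (b * x) = c * (d * x) := by
  rw [← mul_assoc, ← mul_assoc, h]

lemma mulext3 {a b c d e f : G} (h : a * (b * c) = d * (e * f)) (x : G) :
    a * (b * (c * x)) = d * (e * (f * x)) := by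
  have := mulext1 h x
  simpa [mul_assoc] using this

lemma swap_inv {a b X : G} (h : X * a = b * X) : X⁻¹ * b = a * X⁻¹ := by
  have h2 : a = X⁻¹ * (b * X) := by rw [← h, inv_mul_cancel_left]
  rw [h2]; simp [mul_assoc]

end MulExt

/-! ### tau basics -/

lemma tau_zero : tau cs 0 = 1 := by simp [tau]

lemma tau_succ (k : ℕ) : tau cs (k+1) = tau cs k * sgen cs k := by
  simp [tau, List.range_succ]

lemma tau_one : tau cs 1 = sgen cs 0 := by
  rw [tau_succ, tau_zero, one_mul]

lemma commute_sgen_tau {a m : ℕ} (h : m + 1 ≤ a) :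
    Commute (sgen cs a) (tau cs m) := by
  induction m with
  | zero => rw [tau_zero]; exact Commute.one_right _
  | succ m IH =>
    rw [tau_succ]
    exact Commute.mul_right (IH (by omega)) (sgen_comm cs (by omega))

/-! ### descending words and sign-flip elements -/

def dsc : ℕ → ℕ → W
  | _, 0 => 1
  | i, (l+1) => sgen cs (i+l) * dsc i l

lemma dsc_zero (i : ℕ) : dsc cs i 0 = 1 := rfl

lemma dsc_succ (i l : ℕ) : dsc cs i (l+1) = sgen cs (i+l) * dsc cs i l := rfl

lemma dsc_down (i l : ℕ) : dsc cs i (l+1) = dsc cs (i+1) l * sgen cs i := by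
  induction l with
  | zero => simp [dsc_succ, dsc_zero]
  | succ l IH =>
    rw [dsc_succ, IH, dsc_succ cs (i+1) l, show i+1+l = i+(l+1) from by omega, mul_assoc]

def tt (a : ℕ) : W := dsc cs 1 a * tau cs (a+1)

lemma tt_zero : tt cs 0 = sgen cs 0 := by
  simp [tt, dsc_zero, tau_one]

lemma tt_succ (a : ℕ) : tt cs (a+1) = sgen cs (a+1) * (tt cs a * sgen cs (a+1)) := by
  rw [tt, dsc_succ, tau_succ, tt]
  have : (1 : ℕ) + a = a + 1 := by omega
  rw [this]
  simp [mul_assoc]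

lemma tt_sq (a : ℕ) : tt cs a * tt cs a = 1 := by
  induction a with
  | zero => rw [tt_zero]; exact sgen_sq cs 0
  | succ a IH =>
    rw [tt_succ]
    calc sgen cs (a+1) * (tt cs a * sgen cs (a+1)) * (sgen cs (a+1) * (tt cs a * sgen cs (a+1)))
        = sgen cs (a+1) * (tt cs a * ((sgen cs (a+1) * sgen cs (a+1)) * (tt cs a * sgen cs (a+1)))) := by
          simp [mul_assoc]
      _ = sgen cs (a+1) * ((tt cs a * tt cs a) * sgen cs (a+1)) := by
          rw [sgen_sq cs (a+1), one_mul]; simp [mul_assoc]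
      _ = 1 := by rw [IH, one_mul, sgen_sq]

lemma commute_sgen_tt_far {a b : ℕ} (h : a + 2 ≤ b) :
    Commute (sgen cs b) (tt cs a) := by
  induction a with
  | zero => rw [tt_zero]; exact sgen_comm cs (by omega)
  | succ a IH =>
    rw [tt_succ]
    have h1 : Commute (sgen cs b) (sgen cs (a+1)) := sgen_comm cs (by omega)
    exact Commute.mul_right h1 (Commute.mul_right (IH (by omega)) h1)

lemma commute_sgen_tt {j a : ℕ} (hj : j < a) (ha : a < n) :
    Commute (sgen cs j) (tt cs a) := by
  induction a with
  | zero => omega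
  | succ a IH =>
    by_cases hja : j < a
    · rw [tt_succ]
      have h1 : Commute (sgen cs j) (sgen cs (a+1)) := (sgen_comm cs (by omega)).symm
      exact Commute.mul_right h1 (Commute.mul_right (IH hja (by omega)) h1)
    · -- j = a
      have hj' : j = a := by omega
      subst hj'
      unfold Commute SemiconjBy
      rcases Nat.eq_zero_or_pos j with h0 | h0
      · subst h0
        rw [tt_succ, tt_zero]
        have b4 := sgen_braid4 cs (by omega)
        calc sgen cs 0 * (sgen cs 1 * (sgen cs 0 * sgen cs 1))
            = sgen cs 1 * (sgen cs 0 * (sgen cs 1 * sgen cs 0)) := b4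
          _ = sgen cs 1 * (sgen cs 0 * sgen cs 1) * sgen cs 0 := by simp [mul_assoc]
      · -- j ≥ 1
        obtain ⟨b, rfl⟩ : ∃ b, j = b + 1 := ⟨j - 1, by omega⟩
        rw [tt_succ, tt_succ]
        have hb3 : sgen cs (b+1) * (sgen cs (b+2) * sgen cs (b+1))
            = sgen cs (b+2) * (sgen cs (b+1) * sgen cs (b+2)) := sgen_braid3 cs (by omega) (by omega)
        have hcomm : Commute (sgen cs (b+2)) (tt cs b) := commute_sgen_tt_far cs (by omega)
        calc sgen cs (b+1) * (sgen cs (b+2) * (sgen cs (b+1) * (tt cs b * sgen cs (b+1)) * sgen cs (b+2)))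
            = sgen cs (b+1) * (sgen cs (b+2) * (sgen cs (b+1) * (tt cs b * (sgen cs (b+1) * sgen cs (b+2))))) := by
              simp [mul_assoc]
          _ = sgen cs (b+2) * (sgen cs (b+1) * (sgen cs (b+2) * (tt cs b * (sgen cs (b+1) * sgen cs (b+2))))) := by
              exact mulext3 hb3 _
          _ = sgen cs (b+2) * (sgen cs (b+1) * (tt cs b * (sgen cs (b+2) * (sgen cs (b+1) * sgen cs (b+2))))) := by
              congr 2
              rw [← mul_assoc, hcomm.eq, mul_assoc]
          _ = sgen cs (b+2) * (sgen cs (b+1) * (tt cs b * (sgen cs (b+1) * (sgen cs (b+2) * sgen cs (b+1))))) := by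
              congr 3
              exact hb3.symm
          _ = sgen cs (b+2) * (sgen cs (b+1) * (tt cs b * sgen cs (b+1)) * sgen cs (b+2)) * sgen cs (b+1) := by
              simp [mul_assoc]

lemma commute_tau_tt {m a : ℕ} (h : m ≤ a) (ha : a < n) :
    Commute (tau cs m) (tt cs a) := by
  induction m with
  | zero => rw [tau_zero]; exact Commute.one_left _
  | succ m IH =>
    rw [tau_succ]
    exact Commute.mul_left (IH (by omega)) (commute_sgen_tt cs (by omega) ha)

/-! ### the key relations R1 and R2 -/

lemma tau_R1 {k j : ℕ} (h1 : 1 ≤ j) (h2 : j + 2 ≤ k) (hk : k ≤ n) :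
    tau cs k * sgen cs j = sgen cs (j+1) * tau cs k := by
  induction k with
  | zero => omega
  | succ K IH =>
    by_cases hj : j + 2 ≤ K
    · rw [tau_succ, mul_assoc, sgen_comm cs (show j + 2 ≤ K from hj), ← mul_assoc,
        IH hj (by omega), mul_assoc]
    · have hK : K = j + 1 := by omega
      subst hK
      rw [tau_succ, tau_succ]
      have b3 : sgen cs j * (sgen cs (j+1) * sgen cs j)
          = sgen cs (j+1) * (sgen cs j * sgen cs (j+1)) := sgen_braid3 cs h1 (by omega)
      have hct : Commute (sgen cs (j+1)) (tau cs j) := commute_sgen_tau cs (by omega)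
      calc tau cs j * sgen cs j * sgen cs (j+1) * sgen cs j
          = tau cs j * (sgen cs j * (sgen cs (j+1) * sgen cs j)) := by simp [mul_assoc]
        _ = tau cs j * (sgen cs (j+1) * (sgen cs j * sgen cs (j+1))) := by rw [b3]
        _ = sgen cs (j+1) * (tau cs j * (sgen cs j * sgen cs (j+1))) := by
            rw [← mul_assoc, ← hct.eq, mul_assoc]
        _ = sgen cs (j+1) * (tau cs j * sgen cs j * sgen cs (j+1)) := by simp [mul_assoc]

lemma tau_R2 {m : ℕ} (h : m + 2 ≤ n) :
    tau cs (m+2) * tau cs (m+1) = sgen cs 1 * (tau cs (m+2) * tau cs (m+2)) := by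
  induction m with
  | zero =>
    have b4 := sgen_braid4 cs (by omega)
    show tau cs 2 * tau cs 1 = sgen cs 1 * (tau cs 2 * tau cs 2)
    rw [show (2:ℕ) = 1+1 from rfl, tau_succ, tau_one]
    symm
    calc sgen cs 1 * ((sgen cs 0 * sgen cs 1) * (sgen cs 0 * sgen cs 1))
        = sgen cs 1 * (sgen cs 0 * (sgen cs 1 * (sgen cs 0 * sgen cs 1))) := by simp [mul_assoc]
      _ = sgen cs 1 * (sgen cs 1 * (sgen cs 0 * (sgen cs 1 * sgen cs 0))) := by rw [b4]
      _ = sgen cs 0 * sgen cs 1 * sgen cs 0 := by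
          rw [← mul_assoc, sgen_sq cs 1, one_mul, ← mul_assoc]

  | succ m IH =>
    have hR1 : tau cs (m+3) * sgen cs (m+1) = sgen cs (m+2) * tau cs (m+3) :=
      tau_R1 cs (by omega) (by omega) (by omega)
    have hct : Commute (sgen cs (m+2)) (tau cs (m+1)) := commute_sgen_tau cs (by omega)
    calc tau cs (m+3) * tau cs (m+2)
        = tau cs (m+2) * sgen cs (m+2) * (tau cs (m+1) * sgen cs (m+1)) := by
          rw [← tau_succ, ← tau_succ]
      _ = tau cs (m+2) * (sgen cs (m+2) * tau cs (m+1)) * sgen cs (m+1) := by simp [mul_assoc]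
      _ = tau cs (m+2) * (tau cs (m+1) * sgen cs (m+2)) * sgen cs (m+1) := by rw [hct.eq]
      _ = (tau cs (m+2) * tau cs (m+1)) * sgen cs (m+2) * sgen cs (m+1) := by simp [mul_assoc]
      _ = (sgen cs 1 * (tau cs (m+2) * tau cs (m+2))) * sgen cs (m+2) * sgen cs (m+1) := by
          rw [IH (by omega)]
      _ = sgen cs 1 * (tau cs (m+2) * (tau cs (m+2) * sgen cs (m+2) * sgen cs (m+1))) := by
          simp [mul_assoc]
      _ = sgen cs 1 * (tau cs (m+2) * (tau cs (m+3) * sgen cs (m+1))) := by rw [← tau_succ]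
      _ = sgen cs 1 * (tau cs (m+2) * (sgen cs (m+2) * tau cs (m+3))) := by rw [hR1]
      _ = sgen cs 1 * (tau cs (m+2) * sgen cs (m+2) * tau cs (m+3)) := by simp [mul_assoc]
      _ = sgen cs 1 * (tau cs (m+3) * tau cs (m+3)) := by rw [← tau_succ]

lemma tau_sq {m : ℕ} (h : m + 2 ≤ n) :
    tau cs (m+2) * tau cs (m+2) = sgen cs 1 * (tau cs (m+2) * tau cs (m+1)) := by
  rw [tau_R2 cs h, ← mul_assoc, sgen_sq, one_mul]


/-! ### powers of tau -/

lemma tau_shift_dsc {K l : ℕ} (h : l + 1 ≤ K) (hK : K + 1 ≤ n) :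
    tau cs (K+1) * dsc cs 1 l = dsc cs 2 l * tau cs (K+1) := by
  induction l with
  | zero => rw [dsc_zero, dsc_zero, mul_one, one_mul]
  | succ l IH =>
    rw [dsc_succ, ← mul_assoc]
    have hR1 : tau cs (K+1) * sgen cs (1+l) = sgen cs (1+l+1) * tau cs (K+1) :=
      tau_R1 cs (by omega) (by omega) (by omega)
    rw [hR1, mul_assoc, IH (by omega), ← mul_assoc, show 1+l+1 = 2+l from by omega,
      ← dsc_succ]

lemma tau_pow_R1 {k p : ℕ} (hk : k ≤ n) : ∀ {j : ℕ}, 1 ≤ j → j + p + 1 ≤ k →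
    (tau cs k)^p * sgen cs j = sgen cs (j+p) * (tau cs k)^p := by
  induction p with
  | zero => intro j _ _; simp
  | succ p IH =>
    intro j h1 h2
    have hj1 : tau cs k * sgen cs j = sgen cs (j+1) * tau cs k :=
      tau_R1 cs h1 (by omega) hk
    calc (tau cs k)^(p+1) * sgen cs j
        = (tau cs k)^p * (tau cs k * sgen cs j) := by rw [pow_succ, mul_assoc]
      _ = (tau cs k)^p * (sgen cs (j+1) * tau cs k) := by rw [hj1]
      _ = ((tau cs k)^p * sgen cs (j+1)) * tau cs k := by rw [mul_assoc]
      _ = (sgen cs (j+1+p) * (tau cs k)^p) * tau cs k := by rw [IH (by omega) (by omega)]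
      _ = sgen cs (j+(p+1)) * (tau cs k)^(p+1) := by
          rw [show j+1+p = j+(p+1) from by omega, mul_assoc, ← pow_succ]

lemma tau_pow_eq {K : ℕ} (hK : K + 1 ≤ n) : ∀ j : ℕ, j ≤ K →
    (tau cs (K+1))^(j+1) = dsc cs 1 j * (tau cs (K+1) * (tau cs K)^j) := by
  intro j
  induction j with
  | zero => intro _; simp [dsc_zero]
  | succ j IH =>
    intro hj
    obtain ⟨m, rfl⟩ : ∃ m, K = m + 1 := ⟨K - 1, by omega⟩
    have hsq : tau cs (m+2) * tau cs (m+2) = sgen cs 1 * (tau cs (m+2) * tau cs (m+1)) :=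
      tau_sq cs (by omega)
    calc (tau cs (m+2))^(j+2)
        = tau cs (m+2) * (tau cs (m+2))^(j+1) := by rw [pow_succ']
      _ = tau cs (m+2) * (dsc cs 1 j * (tau cs (m+2) * (tau cs (m+1))^j)) := by
          rw [IH (by omega)]
      _ = (tau cs (m+2) * dsc cs 1 j) * (tau cs (m+2) * (tau cs (m+1))^j) := by
          rw [mul_assoc]
      _ = (dsc cs 2 j * tau cs (m+2)) * (tau cs (m+2) * (tau cs (m+1))^j) := by
          rw [tau_shift_dsc cs (by omega) (by omega)]
      _ = dsc cs 2 j * ((tau cs (m+2) * tau cs (m+2)) * (tau cs (m+1))^j) := by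
          simp [mul_assoc]
      _ = dsc cs 2 j * ((sgen cs 1 * (tau cs (m+2) * tau cs (m+1))) * (tau cs (m+1))^j) := by
          rw [hsq]
      _ = (dsc cs 2 j * sgen cs 1) * (tau cs (m+2) * (tau cs (m+1) * (tau cs (m+1))^j)) := by
          simp [mul_assoc]
      _ = dsc cs 1 (j+1) * (tau cs (m+2) * (tau cs (m+1))^(j+1)) := by
          rw [← pow_succ', ← dsc_down]

lemma tau_pow_top {K : ℕ} (hK : K + 1 ≤ n) :
    (tau cs (K+1))^(K+1) = tt cs K * (tau cs K)^K := by
  rw [tau_pow_eq cs hK K (le_refl K), tt, mul_assoc]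

lemma tau_order : ∀ {k : ℕ}, k ≤ n → (tau cs k)^(2*k) = 1 := by
  intro k
  induction k with
  | zero => intro _; simp
  | succ K IH =>
    intro hk
    have hc : Commute ((tau cs K)^K) (tt cs K) :=
      Commute.pow_left (commute_tau_tt cs (le_refl K) (by omega)) K
    calc (tau cs (K+1))^(2*(K+1))
        = ((tau cs (K+1))^(K+1))^2 := by rw [← pow_mul]; ring_nf
      _ = (tt cs K * (tau cs K)^K)^2 := by rw [tau_pow_top cs hk]
      _ = tt cs K * ((tau cs K)^K * tt cs K) * (tau cs K)^K := by
          rw [sq]; simp [mul_assoc]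
      _ = tt cs K * (tt cs K * (tau cs K)^K) * (tau cs K)^K := by rw [hc.eq]
      _ = (tt cs K * tt cs K) * ((tau cs K)^K * (tau cs K)^K) := by simp [mul_assoc]
      _ = (tau cs K)^(2*K) := by rw [tt_sq, one_mul, ← pow_add, two_mul]
      _ = 1 := IH (by omega)

/-! ### exponent normalization -/

def normExp (k : ℕ) (i : ℤ) : ℤ := (i + k) % (2*k) - k

lemma normExp_lb {k : ℕ} (h : 1 ≤ k) (i : ℤ) : -(k:ℤ) ≤ normExp k i := by
  have h2 : (0:ℤ) ≤ (i + k) % (2*k) := Int.emod_nonneg _ (by positivity)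
  unfold normExp; omega

lemma normExp_ub {k : ℕ} (h : 1 ≤ k) (i : ℤ) : normExp k i ≤ (k:ℤ) - 1 := by
  have h2 : (i + k) % (2*k) < 2*k := Int.emod_lt_of_pos _ (by positivity)
  unfold normExp
  push_cast at h2 ⊢
  omega

lemma tau_zpow_norm {k : ℕ} (h1 : 1 ≤ k) (hk : k ≤ n) (i : ℤ) :
    (tau cs k)^i = (tau cs k)^(normExp k i) := by
  have horder : (tau cs k)^((2*k : ℕ) : ℤ) = 1 := by
    rw [zpow_natCast, tau_order cs hk]
  have hdiv : i = normExp k i + (2*k : ℕ) * ((i + k) / (2*k)) := by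
    unfold normExp
    have := Int.emod_add_mul_ediv (i + (k:ℤ)) (2*k)
    push_cast
    push_cast at this
    omega
  calc (tau cs k)^i = (tau cs k)^(normExp k i + (2*k : ℕ) * ((i + k) / (2*k))) := by
        rw [← hdiv]
    _ = (tau cs k)^(normExp k i) * ((tau cs k)^((2*k:ℕ):ℤ))^((i + k) / (2*k)) := by
        rw [zpow_add, zpow_mul]
    _ = (tau cs k)^(normExp k i) := by rw [horder, one_zpow, mul_one]

/-! ### the key lemmas L+ and L- -/

lemma tau_s (k : ℕ) : (tau cs k)⁻¹ * tau cs (k+1) = sgen cs k := by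
  rw [tau_succ, inv_mul_cancel_left]

lemma Lplus {c : ℕ} (hc : c + 2 ≤ n) : ∀ m : ℕ, m ≤ c →
    tau cs (c+2) * (tau cs (c+1))^m
      = tau cs (c+1) * ((tau cs c)^m * (((tau cs (c+1))^(m+1))⁻¹ * (tau cs (c+2))^(m+1))) := by
  intro m
  induction m with
  | zero => intro _; simp
  | succ m IH =>
    intro hm
    set A := tau cs (c+1) with hA
    set B := tau cs (c+2) with hB
    set C := tau cs c with hC
    have sub1 : B^(m+1) * A = sgen cs (m+1) * B^(m+2) := by
      have hBA : B * A = sgen cs 1 * (B * B) := tau_R2 cs hc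
      have hpr : B^m * sgen cs 1 = sgen cs (1+m) * B^m :=
        tau_pow_R1 cs (by omega) (by omega) (by omega)
      calc B^(m+1) * A = B^m * (B * A) := by rw [pow_succ, mul_assoc]
        _ = (B^m * sgen cs 1) * (B * B) := by rw [hBA, mul_assoc]
        _ = sgen cs (1+m) * (B^m * (B * B)) := by rw [hpr, mul_assoc]
        _ = sgen cs (m+1) * B^(m+2) := by
            rw [show 1+m = m+1 from by omega]
            congr 1
            rw [← mul_assoc, ← pow_succ, ← pow_succ]
    have sub2 : (A^(m+1))⁻¹ * sgen cs (m+1) = C * (A^(m+2))⁻¹ := by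
      obtain ⟨c', rfl⟩ : ∃ c', c = c' + 1 := ⟨c - 1, by omega⟩
      have hACs : A * C = sgen cs 1 * (A * A) := tau_R2 cs (by omega)
      have hS1 : A⁻¹ * sgen cs 1 = C * (A⁻¹ * A⁻¹) := by
        have h1 : C = A⁻¹ * (sgen cs 1 * (A * A)) := by rw [← hACs, inv_mul_cancel_left]
        rw [h1]; simp [mul_assoc]
      have hpr : A^m * sgen cs 1 = sgen cs (1+m) * A^m :=
        tau_pow_R1 cs (by omega) (by omega) (by omega)
      have hsm : sgen cs (m+1) = A^m * (sgen cs 1 * (A^m)⁻¹) := by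
        rw [← mul_assoc, hpr, show 1+m = m+1 from by omega, mul_assoc, mul_inv_cancel, mul_one]
      rw [hsm]
      calc (A^(m+1))⁻¹ * (A^m * (sgen cs 1 * (A^m)⁻¹))
          = ((A^(m+1))⁻¹ * A^m) * sgen cs 1 * (A^m)⁻¹ := by simp [mul_assoc]
        _ = A⁻¹ * sgen cs 1 * (A^m)⁻¹ := by
            congr 2
            rw [pow_succ, mul_inv_rev, mul_assoc, inv_mul_cancel, mul_one]
        _ = C * ((A⁻¹ * A⁻¹) * (A^m)⁻¹) := by rw [hS1]; simp [mul_assoc]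
        _ = C * (A^(m+2))⁻¹ := by
            congr 1
            rw [show m+2 = m+1+1 from rfl, pow_succ, pow_succ, mul_inv_rev, mul_inv_rev]
            simp [mul_assoc]
    calc B * A^(m+1)
        = (B * A^m) * A := by rw [pow_succ, mul_assoc]
      _ = A * (C^m * ((A^(m+1))⁻¹ * (B^(m+1) * A))) := by
          rw [IH (by omega)]; simp [mul_assoc]
      _ = A * (C^m * ((A^(m+1))⁻¹ * (sgen cs (m+1) * B^(m+2)))) := by rw [sub1]
      _ = A * (C^m * (((A^(m+1))⁻¹ * sgen cs (m+1)) * B^(m+2))) := by simp [mul_assoc]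
      _ = A * (C^m * ((C * (A^(m+2))⁻¹) * B^(m+2))) := by rw [sub2]
      _ = A * ((C^m * C) * ((A^(m+2))⁻¹ * B^(m+2))) := by simp [mul_assoc]
      _ = A * (C^(m+1) * ((A^(m+2))⁻¹ * B^(m+2))) := by rw [← pow_succ]

lemma Lminus {c : ℕ} (hc : c + 2 ≤ n) : ∀ m : ℕ, m ≤ c →
    (tau cs (c+2))⁻¹ * ((tau cs (c+1))^m)⁻¹
      = ((tau cs c)^m)⁻¹ * ((tau cs (c+1))^m * ((tau cs (c+2))^(m+1))⁻¹) := by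
  intro m
  induction m with
  | zero => intro _; simp
  | succ m IH =>
    intro hm
    set A := tau cs (c+1) with hA
    set B := tau cs (c+2) with hB
    set C := tau cs c with hC
    have hsA : A⁻¹ * B = sgen cs (c+1) := tau_s cs (c+1)
    have sub1 : (B^(m+1))⁻¹ * A⁻¹ = sgen cs (c-m) * (B^(m+2))⁻¹ := by
      have hAinv : A⁻¹ = sgen cs (c+1) * B⁻¹ := by
        rw [← hsA, mul_assoc, mul_inv_cancel, mul_one]
      have hpr : B^(m+1) * sgen cs (c-m) = sgen cs (c+1) * B^(m+1) := by
        have := tau_pow_R1 cs (k := c+2) (p := m+1) (by omega) (j := c-m) (by omega) (by omega)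
        rwa [show c-m+(m+1) = c+1 from by omega] at this
      have hswap : (B^(m+1))⁻¹ * sgen cs (c+1) = sgen cs (c-m) * (B^(m+1))⁻¹ :=
        swap_inv hpr
      calc (B^(m+1))⁻¹ * A⁻¹ = (B^(m+1))⁻¹ * (sgen cs (c+1) * B⁻¹) := by rw [hAinv]
        _ = ((B^(m+1))⁻¹ * sgen cs (c+1)) * B⁻¹ := by rw [mul_assoc]
        _ = sgen cs (c-m) * ((B^(m+1))⁻¹ * B⁻¹) := by rw [hswap, mul_assoc]
        _ = sgen cs (c-m) * (B^(m+2))⁻¹ := by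
            congr 1
            rw [← mul_inv_rev, ← pow_succ']
    have sub2 : A^m * sgen cs (c-m) = C⁻¹ * A^(m+1) := by
      have hsC : C⁻¹ * A = sgen cs c := tau_s cs c
      have hpr : A^m * sgen cs (c-m) = sgen cs c * A^m := by
        have := tau_pow_R1 cs (k := c+1) (p := m) (by omega) (j := c-m) (by omega) (by omega)
        rwa [show c-m+m = c from by omega] at this
      rw [hpr, ← hsC, mul_assoc, ← pow_succ']
    calc B⁻¹ * (A^(m+1))⁻¹
        = (B⁻¹ * (A^m)⁻¹) * A⁻¹ := by
          rw [pow_succ' A m, mul_inv_rev, ← mul_assoc]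
      _ = ((C^m)⁻¹ * (A^m * (B^(m+1))⁻¹)) * A⁻¹ := by rw [IH (by omega)]
      _ = (C^m)⁻¹ * (A^m * ((B^(m+1))⁻¹ * A⁻¹)) := by simp [mul_assoc]
      _ = (C^m)⁻¹ * (A^m * (sgen cs (c-m) * (B^(m+2))⁻¹)) := by rw [sub1]
      _ = (C^m)⁻¹ * ((A^m * sgen cs (c-m)) * (B^(m+2))⁻¹) := by simp [mul_assoc]
      _ = (C^m)⁻¹ * ((C⁻¹ * A^(m+1)) * (B^(m+2))⁻¹) := by rw [sub2]
      _ = ((C^m)⁻¹ * C⁻¹) * (A^(m+1) * (B^(m+2))⁻¹) := by simp [mul_assoc]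
      _ = (C^(m+1))⁻¹ * (A^(m+1) * (B^(m+2))⁻¹) := by
          rw [show (C^m)⁻¹ * C⁻¹ = (C^(m+1))⁻¹ from by rw [← mul_inv_rev, ← pow_succ']]


/-! ### the key rewriting step -/

lemma tau_s' (k : ℕ) : (tau cs (k+1))⁻¹ * tau cs k = sgen cs k := by
  rw [tau_succ, mul_inv_rev, sgen_inv, mul_assoc, inv_mul_cancel, mul_one]

lemma keyStep {c : ℕ} (hc : c + 2 ≤ n) (m i : ℤ) (hm1 : -((c:ℤ)+1) ≤ m) (hm2 : m ≤ (c:ℤ)) :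
    ∃ e m2 i2 : ℤ, sgen cs (c+1) * ((tau cs (c+1))^m * (tau cs (c+2))^i)
      = (tau cs c)^e * ((tau cs (c+1))^m2 * (tau cs (c+2))^i2) := by
  set Aw := tau cs (c+1) with hAw
  set Bw := tau cs (c+2) with hBw
  set Cw := tau cs c with hCw
  rcases le_or_gt 0 m with hm0 | hm0
  · obtain ⟨mm, rfl⟩ := Int.eq_ofNat_of_zero_le hm0
    have hmmc : mm ≤ c := by exact_mod_cast hm2
    refine ⟨(mm : ℤ), -(mm:ℤ)-1, i+(mm:ℤ)+1, ?_⟩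
    have hs : Aw⁻¹ * Bw = sgen cs (c+1) := tau_s cs (c+1)
    have hL := Lplus cs hc mm hmmc
    have c2 : Aw^(-(mm:ℤ)-1) = (Aw^(mm+1))⁻¹ := by
      rw [show -(mm:ℤ)-1 = -(((mm+1 : ℕ)):ℤ) from by push_cast; ring, zpow_neg, zpow_natCast]
    have c3 : Bw^(i + (mm:ℤ)+1) = Bw^(mm+1) * Bw^i := by
      rw [show i + (mm:ℤ)+1 = (((mm+1:ℕ)):ℤ) + i from by push_cast; ring, zpow_add,
        zpow_natCast]
    calc sgen cs (c+1) * (Aw^((mm:ℕ):ℤ) * Bw^i)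
        = (Aw⁻¹ * Bw) * (Aw^mm * Bw^i) := by rw [hs, zpow_natCast]
      _ = Aw⁻¹ * (Bw * Aw^mm) * Bw^i := by simp [mul_assoc]
      _ = Aw⁻¹ * (Aw * (Cw^mm * ((Aw^(mm+1))⁻¹ * Bw^(mm+1)))) * Bw^i := by rw [hL]
      _ = Cw^mm * ((Aw^(mm+1))⁻¹ * (Bw^(mm+1) * Bw^i)) := by simp [mul_assoc]
      _ = Cw^((mm:ℕ):ℤ) * (Aw^(-(mm:ℤ)-1) * Bw^(i+(mm:ℤ)+1)) := by
          rw [zpow_natCast, c2, c3]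
  · set mm : ℕ := (-m-1).toNat with hmm
    have hmmz : (mm : ℤ) = -m-1 := Int.toNat_of_nonneg (by omega)
    have hmmc : mm ≤ c := by omega
    refine ⟨-(mm:ℤ), (mm:ℤ), i-(mm:ℤ)-1, ?_⟩
    have hs2 : Bw⁻¹ * Aw = sgen cs (c+1) := tau_s' cs (c+1)
    have hL := Lminus cs hc mm hmmc
    have d1 : Aw * Aw^m = (Aw^mm)⁻¹ := by
      rw [← zpow_one_add, ← zpow_natCast Aw mm, ← zpow_neg]
      congr 1
      omega
    have d2 : Cw^(-(mm:ℤ)) = (Cw^mm)⁻¹ := by rw [zpow_neg, zpow_natCast]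
    have d3 : Bw^(i-(mm:ℤ)-1) = (Bw^(mm+1))⁻¹ * Bw^i := by
      rw [show i-(mm:ℤ)-1 = -(((mm+1:ℕ)):ℤ) + i from by push_cast; ring, zpow_add,
        zpow_neg, zpow_natCast]
    calc sgen cs (c+1) * (Aw^m * Bw^i)
        = Bw⁻¹ * (Aw * Aw^m) * Bw^i := by rw [← hs2]; simp [mul_assoc]
      _ = Bw⁻¹ * (Aw^mm)⁻¹ * Bw^i := by rw [d1]
      _ = (Cw^mm)⁻¹ * (Aw^mm * ((Bw^(mm+1))⁻¹ * Bw^i)) := by rw [hL]; simp [mul_assoc]; rfl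
      _ = Cw^(-(mm:ℤ)) * (Aw^((mm:ℕ):ℤ) * Bw^(i-(mm:ℤ)-1)) := by
          rw [d2, d3, zpow_natCast]

/-! ### canonical products -/

def ppp (f : ℕ → ℤ) : ℕ → W
  | 0 => 1
  | (k+1) => ppp f k * (tau cs (k+1))^(f (k+1))

lemma ppp_zero (f : ℕ → ℤ) : ppp cs f 0 = 1 := rfl

lemma ppp_succ (f : ℕ → ℤ) (k : ℕ) :
    ppp cs f (k+1) = ppp cs f k * (tau cs (k+1))^(f (k+1)) := rfl

lemma ppp_congr {f g : ℕ → ℤ} : ∀ {k : ℕ}, (∀ j, 1 ≤ j → j ≤ k → f j = g j) →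
    ppp cs f k = ppp cs g k := by
  intro k
  induction k with
  | zero => intro _; rfl
  | succ k IH =>
    intro h
    rw [ppp_succ, ppp_succ, IH (fun j h1 h2 => h j h1 (by omega)), h (k+1) (by omega) le_rfl]

lemma ppp_one_fun : ∀ k : ℕ, ppp cs (fun _ => (0:ℤ)) k = 1 := by
  intro k
  induction k with
  | zero => rfl
  | succ k IH => rw [ppp_succ, IH, zpow_zero, mul_one]

lemma commute_sgen_ppp {f : ℕ → ℤ} {a : ℕ} : ∀ {k : ℕ}, k + 1 ≤ a →
    Commute (sgen cs a) (ppp cs f k) := by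
  intro k
  induction k with
  | zero => intro _; exact Commute.one_right _
  | succ k IH =>
    intro h
    rw [ppp_succ]
    exact Commute.mul_right (IH (by omega)) ((commute_sgen_tau cs (by omega)).zpow_right _)

lemma ppp_mul_tau (f : ℕ → ℤ) (c : ℕ) (e : ℤ) :
    ppp cs f c * (tau cs c)^e = ppp cs (fun j => if j = c then f j + e else f j) c := by
  cases c with
  | zero => rw [ppp_zero, ppp_zero, tau_zero, one_zpow, mul_one]
  | succ c =>
    rw [ppp_succ, ppp_succ, mul_assoc, ← zpow_add]
    congr 1
    · exact ppp_congr cs (fun j h1 h2 => by simp [show ¬ (j = c+1) from by omega])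
    · simp

/-! ### closure of canonical products under left multiplication -/

lemma closure : ∀ k, k ≤ n → ∀ j, j < k → ∀ f : ℕ → ℤ,
    ∃ g : ℕ → ℤ, sgen cs j * ppp cs f k = ppp cs g k := by
  intro k
  induction k with
  | zero => intro _ j hj; omega
  | succ K IH =>
    intro hK j hj f
    by_cases hjK : j < K
    · obtain ⟨g0, hg0⟩ := IH (by omega) j hjK f
      refine ⟨fun x => if x = K+1 then f (K+1) else g0 x, ?_⟩
      rw [ppp_succ, ← mul_assoc, hg0, ppp_succ]
      congr 1
      · exact ppp_congr cs (fun j h1 h2 => by simp [show ¬ (j = K+1) from by omega])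
      · simp
    · -- j = K
      obtain rfl : j = K := by omega
      clear hj hjK
      cases j with
      | zero =>
        refine ⟨fun x => if x = 1 then f 1 + 1 else f x, ?_⟩
        rw [ppp_succ, ppp_zero, one_mul, ppp_succ, ppp_zero, one_mul]
        rw [show sgen cs 0 = (tau cs 1)^(1:ℤ) from by rw [zpow_one, tau_one], ← zpow_add]
        simp [add_comm]
      | succ c =>
        -- j = c+1, k = c+2
        have hc : c + 2 ≤ n := by omega
        rw [ppp_succ, ppp_succ, mul_assoc]
        have hcomm : sgen cs (c+1) * (ppp cs f c * ((tau cs (c+1))^(f (c+1)) * (tau cs (c+2))^(f (c+2))))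
            = ppp cs f c * (sgen cs (c+1) * ((tau cs (c+1))^(f (c+1)) * (tau cs (c+2))^(f (c+2)))) := by
          rw [← mul_assoc, (commute_sgen_ppp cs (by omega)).eq, mul_assoc]
        rw [← mul_assoc, mul_assoc, hcomm]
        set m' : ℤ := normExp (c+1) (f (c+1)) with hm'
        have hnorm : (tau cs (c+1))^(f (c+1)) = (tau cs (c+1))^m' :=
          tau_zpow_norm cs (by omega) (by omega) _
        have hb1 : -((c:ℤ)+1) ≤ m' := by
          have := normExp_lb (k := c+1) (by omega) (f (c+1))
          push_cast at this ⊢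
          omega
        have hb2 : m' ≤ (c:ℤ) := by
          have := normExp_ub (k := c+1) (by omega) (f (c+1))
          push_cast at this ⊢
          omega
        obtain ⟨e, m2, i2, hkey⟩ := keyStep cs hc m' (f (c+2)) hb1 hb2
        rw [hnorm, hkey]
        set gfun : ℕ → ℤ := fun x => if x = c+2 then i2 else if x = c+1 then m2
          else if x = c then f c + e else f x with hgfun
        refine ⟨gfun, ?_⟩
        have h1 : ppp cs f c * (tau cs c)^e = ppp cs gfun c := by
          rw [ppp_mul_tau]
          refine ppp_congr cs (fun j hj1 hj2 => ?_)
          by_cases hjc : j = c <;>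
            simp [hgfun, hjc, show ¬ (j = c+2) from by omega, show ¬ (j = c+1) from by omega]
        have h2 : gfun (c+2) = i2 := by simp [hgfun]
        have h3 : gfun (c+1) = m2 := by simp [hgfun, show ¬ (c+1 = c+2) from by omega]
        rw [ppp_succ, ppp_succ, h2, h3, ← h1]
        simp [mul_assoc]

lemma exists_ppp (w : W) : ∃ f : ℕ → ℤ, w = ppp cs f n := by
  induction w using cs.simple_induction_left with
  | one => exact ⟨fun _ => 0, (ppp_one_fun cs n).symm⟩
  | mul_simple_left w i IH =>
    obtain ⟨f, rfl⟩ := IH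
    obtain ⟨g, hg⟩ := closure cs n le_rfl i i.2 f
    refine ⟨g, ?_⟩
    rw [← hg, sgen_eq cs i.2]

lemma ppp_norm (f : ℕ → ℤ) : ∀ k, k ≤ n →
    ppp cs f k = ppp cs (fun j => normExp j (f j)) k := by
  intro k
  induction k with
  | zero => intro _; rfl
  | succ k IH =>
    intro hk
    rw [ppp_succ, ppp_succ, IH (by omega), tau_zpow_norm cs (by omega) hk]


/-! ### dihedral converse lemmas -/

section Dihedral2
variable {G : Type*} [Group G] {p q : G}

lemma pow2_of_comm (hp : p * p = 1) (hq : q * q = 1) (h : p * q = q * p) :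
    (p * q) ^ 2 = 1 := by
  rw [pow_two]
  calc p * q * (p * q) = p * (q * p * q) := by simp [mul_assoc]
    _ = p * (p * q * q) := by rw [← h]
    _ = p * (p * (q * q)) := by simp [mul_assoc]
    _ = 1 := by rw [hq, mul_one, hp]

lemma pow3_of_braid (hp : p * p = 1) (hq : q * q = 1) (h : p * (q * p) = q * (p * q)) :
    (p * q) ^ 3 = 1 := by
  rw [pow_succ, pow_two]
  calc p * q * (p * q) * (p * q)
      = (p * (q * p)) * (q * (p * q)) := by simp [mul_assoc]
    _ = (q * (p * q)) * (q * (p * q)) := by rw [h]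
    _ = q * (p * ((q * q) * (p * q))) := by simp [mul_assoc]
    _ = q * (p * (p * q)) := by rw [hq, one_mul]
    _ = 1 := by rw [← mul_assoc p p q, hp, one_mul, hq]

lemma pow4_of_braid4 (hp : p * p = 1) (hq : q * q = 1)
    (h : p * (q * (p * q)) = q * (p * (q * p))) : (p * q) ^ 4 = 1 := by
  rw [show (4:ℕ) = 2+2 from rfl, pow_add, pow_two]
  have e1 : p*q*(p*q) = p*(q*(p*q)) := by simp [mul_assoc]
  rw [e1]
  nth_rewrite 2 [h]
  calc (p*(q*(p*q))) * (q*(p*(q*p)))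
      = p*(q*(p*((q*q)*(p*(q*p))))) := by simp [mul_assoc]
    _ = p*(q*(p*(p*(q*p)))) := by rw [hq, one_mul]
    _ = p*(q*(q*p)) := by rw [← mul_assoc p p (q*p), hp, one_mul]
    _ = 1 := by rw [← mul_assoc q q p, hq, one_mul, hp]

end Dihedral2

/-! ### concrete signed permutations -/

def sfun : ℕ → (ℕ × ZMod 2) → (ℕ × ZMod 2)
  | 0, v => if v.1 = 0 then (0, v.2+1) else v
  | (j+1), v => if v.1 = j then (j+1, v.2) else if v.1 = j+1 then (j, v.2) else v

lemma zmod2_add (x : ZMod 2) : x + 1 + 1 = x := by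
  revert x; decide

lemma sfun_invol (j : ℕ) : Function.Involutive (sfun j) := by
  intro v
  obtain ⟨a, x⟩ := v
  cases j with
  | zero =>
    by_cases h : a = 0
    · subst h; simp [sfun, zmod2_add]
    · simp [sfun, h]
  | succ j =>
    by_cases h1 : a = j
    · subst h1; simp [sfun, show ¬ (a+1 = a) from by omega]
    · by_cases h2 : a = j+1
      · subst h2; simp [sfun, show ¬ (j+1 = j) from by omega]
      · simp [sfun, h1, h2]

def sperm (j : ℕ) : Equiv.Perm (ℕ × ZMod 2) :=
  ⟨sfun j, sfun j, (sfun_invol j).leftInverse, (sfun_invol j).rightInverse⟩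

@[simp] lemma sperm_apply (j : ℕ) (v : ℕ × ZMod 2) : sperm j v = sfun j v := rfl

lemma sperm_app_zero (a : ℕ) (x : ZMod 2) (h : a = 0) : sperm 0 (a, x) = (0, x+1) := by
  simp [sfun, h]

lemma sperm_app_zero' (a : ℕ) (x : ZMod 2) (h : a ≠ 0) : sperm 0 (a, x) = (a, x) := by
  simp [sfun, h]

lemma sperm_app_left (j a : ℕ) (x : ZMod 2) (h : a = j) : sperm (j+1) (a, x) = (j+1, x) := by
  simp [sfun, h]

lemma sperm_app_right (j a : ℕ) (x : ZMod 2) (h : a = j+1) : sperm (j+1) (a, x) = (j, x) := by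
  simp [sfun, h]

lemma sperm_app_other (j a : ℕ) (x : ZMod 2) (h1 : a ≠ j) (h2 : a ≠ j+1) :
    sperm (j+1) (a, x) = (a, x) := by
  simp [sfun, h1, h2]

lemma sperm_app_left' {k j : ℕ} (a : ℕ) (x : ZMod 2) (hk : k = j+1) (h : a = j) :
    sperm k (a, x) = (k, x) := by
  subst hk; exact sperm_app_left j a x h

lemma sperm_app_right' {k j : ℕ} (a : ℕ) (x : ZMod 2) (hk : k = j+1) (h : a = k) :
    sperm k (a, x) = (j, x) := by
  subst hk; exact sperm_app_right j a x h

lemma sperm_app_other' {k j : ℕ} (a : ℕ) (x : ZMod 2) (hk : k = j+1) (h1 : a ≠ j) (h2 : a ≠ k) :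
    sperm k (a, x) = (a, x) := by
  subst hk; exact sperm_app_other j a x h1 h2

lemma sperm_fix (j : ℕ) (v : ℕ × ZMod 2) (h1 : v.1 + 1 ≠ j) (h2 : v.1 ≠ j)
    (h0 : j = 0 → v.1 ≠ 0) : sperm j v = v := by
  obtain ⟨a, x⟩ := v
  cases j with
  | zero => exact sperm_app_zero' a x (h0 rfl)
  | succ j => exact sperm_app_other j a x (by simp at h1; omega) (by simp at h2; omega)

lemma sperm_sq (j : ℕ) : sperm j * sperm j = 1 := by
  apply Equiv.ext
  intro v
  rw [Equiv.Perm.mul_apply]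
  simp only [sperm_apply]
  rw [sfun_invol j v]
  rfl

lemma sperm_comm {a b : ℕ} (h : b + 2 ≤ a) : sperm a * sperm b = sperm b * sperm a := by
  obtain ⟨a', rfl⟩ : ∃ a', a = a' + 2 := ⟨a - 2, by omega⟩
  have hd : (sperm (a'+2)).Disjoint (sperm b) := by
    rintro ⟨p, x⟩
    by_cases hp : p ≤ b
    · left
      exact sperm_app_other' p x (show a'+2 = (a'+1)+1 by omega) (by omega) (by omega)
    · right
      exact sperm_fix b (p, x) (by simp; omega) (by simp; omega) (fun _ => by simp; omega)
  exact hd.commute.eq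

lemma sperm_braid3 (b : ℕ) :
    sperm (b+1) * (sperm (b+2) * sperm (b+1)) = sperm (b+2) * (sperm (b+1) * sperm (b+2)) := by
  have e1 : (b:ℕ)+1 = b+1 := rfl
  have e2 : (b:ℕ)+2 = (b+1)+1 := by omega
  apply Equiv.ext
  rintro ⟨p, x⟩
  simp only [Equiv.Perm.mul_apply]
  by_cases h1 : p = b
  · simp only [sperm_app_left' p x e1 h1, sperm_app_left' (b+1) x e2 rfl,
      sperm_app_other' (b+2) x e1 (by omega) (by omega),
      sperm_app_other' p x e2 (by omega) (by omega)]
  · by_cases h2 : p = b+1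
    · simp only [sperm_app_right' p x e1 h2, sperm_app_other' b x e2 (by omega) (by omega),
        sperm_app_left' b x e1 rfl, sperm_app_left' p x e2 h2,
        sperm_app_other' (b+2) x e1 (by omega) (by omega), sperm_app_right' (b+2) x e2 rfl]
    · by_cases h3 : p = b+2
      · simp only [sperm_app_other' p x e1 (by omega) (by omega),
          sperm_app_right' p x e2 h3, sperm_app_right' (b+1) x e1 rfl,
          sperm_app_other' b x e2 (by omega) (by omega)]
      · simp only [sperm_app_other' p x e1 (by omega) (by omega),
          sperm_app_other' p x e2 (by omega) (by omega)]

lemma sperm_braid4 :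
    sperm 0 * (sperm 1 * (sperm 0 * sperm 1)) = sperm 1 * (sperm 0 * (sperm 1 * sperm 0)) := by
  have e1 : (1:ℕ) = 0+1 := rfl
  apply Equiv.ext
  rintro ⟨p, x⟩
  simp only [Equiv.Perm.mul_apply]
  by_cases h1 : p = 0
  · subst h1
    simp only [sperm_app_left' 0 x e1 rfl, sperm_app_zero' 1 x (by omega),
      sperm_app_right' 1 x e1 rfl, sperm_app_zero 0 x rfl,
      sperm_app_left' 0 (x+1) e1 rfl, sperm_app_zero' 1 (x+1) (by omega),
      sperm_app_right' 1 (x+1) e1 rfl]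
  · by_cases h2 : p = 1
    · subst h2
      simp only [sperm_app_right' 1 x e1 rfl, sperm_app_zero 0 x rfl,
        sperm_app_left' 0 (x+1) e1 rfl, sperm_app_zero' 1 (x+1) (by omega),
        sperm_app_zero' 1 x (by omega)]
    · simp only [sperm_app_other' p x e1 h1 h2, sperm_app_zero' p x h1]

/-! ### liftability -/

lemma islift : (BCoxeterMatrix n).IsLiftable (fun i : Fin n => sperm (i : ℕ)) := by
  intro i i'
  show (sperm (i:ℕ) * sperm (i':ℕ))^((BCoxeterMatrix n) i i') = 1
  by_cases hii : i = i'
  · subst hii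
    rw [BM_apply, if_pos rfl, pow_one, sperm_sq]
  · rw [BM_apply, if_neg hii]
    by_cases h01 : ((i:ℕ) = 0 ∧ (i':ℕ) = 1) ∨ ((i':ℕ) = 0 ∧ (i:ℕ) = 1)
    · rw [if_pos h01]
      rcases h01 with ⟨h1, h2⟩ | ⟨h1, h2⟩
      · rw [h1, h2]
        exact pow4_of_braid4 (sperm_sq 0) (sperm_sq 1) sperm_braid4
      · rw [h1, h2]
        refine pow4_of_braid4 (sperm_sq 1) (sperm_sq 0) ?_
        have h := sperm_braid4
        calc sperm 1 * (sperm 0 * (sperm 1 * sperm 0)) = sperm 0 * (sperm 1 * (sperm 0 * sperm 1)) := h.symm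
          _ = sperm 0 * (sperm 1 * (sperm 0 * sperm 1)) := rfl
    · rw [if_neg h01]
      by_cases hadj : ((i':ℕ) + 1 = (i:ℕ)) ∨ ((i:ℕ) + 1 = (i':ℕ))
      · rw [if_pos hadj]
        rcases hadj with hadj | hadj
        · -- i = i'+1, and i' ≥ 1
          obtain ⟨b, hb⟩ : ∃ b, (i':ℕ) = b + 1 := by
            refine ⟨(i':ℕ) - 1, ?_⟩
            rcases Nat.eq_zero_or_pos (i':ℕ) with h0 | h0
            · exfalso; apply h01; right; constructor <;> omega
            · omega
          have hieq : (i:ℕ) = b + 2 := by omega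
          rw [hieq, hb]
          refine pow3_of_braid (sperm_sq (b+2)) (sperm_sq (b+1)) ?_
          have h := sperm_braid3 b
          calc sperm (b+2) * (sperm (b+1) * sperm (b+2))
              = sperm (b+1) * (sperm (b+2) * sperm (b+1)) := h.symm
            _ = sperm (b+1) * (sperm (b+2) * sperm (b+1)) := rfl
        · -- i' = i+1, and i ≥ 1
          obtain ⟨b, hb⟩ : ∃ b, (i:ℕ) = b + 1 := by
            refine ⟨(i:ℕ) - 1, ?_⟩
            rcases Nat.eq_zero_or_pos (i:ℕ) with h0 | h0
            · exfalso; apply h01; left; constructor <;> omega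
            · omega
          have hieq : (i':ℕ) = b + 2 := by omega
          rw [hieq, hb]
          exact pow3_of_braid (sperm_sq (b+1)) (sperm_sq (b+2)) (sperm_braid3 b)
      · rw [if_neg hadj]
        have hne : (i:ℕ) ≠ (i':ℕ) := fun h => hii (Fin.ext h)
        rcases Nat.lt_or_ge (i:ℕ) (i':ℕ) with hlt | hge
        · have : (i:ℕ) + 2 ≤ (i':ℕ) := by omega
          exact pow2_of_comm (sperm_sq _) (sperm_sq _) (sperm_comm this).symm
        · have : (i':ℕ) + 2 ≤ (i:ℕ) := by omega
          exact pow2_of_comm (sperm_sq _) (sperm_sq _) (sperm_comm this)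


/-! ### the basic 2k-cycle and its dynamics -/

def cw (k : ℕ) : Equiv.Perm (ℕ × ZMod 2) := ((List.range k).map sperm).prod

lemma cw_zero : cw 0 = 1 := rfl

lemma cw_succ (k : ℕ) : cw (k+1) = cw k * sperm k := by
  simp [cw, List.range_succ]

lemma cw_app_ge : ∀ k a, k ≤ a → ∀ x : ZMod 2, cw k (a, x) = (a, x) := by
  intro k
  induction k with
  | zero => intro a _ x; rfl
  | succ k IH =>
    intro a h x
    rw [cw_succ, Equiv.Perm.mul_apply,
      sperm_fix k (a,x) (by simp; omega) (by simp; omega) (fun _ => by simp; omega),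
      IH a (by omega) x]

lemma cw_app_top : ∀ a, ∀ x : ZMod 2, cw (a+1) (a, x) = (0, x+1) := by
  intro a
  induction a with
  | zero =>
    intro x
    rw [cw_succ, Equiv.Perm.mul_apply, cw_zero, sperm_app_zero 0 x rfl]
    rfl
  | succ a IH =>
    intro x
    rw [cw_succ, Equiv.Perm.mul_apply, sperm_app_right' (a+1) x rfl rfl, IH x]

lemma cw_app_lt : ∀ k a, a + 2 ≤ k → ∀ x : ZMod 2, cw k (a, x) = (a+1, x) := by
  intro k
  induction k with
  | zero => intro a h; omega
  | succ K IH =>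
    intro a h x
    rw [cw_succ, Equiv.Perm.mul_apply]
    by_cases hK : a + 1 = K
    · subst hK
      rw [sperm_app_left' a x rfl rfl, cw_app_ge (a+1) (a+1) le_rfl x]
    · rw [sperm_fix K (a,x) (by simp; omega) (by simp; omega) (fun h0 => by simp; omega),
        IH a (by omega) x]

lemma cw_pow_small {k : ℕ} : ∀ d a, a + d + 1 ≤ k → ∀ x : ZMod 2,
    ((cw k)^d) (a, x) = (a+d, x) := by
  intro d
  induction d with
  | zero => intro a _ x; rfl
  | succ d IH =>
    intro a h x
    rw [pow_succ', Equiv.Perm.mul_apply, IH (a) (by omega) x]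
    rw [cw_app_lt k (a+d) (by omega) x, Nat.add_assoc]

lemma cw_pow_fix {k : ℕ} : ∀ (d : ℕ) a, k ≤ a → ∀ x : ZMod 2, ((cw k)^d) (a, x) = (a, x) := by
  intro d
  induction d with
  | zero => intro a _ x; rfl
  | succ d IH =>
    intro a h x
    rw [pow_succ, Equiv.Perm.mul_apply, cw_app_ge k a h x, IH a h x]

lemma cw_pow_wrap {k : ℕ} (a : ℕ) (h : a + 1 ≤ k) (x : ZMod 2) :
    ((cw k)^k) (a, x) = (a, x+1) := by
  obtain ⟨r, hr⟩ : ∃ r, k = a + 1 + r := ⟨k - a - 1, by omega⟩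
  have h1 : ((cw k)^r) (a, x) = (a + r, x) := cw_pow_small r a (by omega) x
  have h2 : cw k (a + r, x) = (0, x + 1) := by
    have : k = (a + r) + 1 := by omega
    rw [this]
    exact cw_app_top (a+r) x
  have h3 : ((cw k)^a) (0, x+1) = (a, x+1) := by
    have := cw_pow_small (k := k) a 0 (by omega) (x+1)
    simpa using this
  calc ((cw k)^k) (a, x) = ((cw k)^(a + (1 + r))) (a, x) := by rw [show a+(1+r) = k from by omega]
    _ = ((cw k)^a) (((cw k)^(1+r)) (a,x)) := by rw [pow_add, Equiv.Perm.mul_apply]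
    _ = ((cw k)^a) (cw k (((cw k)^r) (a,x))) := by rw [pow_add, pow_one, Equiv.Perm.mul_apply]
    _ = (a, x+1) := by rw [h1, h2, h3]

lemma cw_order (k : ℕ) : (cw k)^(2*k) = 1 := by
  apply Equiv.ext
  rintro ⟨a, x⟩
  rw [two_mul, pow_add, Equiv.Perm.mul_apply]
  by_cases h : a + 1 ≤ k
  · rw [cw_pow_wrap a h x, cw_pow_wrap a h (x+1), zmod2_add]
    rfl
  · rw [cw_pow_fix k a (by omega) x, cw_pow_fix k a (by omega) x]
    rfl

lemma cw_zpow_fix_imp {k : ℕ} (d : ℤ) (h : ((cw (k+1))^d) (k, (0:ZMod 2)) = (k, 0)) :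
    ((2*(k+1) : ℕ) : ℤ) ∣ d := by
  set o : ℕ := 2*(k+1) with ho
  have hop : (0:ℤ) < (o:ℤ) := by positivity
  have horder : (cw (k+1))^((o:ℕ):ℤ) = 1 := by rw [zpow_natCast, cw_order]
  have hdm := Int.emod_add_mul_ediv d o
  have hr0 : (0:ℤ) ≤ d % o := Int.emod_nonneg _ (by omega)
  have hrlt : d % o < o := Int.emod_lt_of_pos _ hop
  set rn : ℕ := (d % o).toNat with hrn
  have hrnz : (rn : ℤ) = d % o := Int.toNat_of_nonneg hr0
  have hsplit : (cw (k+1))^d = (cw (k+1))^rn := by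
    have : d = (rn:ℤ) + (o:ℤ) * (d / o) := by omega
    rw [this, zpow_add, zpow_mul, horder, one_zpow, mul_one, zpow_natCast]
  rw [hsplit] at h
  have hrn0 : rn = 0 := by
    by_contra hne
    obtain ⟨r', hr'⟩ : ∃ r', rn = r' + 1 := ⟨rn - 1, by omega⟩
    by_cases hsmall : rn ≤ k + 1
    · have hcomp : ((cw (k+1))^rn) (k, (0:ZMod 2)) = (r', 1) := by
        rw [hr', pow_succ, Equiv.Perm.mul_apply, cw_app_top k 0]
        have := cw_pow_small (k := k+1) r' 0 (by omega) (0+1)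
        simpa using this
      rw [hcomp] at h
      have : (1 : ZMod 2) = 0 := congrArg Prod.snd h
      exact one_ne_zero this
    · have hrnb : rn < o := by omega
      obtain ⟨r2, hr2⟩ : ∃ r2, rn = (k+1) + (r2+1) := ⟨rn - k - 2, by omega⟩
      have hr2b : r2 + 1 ≤ k := by omega
      have hcomp : ((cw (k+1))^rn) (k, (0:ZMod 2)) = (r2, 0) := by
        rw [hr2, pow_add, Equiv.Perm.mul_apply]
        rw [pow_succ (cw (k+1)) r2, Equiv.Perm.mul_apply, cw_app_top k 0]
        have hs : ((cw (k+1))^r2) ((0:ℕ), (0:ZMod 2)+1) = (r2, 1) := by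
          have := cw_pow_small (k := k+1) r2 0 (by omega) (0+1)
          simpa using this
        rw [hs, cw_pow_wrap r2 (by omega) 1, show (1:ZMod 2)+1 = 0 from by decide]
      rw [hcomp] at h
      have : r2 = k := congrArg Prod.fst h
      omega
  refine ⟨d / o, ?_⟩
  omega

/-! ### the image of canonical products -/

def qq (f : ℕ → ℤ) : ℕ → Equiv.Perm (ℕ × ZMod 2)
  | 0 => 1
  | (k+1) => qq f k * (cw (k+1))^(f (k+1))

lemma qq_fix (f : ℕ → ℤ) : ∀ k a, k ≤ a → ∀ x : ZMod 2, qq f k (a, x) = (a, x) := by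
  intro k
  induction k with
  | zero => intro a _ x; rfl
  | succ k IH =>
    intro a h x
    show (qq f k * (cw (k+1))^(f (k+1))) (a,x) = (a,x)
    rw [Equiv.Perm.mul_apply,
      Equiv.Perm.zpow_apply_eq_self_of_apply_eq_self (cw_app_ge (k+1) a h x), IH a (by omega) x]

lemma top_exp_eq {k : ℕ} (f g : ℕ → ℤ)
    (hfb : -((k:ℤ)+1) ≤ f (k+1) ∧ f (k+1) ≤ (k:ℤ))
    (hgb : -((k:ℤ)+1) ≤ g (k+1) ∧ g (k+1) ≤ (k:ℤ))
    (h : qq f (k+1) = qq g (k+1)) : f (k+1) = g (k+1) := by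
  have happ : ((cw (k+1))^(-(f (k+1)))) (k, (0:ZMod 2))
      = ((cw (k+1))^(-(g (k+1)))) (k, 0) := by
    have hinv := congrArg (fun p => p⁻¹ (k, (0:ZMod 2))) h
    simp only [qq] at hinv
    rw [mul_inv_rev, mul_inv_rev, Equiv.Perm.mul_apply, Equiv.Perm.mul_apply] at hinv
    have hf1 : (qq f k)⁻¹ (k, (0:ZMod 2)) = (k, 0) := by
      rw [Equiv.Perm.inv_eq_iff_eq]
      exact (qq_fix f k k le_rfl 0).symm
    have hg1 : (qq g k)⁻¹ (k, (0:ZMod 2)) = (k, 0) := by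
      rw [Equiv.Perm.inv_eq_iff_eq]
      exact (qq_fix g k k le_rfl 0).symm
    rwa [hf1, hg1, ← zpow_neg, ← zpow_neg] at hinv
  have hcomb : ((cw (k+1))^(f (k+1) - g (k+1))) (k, (0:ZMod 2)) = (k, 0) := by
    have := congrArg (fun v => ((cw (k+1))^(f (k+1))) v) happ
    rw [← Equiv.Perm.mul_apply, ← Equiv.Perm.mul_apply, ← zpow_add, ← zpow_add] at this
    rw [show f (k+1) + -(f (k+1)) = 0 from by ring] at this
    rw [show f (k+1) + -(g (k+1)) = f (k+1) - g (k+1) from by ring] at this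
    rw [zpow_zero] at this
    exact this.symm ▸ this
  have hdvd := cw_zpow_fix_imp _ hcomb
  have habs : |f (k+1) - g (k+1)| < ((2*(k+1) : ℕ) : ℤ) := by
    rw [abs_lt]
    push_cast
    omega
  have := Int.eq_zero_of_abs_lt_dvd hdvd habs
  omega


/-! ### the homomorphism from W -/

lemma qq_succ (f : ℕ → ℤ) (k : ℕ) : qq f (k+1) = qq f k * (cw (k+1))^(f (k+1)) := rfl

noncomputable def phi (cs : CoxeterSystem (BCoxeterMatrix n) W) :
    W →* Equiv.Perm (ℕ × ZMod 2) :=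
  cs.lift ⟨fun i : Fin n => sperm (i:ℕ), islift⟩

lemma phi_sgen {j : ℕ} (h : j < n) : phi cs (sgen cs j) = sperm j := by
  rw [sgen_eq cs h]
  exact cs.lift_apply_simple islift ⟨j, h⟩

lemma phi_tau : ∀ k, k ≤ n → phi cs (tau cs k) = cw k := by
  intro k
  induction k with
  | zero => intro _; rw [tau_zero, map_one, cw_zero]
  | succ k IH =>
    intro hk
    rw [tau_succ, map_mul, IH (by omega), phi_sgen cs (by omega), cw_succ]

lemma phi_ppp (f : ℕ → ℤ) : ∀ k, k ≤ n → phi cs (ppp cs f k) = qq f k := by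
  intro k
  induction k with
  | zero => intro _; rw [ppp_zero, map_one]; rfl
  | succ k IH =>
    intro hk
    rw [ppp_succ, map_mul, map_zpow, IH (by omega), phi_tau cs (k+1) hk, qq_succ]

lemma ppp_inj : ∀ k, k ≤ n → ∀ f g : ℕ → ℤ,
    (∀ j, 1 ≤ j → j ≤ k → -(j:ℤ) ≤ f j ∧ f j ≤ (j:ℤ)-1) →
    (∀ j, 1 ≤ j → j ≤ k → -(j:ℤ) ≤ g j ∧ g j ≤ (j:ℤ)-1) →
    ppp cs f k = ppp cs g k → ∀ j, 1 ≤ j → j ≤ k → f j = g j := by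
  intro k
  induction k with
  | zero => intro _ f g _ _ _ j h1 h2; omega
  | succ K IH =>
    intro hK f g hfb hgb heq j hj1 hj2
    have hqq : qq f (K+1) = qq g (K+1) := by
      rw [← phi_ppp cs f (K+1) hK, ← phi_ppp cs g (K+1) hK, heq]
    have htop : f (K+1) = g (K+1) := by
      apply top_exp_eq f g ?_ ?_ hqq
      · have := hfb (K+1) (by omega) le_rfl
        push_cast at this ⊢
        omega
      · have := hgb (K+1) (by omega) le_rfl
        push_cast at this ⊢
        omega
    by_cases hjK : j ≤ K
    · have hW : ppp cs f K = ppp cs g K := by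
        have h2 := heq
        rw [ppp_succ, ppp_succ, htop] at h2
        exact mul_right_cancel h2
      exact IH (by omega) f g (fun j a b => hfb j a (by omega))
        (fun j a b => hgb j a (by omega)) hW j hj1 hjK
    · have hj : j = K+1 := by omega
      rw [hj]
      exact htop

/-! ### bridging to the `finRange` product -/

lemma finRange_prod (u : ℕ → W) :
    ((List.finRange n).map (fun k : Fin n => u (k:ℕ))).prod = ((List.range n).map u).prod := by
  rw [show (fun k : Fin n => u (k:ℕ)) = u ∘ Fin.val from rfl, ← List.map_map,
    List.map_coe_finRange_eq_range]

lemma ppp_eq_range (f : ℕ → ℤ) : ∀ k,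
    ppp cs f k = ((List.range k).map (fun j => tau cs (j+1) ^ f (j+1))).prod := by
  intro k
  induction k with
  | zero => rfl
  | succ k IH =>
    rw [ppp_succ, IH, List.range_succ, List.map_append, List.prod_append,
      List.map_singleton, List.prod_singleton]

end OGSaux

/-- Every element of the type-`Bₙ` Coxeter group `W` has a unique presentation
`w = τ_1^{i_1} · τ_2^{i_2} ⋯ τ_n^{i_n}` with `-k ≤ i_k ≤ k - 1` for `1 ≤ k ≤ n`. -/
theorem exists_unique_OGS_presentation (hn : 1 ≤ n)
    (cs : CoxeterSystem (BCoxeterMatrix n) W) (w : W) :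
    ∃! f : Fin n → ℤ,
      (∀ k : Fin n, -((k : ℕ) + 1 : ℤ) ≤ f k ∧ f k ≤ ((k : ℕ) : ℤ)) ∧
      w = ((List.finRange n).map (fun k : Fin n => tau cs ((k : ℕ) + 1) ^ f k)).prod := by
  classical
  obtain ⟨f0, hf0⟩ := OGSaux.exists_ppp cs w
  set g : ℕ → ℤ := fun j => OGSaux.normExp j (f0 j) with hg
  have hwg : w = OGSaux.ppp cs g n := by
    rw [hf0]
    exact OGSaux.ppp_norm cs f0 n le_rfl
  have hgb : ∀ j, 1 ≤ j → j ≤ n → -(j:ℤ) ≤ g j ∧ g j ≤ (j:ℤ)-1 := by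
    intro j h1 _
    exact ⟨OGSaux.normExp_lb h1 (f0 j), OGSaux.normExp_ub h1 (f0 j)⟩
  refine ⟨fun k : Fin n => g ((k:ℕ)+1), ⟨?_, ?_⟩, ?_⟩
  · intro k
    have hb := hgb ((k:ℕ)+1) (by omega) (by omega)
    constructor
    · have := hb.1; push_cast at this ⊢; omega
    · have := hb.2; push_cast at this ⊢; omega
  · rw [show (fun k : Fin n => tau cs ((k:ℕ)+1) ^ g ((k:ℕ)+1))
        = (fun k : Fin n => (fun j : ℕ => tau cs (j+1) ^ g (j+1)) (k:ℕ)) from rfl,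
      OGSaux.finRange_prod (fun j : ℕ => tau cs (j+1) ^ g (j+1)), ← OGSaux.ppp_eq_range]
    exact hwg
  · rintro F ⟨hFb, hFprod⟩
    set fF : ℕ → ℤ := fun j => if h : 1 ≤ j ∧ j ≤ n then F ⟨j-1, by omega⟩ else 0 with hfF
    have hFeq : ∀ k : Fin n, fF ((k:ℕ)+1) = F k := by
      intro k
      have hcond : 1 ≤ (k:ℕ)+1 ∧ (k:ℕ)+1 ≤ n := ⟨by omega, by omega⟩
      simp only [hfF, dif_pos hcond]
      congr 1
    have hwf : w = OGSaux.ppp cs fF n := by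
      rw [hFprod,
        show (fun k : Fin n => tau cs ((k:ℕ)+1) ^ F k)
          = (fun k : Fin n => (fun j : ℕ => tau cs (j+1) ^ fF (j+1)) (k:ℕ)) from
          funext (fun k => by simp only [hFeq k]),
        OGSaux.finRange_prod (fun j : ℕ => tau cs (j+1) ^ fF (j+1)), ← OGSaux.ppp_eq_range]
    have hfFb : ∀ j, 1 ≤ j → j ≤ n → -(j:ℤ) ≤ fF j ∧ fF j ≤ (j:ℤ)-1 := by
      intro j h1 h2
      have hcond : 1 ≤ j ∧ j ≤ n := ⟨h1, h2⟩
      rw [hfF]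
      simp only [dif_pos hcond]
      have hb := hFb ⟨j-1, by omega⟩
      have hco : ((⟨j-1, by omega⟩ : Fin n) : ℕ) = j - 1 := rfl
      rw [hco] at hb
      constructor
      · have := hb.1; push_cast at this ⊢; omega
      · have := hb.2; push_cast at this ⊢; omega
    have hmain := OGSaux.ppp_inj cs n le_rfl fF g hfFb hgb (by rw [← hwf, ← hwg])
    funext k
    have := hmain ((k:ℕ)+1) (by omega) (by omega)
    rw [← hFeq k, this]
end

section
/- Let 1 ≤ p < q ≤ n and let r_q, r_p be integers with 0 < r_q < q and 0 < r_p < p. Then the following exchange laws hold in W: (i) if q − r_q ≥ p then τ_q^{r_q}·τ_p^{r_p} = τ_{r_q}^{−r_q}·τ_{r_q+r_p}^{r_q}·τ_{p+r_q}^{r_p}·τ_q^{r_q}; (ii) if r_p ≤ q − r_q ≤ p then τ_q^{r_q}·τ_p^{r_p} = τ_{r_q}^{p−q}·τ_{r_q+r_p}^{q−p}·τ_q^{r_q+r_p}; (iii) if q − r_q ≤ r_p then τ_q^{r_q}·τ_p^{r_p} = τ_{p+r_q−q}^{r_q+r_p−q}·τ_{r_q}^{p−r_p−r_q}·τ_q^{r_q+r_p−p−q}.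 -/
variable {n : ℕ} {W : Type*} [Group W]

namespace ExchAux

/- group helpers -/
lemma sq_helper {a b : W} (ha : a * a = 1) (hb : b * b = 1) (h : (a * b) ^ 2 = 1) :
    a * b = b * a := by
  have h2 : a * b = (a * b)⁻¹ := eq_inv_of_mul_eq_one_left (by rw [← sq]; exact h)
  rw [h2, mul_inv_rev, inv_eq_of_mul_eq_one_right ha, inv_eq_of_mul_eq_one_right hb]

lemma braid_helper {a b : W} (ha : a * a = 1) (hb : b * b = 1) (h : (a * b) ^ 3 = 1) :
    a * b * a = b * a * b := by
  have h2 : (a * b) ^ 2 = (a * b)⁻¹ :=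
    eq_inv_of_mul_eq_one_left (by rw [← pow_succ]; exact h)
  have e1 : a * b * a = (a * b) ^ 2 * b := by
    rw [sq, show a * b * (a * b) * b = a * b * (a * (b * b)) from by group, hb, mul_one]
  rw [e1, h2, mul_inv_rev, inv_eq_of_mul_eq_one_right ha, inv_eq_of_mul_eq_one_right hb,
    mul_assoc]

lemma bond4_helper {a b : W} (ha : a * a = 1) (hb : b * b = 1) (h : (a * b) ^ 4 = 1) :
    a * b * (a * b) = b * a * (b * a) := by
  have h2 : (a * b) ^ 2 = ((a * b) ^ 2)⁻¹ :=
    eq_inv_of_mul_eq_one_left (by rw [← pow_add]; exact h)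
  have : (a * b) ^ 2 = (b * a) ^ 2 := by
    rw [h2, sq, mul_inv_rev, mul_inv_rev, inv_eq_of_mul_eq_one_right ha,
      inv_eq_of_mul_eq_one_right hb, sq]
  rw [sq, sq] at this
  rw [← mul_assoc, ← mul_assoc] at this ⊢
  exact this

variable (cs : CoxeterSystem (BCoxeterMatrix n) W)

lemma sgen_mul_self (j : ℕ) : sgen cs j * sgen cs j = 1 := by
  unfold sgen; split
  · exact cs.simple_mul_simple_self _
  · simp

lemma Mentry (i j : Fin n) : (BCoxeterMatrix n).M i j =
    (if i = j then 1
      else if ((i : ℕ) = 0 ∧ (j : ℕ) = 1) ∨ ((j : ℕ) = 0 ∧ (i : ℕ) = 1) then 4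
      else if (j : ℕ) + 1 = i ∨ (i : ℕ) + 1 = j then 3 else 2) := rfl

lemma sgen_comm {i j : ℕ} (h : i + 2 ≤ j) : Commute (sgen cs i) (sgen cs j) := by
  unfold sgen
  split
  · split
    · rename_i hi hj
      have hM : (BCoxeterMatrix n).M ⟨i, hi⟩ ⟨j, hj⟩ = 2 := by
        rw [Mentry]
        have h1 : (⟨i, hi⟩ : Fin n) ≠ ⟨j, hj⟩ := by
          simp only [ne_eq, Fin.mk.injEq]; omega
        rw [if_neg h1, if_neg (by simp; omega), if_neg (by simp; omega)]
      have := cs.simple_mul_simple_pow ⟨i, hi⟩ ⟨j, hj⟩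
      rw [hM] at this
      exact sq_helper (cs.simple_mul_simple_self _) (cs.simple_mul_simple_self _) this
    · exact Commute.one_right _
  · exact Commute.one_left _

lemma braid {i : ℕ} (h1 : 1 ≤ i) (h2 : i + 1 < n) :
    sgen cs i * sgen cs (i + 1) * sgen cs i = sgen cs (i + 1) * sgen cs i * sgen cs (i + 1) := by
  have hi : i < n := by omega
  have hM : (BCoxeterMatrix n).M ⟨i, hi⟩ ⟨i + 1, h2⟩ = 3 := by
    rw [Mentry]
    rw [if_neg (by simp only [ne_eq, Fin.mk.injEq]; omega), if_neg (by simp; omega),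
      if_pos (by simp)]
  have hrel := cs.simple_mul_simple_pow ⟨i, hi⟩ ⟨i + 1, h2⟩
  rw [hM] at hrel
  have hb := braid_helper (cs.simple_mul_simple_self ⟨i, hi⟩)
    (cs.simple_mul_simple_self ⟨i + 1, h2⟩) hrel
  unfold sgen
  rw [dif_pos hi, dif_pos h2]
  exact hb

lemma bond4 (h : 1 < n) :
    sgen cs 0 * sgen cs 1 * (sgen cs 0 * sgen cs 1) =
      sgen cs 1 * sgen cs 0 * (sgen cs 1 * sgen cs 0) := by
  have h0 : (0 : ℕ) < n := by omega
  have hM : (BCoxeterMatrix n).M ⟨0, h0⟩ ⟨1, h⟩ = 4 := by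
    rw [Mentry]
    rw [if_neg (by simp only [ne_eq, Fin.mk.injEq]; omega), if_pos (by simp)]
  have hrel := cs.simple_mul_simple_pow ⟨0, h0⟩ ⟨1, h⟩
  rw [hM] at hrel
  have hb := bond4_helper (cs.simple_mul_simple_self ⟨0, h0⟩)
    (cs.simple_mul_simple_self ⟨1, h⟩) hrel
  unfold sgen
  rw [dif_pos h0, dif_pos h]
  exact hb


variable (cs : CoxeterSystem (BCoxeterMatrix n) W)

/-- ascending word `s_a s_{a+1} ⋯ s_{a+l-1}` -/
def Pw (a : ℕ) : ℕ → W
  | 0 => 1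
  | l + 1 => Pw a l * sgen cs (a + l)

/-- descending word `s_{b+l-1} s_{b+l-2} ⋯ s_b` -/
def Dw (b : ℕ) : ℕ → W
  | 0 => 1
  | l + 1 => sgen cs (b + l) * Dw b l

lemma tau_zero : tau cs 0 = 1 := rfl

lemma tau_succ (k : ℕ) : tau cs (k + 1) = tau cs k * sgen cs k := by
  unfold tau
  rw [List.range_succ, List.map_append, List.prod_append]
  simp

lemma tau_Pw (a l : ℕ) : tau cs a * Pw cs a l = tau cs (a + l) := by
  induction l with
  | zero => simp [Pw]
  | succ l ih => rw [Pw, ← mul_assoc, ih, ← tau_succ, Nat.add_assoc]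

lemma tau_eq_Pw (k : ℕ) : tau cs k = Pw cs 0 k := by
  have := tau_Pw cs 0 k
  rw [tau_zero, one_mul] at this
  rw [this, zero_add]

lemma comm_Pw {j a : ℕ} (l : ℕ) (h : j + 2 ≤ a ∨ a + l + 1 ≤ j) :
    Commute (sgen cs j) (Pw cs a l) := by
  induction l with
  | zero => exact Commute.one_right _
  | succ l ih =>
    rw [Pw]
    refine Commute.mul_right (ih (by omega)) ?_
    rcases h with h | h
    · exact sgen_comm cs (by omega)
    · exact (sgen_comm cs (show a + l + 2 ≤ j by omega)).symm

lemma comm_Dw {j b : ℕ} (l : ℕ) (h : j + 2 ≤ b ∨ b + l + 1 ≤ j) :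
    Commute (sgen cs j) (Dw cs b l) := by
  induction l with
  | zero => exact Commute.one_right _
  | succ l ih =>
    rw [Dw]
    refine Commute.mul_right ?_ (ih (by omega))
    rcases h with h | h
    · exact sgen_comm cs (by omega)
    · exact (sgen_comm cs (show b + l + 2 ≤ j by omega)).symm

lemma comm_tau {j k : ℕ} (h : k + 1 ≤ j) : Commute (sgen cs j) (tau cs k) := by
  rw [tau_eq_Pw]
  exact comm_Pw cs k (by omega)

lemma shift1 {j k : ℕ} (hj : 1 ≤ j) (hjk : j + 2 ≤ k) (hk : k ≤ n) :
    sgen cs (j + 1) * tau cs k = tau cs k * sgen cs j := by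
  obtain ⟨m, rfl⟩ : ∃ m, k = (j + 2) + m := ⟨k - (j + 2), by omega⟩
  rw [← tau_Pw cs (j + 2) m]
  rw [show tau cs (j + 2) = tau cs j * sgen cs j * sgen cs (j + 1) from by
    rw [tau_succ, tau_succ]]
  have c1 : sgen cs (j + 1) * tau cs j = tau cs j * sgen cs (j + 1) :=
    (comm_tau cs (by omega)).eq
  have c2 : sgen cs j * Pw cs (j + 2) m = Pw cs (j + 2) m * sgen cs j :=
    (comm_Pw cs m (Or.inl (by omega))).eq
  have hb : sgen cs j * sgen cs (j + 1) * sgen cs j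
      = sgen cs (j + 1) * sgen cs j * sgen cs (j + 1) := braid cs hj (by omega)
  calc sgen cs (j + 1) * (tau cs j * sgen cs j * sgen cs (j + 1) * Pw cs (j + 2) m)
      = tau cs j * (sgen cs (j + 1) * sgen cs j * sgen cs (j + 1)) * Pw cs (j + 2) m := by
        rw [← mul_assoc, ← mul_assoc, ← mul_assoc, c1]; simp only [mul_assoc]
    _ = tau cs j * (sgen cs j * sgen cs (j + 1) * sgen cs j) * Pw cs (j + 2) m := by rw [hb]
    _ = tau cs j * sgen cs j * sgen cs (j + 1) * (sgen cs j * Pw cs (j + 2) m) := by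
        simp only [mul_assoc]
    _ = tau cs j * sgen cs j * sgen cs (j + 1) * Pw cs (j + 2) m * sgen cs j := by
        rw [c2, mul_assoc]; simp only [mul_assoc]

lemma shiftPow {j k : ℕ} (r : ℕ) (hj : 1 ≤ j) (h : j + r + 1 ≤ k) (hk : k ≤ n) :
    tau cs k ^ r * sgen cs j = sgen cs (j + r) * tau cs k ^ r := by
  induction r generalizing j with
  | zero => simp
  | succ r ih =>
    rw [pow_succ, mul_assoc, ← shift1 cs hj (by omega) hk, ← mul_assoc,
      ih (by omega) (by omega), mul_assoc, ← pow_succ]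
    congr 2
    omega

lemma shiftDw {b k : ℕ} (l : ℕ) (hb : 1 ≤ b) (h : b + l + 1 ≤ k) (hk : k ≤ n) :
    Dw cs (b + 1) l * tau cs k = tau cs k * Dw cs b l := by
  induction l with
  | zero => simp [Dw]
  | succ l ih =>
    rw [Dw, Dw, mul_assoc, ih (by omega), ← mul_assoc,
      show b + 1 + l = (b + l) + 1 from by omega, shift1 cs (by omega) (by omega) hk,
      mul_assoc]

lemma shiftPowDw {b k : ℕ} (r l : ℕ) (hb : 1 ≤ b) (h : b + l + r ≤ k) (hk : k ≤ n) :
    tau cs k ^ r * Dw cs b l = Dw cs (b + r) l * tau cs k ^ r := by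
  induction l with
  | zero => simp [Dw]
  | succ l ih =>
    rw [Dw, Dw, ← mul_assoc, shiftPow cs r (by omega) (by omega) hk, mul_assoc,
      ih (by omega), ← mul_assoc, show b + l + r = b + r + l from by omega]

lemma Arel {p q : ℕ} (hp : 1 ≤ p) (hpq : p < q) (hq : q ≤ n) :
    tau cs q * tau cs p = sgen cs 1 * tau cs (p + 1) * tau cs q := by
  induction p, hp using Nat.le_induction with
  | base =>
    obtain ⟨m, rfl⟩ : ∃ m, q = 2 + m := ⟨q - 2, by omega⟩
    have ht1 : tau cs 1 = sgen cs 0 := by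
      rw [show (1:ℕ) = 0 + 1 from rfl, tau_succ, tau_zero, one_mul]
    have ht2 : tau cs 2 = sgen cs 0 * sgen cs 1 := by
      rw [show (2:ℕ) = 1 + 1 from rfl, tau_succ, ht1]
    have hdec : tau cs (2 + m) = sgen cs 0 * sgen cs 1 * Pw cs 2 m := by
      rw [← tau_Pw cs 2 m, ht2]
    have c0 : Pw cs 2 m * sgen cs 0 = sgen cs 0 * Pw cs 2 m :=
      ((comm_Pw cs m (Or.inl (by omega))).eq).symm
    have h4L : sgen cs 1 * sgen cs 0 * sgen cs 1 * sgen cs 0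
        = sgen cs 0 * sgen cs 1 * sgen cs 0 * sgen cs 1 := by
      have := (bond4 cs (by omega)).symm
      simp only [← mul_assoc] at this
      exact this
    rw [ht1, hdec, show (1:ℕ) + 1 = 2 from rfl, ht2]
    simp only [← mul_assoc]
    rw [h4L, mul_assoc (sgen cs 0 * sgen cs 1 * sgen cs 0) (sgen cs 1) (sgen cs 1),
      sgen_mul_self cs 1, mul_one,
      mul_assoc (sgen cs 0 * sgen cs 1) (Pw cs 2 m) (sgen cs 0), c0, ← mul_assoc]
  | succ p hp ih =>
    have ihe := ih (by omega)
    calc tau cs q * tau cs (p + 1)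
        = tau cs q * tau cs p * sgen cs p := by rw [tau_succ, ← mul_assoc]
      _ = sgen cs 1 * tau cs (p + 1) * tau cs q * sgen cs p := by rw [ihe]
      _ = sgen cs 1 * tau cs (p + 1) * (sgen cs (p + 1) * tau cs q) := by
          rw [mul_assoc, ← shift1 cs (by omega) (by omega) hq]
      _ = sgen cs 1 * tau cs (p + 1 + 1) * tau cs q := by
          rw [← mul_assoc, mul_assoc (sgen cs 1) (tau cs (p + 1)) (sgen cs (p + 1)),
            ← tau_succ]

lemma REC2 {p q : ℕ} (m : ℕ) (hp : 1 ≤ p) (hm : 1 ≤ m) (h : p + m ≤ q) (hq : q ≤ n) :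
    tau cs q ^ m * tau cs p = Dw cs 1 m * tau cs (p + m) * tau cs q ^ m := by
  induction m, hm using Nat.le_induction generalizing p with
  | base =>
    rw [pow_one, Arel cs hp (by omega) hq,
      show Dw cs 1 1 = sgen cs (1 + 0) * Dw cs 1 0 from rfl]
    simp [Dw]
  | succ m hm ih =>
    have ihe := ih (p := p + 1) (by omega) (by omega)
    calc tau cs q ^ (m + 1) * tau cs p
        = tau cs q ^ m * (tau cs q * tau cs p) := by rw [pow_succ, mul_assoc]
      _ = tau cs q ^ m * sgen cs 1 * (tau cs (p + 1) * tau cs q) := by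
          rw [Arel cs hp (by omega) hq]; simp only [mul_assoc]
      _ = sgen cs (1 + m) * (tau cs q ^ m * tau cs (p + 1) * tau cs q) := by
          rw [shiftPow cs m (by omega) (by omega) hq]; simp only [mul_assoc]
      _ = sgen cs (1 + m) * (Dw cs 1 m * tau cs (p + 1 + m) * tau cs q ^ m * tau cs q) := by
          rw [ihe]
      _ = Dw cs 1 (m + 1) * tau cs (p + (m + 1)) * tau cs q ^ (m + 1) := by
          rw [show Dw cs 1 (m + 1) = sgen cs (1 + m) * Dw cs 1 m from rfl,
            show p + 1 + m = p + (m + 1) from by omega, pow_succ]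
          simp only [mul_assoc]

lemma KeyB {p : ℕ} (d t : ℕ) (hp : 1 ≤ p) (hd : 1 ≤ d) (ht : t + 1 ≤ p) (hq : p + d ≤ n) :
    tau cs (p + d) ^ (d + t) * tau cs p = Dw cs (t + 1) d * tau cs (p + d) ^ (d + t + 1) := by
  induction d, hd using Nat.le_induction generalizing p with
  | base =>
    have hA := Arel cs hp (show p < p + 1 from by omega) (by omega)
    rw [show (1:ℕ) + t = t + 1 from by omega]
    calc tau cs (p + 1) ^ (t + 1) * tau cs p
        = tau cs (p + 1) ^ t * (tau cs (p + 1) * tau cs p) := by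
          rw [pow_succ, mul_assoc]
      _ = tau cs (p + 1) ^ t * sgen cs 1 * (tau cs (p + 1) * tau cs (p + 1)) := by
          rw [hA]; simp only [mul_assoc]
      _ = sgen cs (1 + t) * (tau cs (p + 1) ^ t * (tau cs (p + 1) * tau cs (p + 1))) := by
          rw [shiftPow cs t (by omega) (by omega) (by omega)]; simp only [mul_assoc]
      _ = Dw cs (t + 1) 1 * tau cs (p + 1) ^ (t + 1 + 1) := by
          rw [show Dw cs (t + 1) 1 = sgen cs (t + 1 + 0) * Dw cs (t + 1) 0 from rfl]
          simp only [Dw, Nat.add_zero, mul_one]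
          rw [show (1:ℕ) + t = t + 1 from by omega]
          congr 1
          simp only [← mul_assoc]
          rw [← pow_succ, ← pow_succ]
  | succ d hd ih =>
    have ihe := ih (p := p + 1) (by omega) (by omega) (by omega)
    rw [show p + 1 + d = p + (d + 1) from by omega] at ihe
    calc tau cs (p + (d + 1)) ^ (d + 1 + t) * tau cs p
        = tau cs (p + (d + 1)) ^ (d + t) * (tau cs (p + (d + 1)) * tau cs p) := by
          rw [show d + 1 + t = (d + t) + 1 from by omega, pow_succ, mul_assoc]
      _ = tau cs (p + (d + 1)) ^ (d + t) * sgen cs 1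
            * (tau cs (p + 1) * tau cs (p + (d + 1))) := by
          rw [Arel cs hp (by omega) (by omega)]; simp only [mul_assoc]
      _ = sgen cs (1 + (d + t)) * (tau cs (p + (d + 1)) ^ (d + t) * tau cs (p + 1)
            * tau cs (p + (d + 1))) := by
          rw [shiftPow cs (d + t) (by omega) (by omega) (by omega)]; simp only [mul_assoc]
      _ = sgen cs (1 + (d + t)) * (Dw cs (t + 1) d * tau cs (p + (d + 1)) ^ (d + t + 1)
            * tau cs (p + (d + 1))) := by
          rw [ihe]
      _ = Dw cs (t + 1) (d + 1) * tau cs (p + (d + 1)) ^ (d + 1 + t + 1) := by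
          rw [show Dw cs (t + 1) (d + 1) = sgen cs (t + 1 + d) * Dw cs (t + 1) d from rfl,
            show t + 1 + d = 1 + (d + t) from by omega]
          simp only [mul_assoc]
          congr 2
          rw [← pow_succ]
          congr 1
          omega

lemma sEnd (k : ℕ) :
    sgen cs (k + 1) * tau cs (k + 1) = tau cs k * sgen cs (k + 1) * sgen cs k := by
  rw [tau_succ, ← mul_assoc, (comm_tau cs (show k + 1 ≤ k + 1 from le_rfl)).eq]

lemma W2 (d : ℕ) : ∀ b : ℕ, b + d < n →
    tau cs (b + d + 1) ^ d = tau cs (b + d) ^ d * Dw cs (b + 1) d := by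
  induction d with
  | zero => intro b _; simp [Dw]
  | succ e ihd =>
    intro b hbn
    rcases Nat.eq_zero_or_pos e with he | he
    · subst he
      rw [pow_one, pow_one,
        show Dw cs (b + 1) 1 = sgen cs (b + 1 + 0) * Dw cs (b + 1) 0 from rfl]
      simp only [Dw, Nat.add_zero, mul_one]
      rw [show b + 0 + 1 = (b + 0) + 1 from rfl, tau_succ]
    · obtain ⟨f, rfl⟩ : ∃ f, e = f + 1 := ⟨e - 1, by omega⟩
      have han : b + f + 2 < n := by omega
      have ih1 := ihd (b + 1) (by omega)
      rw [show b + 1 + (f + 1) + 1 = b + f + 3 from by omega,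
        show b + 1 + (f + 1) = b + f + 2 from by omega,
        show b + 1 + 1 = b + 2 from by omega] at ih1
      rw [show b + (f + 1 + 1) + 1 = b + f + 3 from by omega,
        show b + (f + 1 + 1) = b + f + 2 from by omega,
        show f + 1 + 1 = f + 2 from by omega]
      -- goal: τ_{b+f+3}^{f+2} = τ_{b+f+2}^{f+2} * Dw (b+1) (f+2)
      have hDw1 : Dw cs (b + 2) (f + 1) = sgen cs (b + f + 2) * Dw cs (b + 2) f := by
        rw [show Dw cs (b + 2) (f + 1) = sgen cs (b + 2 + f) * Dw cs (b + 2) f from rfl,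
          show b + 2 + f = b + f + 2 from by omega]
      have hsh : Dw cs (b + 2) f * tau cs (b + f + 2)
          = tau cs (b + f + 2) * Dw cs (b + 1) f := by
        rw [show b + 2 = (b + 1) + 1 from rfl]
        exact shiftDw cs f (by omega) (by omega) (by omega)
      have hsend : sgen cs (b + f + 2) * tau cs (b + f + 2)
          = tau cs (b + f + 1) * sgen cs (b + f + 2) * sgen cs (b + f + 1) := by
        have := sEnd cs (b + f + 1)
        rw [show b + f + 1 + 1 = b + f + 2 from by omega] at this
        exact this
      have hcomm : Dw cs (b + 1) f * sgen cs (b + f + 2)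
          = sgen cs (b + f + 2) * Dw cs (b + 1) f :=
        ((comm_Dw cs (j := b + f + 2) (b := b + 1) f (Or.inr (by omega))).symm.eq)
      have hbr : sgen cs (b + f + 2) * sgen cs (b + f + 1) * sgen cs (b + f + 2)
          = sgen cs (b + f + 1) * sgen cs (b + f + 2) * sgen cs (b + f + 1) := by
        have := braid cs (i := b + f + 1) (by omega) (by omega)
        rw [show b + f + 1 + 1 = b + f + 2 from by omega] at this
        exact this.symm
      calc tau cs (b + f + 3) ^ (f + 2)
          = tau cs (b + f + 3) ^ (f + 1) * tau cs (b + f + 3) := by rw [← pow_succ]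
        _ = tau cs (b + f + 2) ^ (f + 1) * Dw cs (b + 2) (f + 1) * tau cs (b + f + 3) := by
            rw [ih1]
        _ = tau cs (b + f + 2) ^ (f + 1) * sgen cs (b + f + 2) *
              (Dw cs (b + 2) f * tau cs (b + f + 2)) * sgen cs (b + f + 2) := by
            rw [hDw1, show b + f + 3 = b + f + 2 + 1 from by omega, tau_succ cs (b + f + 2)]
            simp only [← mul_assoc]
        _ = tau cs (b + f + 2) ^ (f + 1) * (sgen cs (b + f + 2) * tau cs (b + f + 2)) *
              (Dw cs (b + 1) f * sgen cs (b + f + 2)) := by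
            rw [hsh]
            simp only [← mul_assoc]
        _ = tau cs (b + f + 2) ^ (f + 1) * tau cs (b + f + 1) *
              (sgen cs (b + f + 2) * sgen cs (b + f + 1) * sgen cs (b + f + 2)) *
              Dw cs (b + 1) f := by
            rw [hsend, hcomm]
            simp only [← mul_assoc]
        _ = tau cs (b + f + 2) ^ (f + 1) * (tau cs (b + f + 1) * sgen cs (b + f + 1)) *
              (sgen cs (b + f + 2) * (sgen cs (b + f + 1) * Dw cs (b + 1) f)) := by
            rw [hbr]
            simp only [← mul_assoc]
        _ = tau cs (b + f + 2) ^ (f + 2) * Dw cs (b + 1) (f + 2) := by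
            rw [← tau_succ cs (b + f + 1), show b + f + 1 + 1 = b + f + 2 from by omega,
              ← pow_succ, show f + 1 + 1 = f + 2 from by omega,
              show Dw cs (b + 1) (f + 2) = sgen cs (b + 1 + (f + 1)) * Dw cs (b + 1) (f + 1)
                from rfl,
              show Dw cs (b + 1) (f + 1) = sgen cs (b + 1 + f) * Dw cs (b + 1) f from rfl,
              show b + 1 + (f + 1) = b + f + 2 from by omega,
              show b + 1 + f = b + f + 1 from by omega]

lemma B2 {p q : ℕ} (m : ℕ) (hp : 1 ≤ p) (hpq : p < q) (hq : q ≤ n)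
    (hm1 : q ≤ p + m) (hm2 : m < q) :
    tau cs q ^ m * tau cs p
      = (tau cs m ^ (q - p))⁻¹ * tau cs (m + 1) ^ (q - p) * tau cs q ^ (m + 1) := by
  obtain ⟨d, rfl⟩ : ∃ d, q = p + d := ⟨q - p, by omega⟩
  obtain ⟨t, rfl⟩ : ∃ t, m = d + t := ⟨m - d, by omega⟩
  have hKB := KeyB cs d t hp (by omega) (by omega) hq
  have hW2 := W2 cs d t (by omega)
  rw [show t + d = d + t from by omega] at hW2
  have hDw : Dw cs (t + 1) d = (tau cs (d + t) ^ d)⁻¹ * tau cs (d + t + 1) ^ d := by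
    rw [hW2, ← mul_assoc, inv_mul_cancel, one_mul]
  rw [show p + d - p = d from by omega, hKB, hDw]

/-- `Ne i` is the "negation of coordinate `i+1`": `s_i ⋯ s_1 s_0 s_1 ⋯ s_i`. -/
def Ne : ℕ → W
  | 0 => sgen cs 0
  | i + 1 => sgen cs (i + 1) * Ne i * sgen cs (i + 1)

lemma neg_mul_self (i : ℕ) : Ne cs i * Ne cs i = 1 := by
  induction i with
  | zero => exact sgen_mul_self cs 0
  | succ i ih =>
    show sgen cs (i+1) * Ne cs i * sgen cs (i+1) * (sgen cs (i+1) * Ne cs i * sgen cs (i+1)) = 1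
    have h1 : sgen cs (i+1) * Ne cs i * sgen cs (i+1) * (sgen cs (i+1) * Ne cs i * sgen cs (i+1))
        = sgen cs (i+1) * Ne cs i * (sgen cs (i+1) * sgen cs (i+1)) * Ne cs i * sgen cs (i+1) := by
      simp only [mul_assoc]
    rw [h1, sgen_mul_self cs (i+1), mul_one, mul_assoc (sgen cs (i+1)) (Ne cs i) (Ne cs i),
      ih, mul_one, sgen_mul_self cs (i+1)]

lemma comm_s_neg_ge {i j : ℕ} (h : i + 2 ≤ j) : Commute (sgen cs j) (Ne cs i) := by
  induction i with
  | zero => exact (sgen_comm cs (by omega)).symm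
  | succ i ih =>
    show Commute (sgen cs j) (sgen cs (i+1) * Ne cs i * sgen cs (i+1))
    exact Commute.mul_right
      (Commute.mul_right ((sgen_comm cs (show i + 1 + 2 ≤ j from by omega)).symm)
        (ih (by omega))) ((sgen_comm cs (show i + 1 + 2 ≤ j from by omega)).symm)

lemma comm_s_neg_lt {j i : ℕ} (h : j + 1 ≤ i) (hi : i < n) :
    Commute (sgen cs j) (Ne cs i) := by
  induction i, h using Nat.le_induction with
  | base =>
    -- i = j + 1
    rcases Nat.eq_zero_or_pos j with hj | hj
    · subst hj
      show Commute (sgen cs 0) (sgen cs 1 * Ne cs 0 * sgen cs 1)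
      show sgen cs 0 * (sgen cs 1 * Ne cs 0 * sgen cs 1)
        = sgen cs 1 * Ne cs 0 * sgen cs 1 * sgen cs 0
      show sgen cs 0 * (sgen cs 1 * sgen cs 0 * sgen cs 1)
        = sgen cs 1 * sgen cs 0 * sgen cs 1 * sgen cs 0
      have h4 := bond4 cs (by omega)
      simp only [← mul_assoc] at h4 ⊢
      exact h4
    · obtain ⟨j', rfl⟩ : ∃ j', j = j' + 1 := ⟨j - 1, by omega⟩
      show Commute (sgen cs (j'+1)) (sgen cs (j'+1+1) * Ne cs (j'+1) * sgen cs (j'+1+1))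
      have hb : sgen cs (j'+1) * sgen cs (j'+1+1) * sgen cs (j'+1)
          = sgen cs (j'+1+1) * sgen cs (j'+1) * sgen cs (j'+1+1) :=
        braid cs (by omega) (by omega)
      have hc : Commute (sgen cs (j'+1+1)) (Ne cs j') := comm_s_neg_ge cs (by omega)
      show sgen cs (j'+1) * (sgen cs (j'+1+1) * Ne cs (j'+1) * sgen cs (j'+1+1))
        = sgen cs (j'+1+1) * Ne cs (j'+1) * sgen cs (j'+1+1) * sgen cs (j'+1)
      show sgen cs (j'+1) * (sgen cs (j'+1+1) * (sgen cs (j'+1) * Ne cs j' * sgen cs (j'+1)) * sgen cs (j'+1+1))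
        = sgen cs (j'+1+1) * (sgen cs (j'+1) * Ne cs j' * sgen cs (j'+1)) * sgen cs (j'+1+1) * sgen cs (j'+1)
      calc sgen cs (j'+1) * (sgen cs (j'+1+1) * (sgen cs (j'+1) * Ne cs j' * sgen cs (j'+1)) * sgen cs (j'+1+1))
          = (sgen cs (j'+1) * sgen cs (j'+1+1) * sgen cs (j'+1)) * Ne cs j' *
              (sgen cs (j'+1) * sgen cs (j'+1+1)) := by simp only [← mul_assoc]
        _ = (sgen cs (j'+1+1) * sgen cs (j'+1) * sgen cs (j'+1+1)) * Ne cs j' *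
              (sgen cs (j'+1) * sgen cs (j'+1+1)) := by rw [hb]
        _ = sgen cs (j'+1+1) * sgen cs (j'+1) * Ne cs j' *
              (sgen cs (j'+1+1) * sgen cs (j'+1) * sgen cs (j'+1+1)) := by
            rw [mul_assoc (sgen cs (j'+1+1) * sgen cs (j'+1))  (sgen cs (j'+1+1)) (Ne cs j'), hc.eq]
            simp only [← mul_assoc]
        _ = sgen cs (j'+1+1) * sgen cs (j'+1) * Ne cs j' *
              (sgen cs (j'+1) * sgen cs (j'+1+1) * sgen cs (j'+1)) := by rw [← hb]
        _ = sgen cs (j'+1+1) * (sgen cs (j'+1) * Ne cs j' * sgen cs (j'+1)) * sgen cs (j'+1+1) * sgen cs (j'+1) := by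
            simp only [← mul_assoc]
  | succ i hji ih =>
    show Commute (sgen cs j) (sgen cs (i+1) * Ne cs i * sgen cs (i+1))
    exact Commute.mul_right
      (Commute.mul_right (sgen_comm cs (show j + 2 ≤ i + 1 from by omega)) (ih (by omega)))
      (sgen_comm cs (by omega))

lemma pow4_expand (x : W) : x ^ 4 = x * x * (x * x) := by
  rw [show (4:ℕ) = 2 * 2 from rfl, pow_mul, sq, sq]

lemma pow4_of_sq (x : W) (h : x * x = 1) : x ^ 4 = 1 := by
  rw [pow4_expand, h, one_mul]

lemma neg_s_pow4 (i : ℕ) : (Ne cs i * sgen cs (i + 1)) ^ 4 = 1 := by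
  induction i with
  | zero =>
    by_cases h : 1 < n
    · have h0 : (0 : ℕ) < n := by omega
      have hM : (BCoxeterMatrix n).M ⟨0, h0⟩ ⟨1, h⟩ = 4 := by
        rw [Mentry]
        rw [if_neg (by simp only [ne_eq, Fin.mk.injEq]; omega), if_pos (by simp)]
      have hrel := cs.simple_mul_simple_pow ⟨0, h0⟩ ⟨1, h⟩
      rw [hM] at hrel
      show (sgen cs 0 * sgen cs 1) ^ 4 = 1
      unfold sgen
      rw [dif_pos h0, dif_pos h]
      exact hrel
    · show (sgen cs 0 * sgen cs 1) ^ 4 = 1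
      have h1 : sgen cs 1 = 1 := by unfold sgen; rw [dif_neg (by omega)]
      rw [h1, mul_one]
      exact pow4_of_sq _ (sgen_mul_self cs 0)
  | succ i ih =>
    by_cases h : i + 2 < n
    · set u := sgen cs (i+1) * sgen cs (i+2) with hu
      set v := sgen cs (i+2) * sgen cs (i+1) with hv
      have huv : u * v = 1 := by
        rw [hu, hv, show sgen cs (i+1) * sgen cs (i+2) * (sgen cs (i+2) * sgen cs (i+1))
            = sgen cs (i+1) * (sgen cs (i+2) * sgen cs (i+2)) * sgen cs (i+1) from by
          simp only [mul_assoc], sgen_mul_self cs (i+2), mul_one, sgen_mul_self cs (i+1)]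
      have hvu : v * u = 1 := by
        rw [hu, hv, show sgen cs (i+2) * sgen cs (i+1) * (sgen cs (i+1) * sgen cs (i+2))
            = sgen cs (i+2) * (sgen cs (i+1) * sgen cs (i+1)) * sgen cs (i+2) from by
          simp only [mul_assoc], sgen_mul_self cs (i+1), mul_one, sgen_mul_self cs (i+2)]
      have hbr : sgen cs (i+2) * sgen cs (i+1) * sgen cs (i+2)
          = sgen cs (i+1) * sgen cs (i+2) * sgen cs (i+1) :=
        (braid cs (by omega) (show (i+1) + 1 < n from by omega)).symm
      have hc : sgen cs (i+2) * Ne cs i = Ne cs i * sgen cs (i+2) :=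
        (comm_s_neg_ge cs (by omega)).eq
      have key : Ne cs (i+1) * sgen cs (i+2) = u * (Ne cs i * sgen cs (i+1)) * v := by
        rw [hu, hv]
        show sgen cs (i+1) * Ne cs i * sgen cs (i+1) * sgen cs (i+2)
          = sgen cs (i+1) * sgen cs (i+2) * (Ne cs i * sgen cs (i+1)) *
            (sgen cs (i+2) * sgen cs (i+1))
        calc sgen cs (i+1) * Ne cs i * sgen cs (i+1) * sgen cs (i+2)
            = sgen cs (i+1) * Ne cs i * (sgen cs (i+1) * sgen cs (i+2) * sgen cs (i+1)) *
                sgen cs (i+1) := by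
              rw [show sgen cs (i+1) * Ne cs i * (sgen cs (i+1) * sgen cs (i+2) * sgen cs (i+1)) *
                  sgen cs (i+1)
                  = sgen cs (i+1) * Ne cs i * (sgen cs (i+1) * sgen cs (i+2)) *
                    (sgen cs (i+1) * sgen cs (i+1)) from by simp only [mul_assoc],
                sgen_mul_self cs (i+1), mul_one]
              simp only [← mul_assoc]
          _ = sgen cs (i+1) * Ne cs i * (sgen cs (i+2) * sgen cs (i+1) * sgen cs (i+2)) *
                sgen cs (i+1) := by rw [hbr]
          _ = sgen cs (i+1) * (sgen cs (i+2) * Ne cs i) * sgen cs (i+1) * sgen cs (i+2) *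
                sgen cs (i+1) := by rw [hc]; simp only [← mul_assoc]
          _ = sgen cs (i+1) * sgen cs (i+2) * (Ne cs i * sgen cs (i+1)) *
                (sgen cs (i+2) * sgen cs (i+1)) := by simp only [← mul_assoc]
      have hsq : ∀ z : W, u * z * v * (u * z * v) = u * (z * z) * v := by
        intro z
        calc u * z * v * (u * z * v) = u * z * (v * u) * (z * v) := by
              simp only [← mul_assoc]
          _ = u * (z * z) * v := by rw [hvu, mul_one]; simp only [← mul_assoc]
      have hY4 : Ne cs i * sgen cs (i+1) * (Ne cs i * sgen cs (i+1)) *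
          (Ne cs i * sgen cs (i+1) * (Ne cs i * sgen cs (i+1))) = 1 := by
        rw [← pow4_expand, ih]
      rw [key, pow4_expand, hsq, hsq, hY4, mul_one, huv]
    · have h1 : sgen cs (i+2) = 1 := by unfold sgen; rw [dif_neg (by omega)]
      show (Ne cs (i+1) * sgen cs (i+2)) ^ 4 = 1
      rw [h1, mul_one]
      exact pow4_of_sq _ (neg_mul_self cs (i+1))

lemma neg_comm_succ (i : ℕ) : Commute (Ne cs i) (Ne cs (i + 1)) := by
  have h4 := neg_s_pow4 cs i
  have ha := neg_mul_self cs i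
  have hb := sgen_mul_self cs (i + 1)
  have h2 : (Ne cs i * sgen cs (i+1)) * (Ne cs i * sgen cs (i+1))
      = (sgen cs (i+1) * Ne cs i) * (sgen cs (i+1) * Ne cs i) := by
    have e1 : (Ne cs i * sgen cs (i+1)) * (Ne cs i * sgen cs (i+1))
        = ((Ne cs i * sgen cs (i+1)) * (Ne cs i * sgen cs (i+1)))⁻¹ := by
      apply eq_inv_of_mul_eq_one_left
      rw [← pow4_expand, h4]
    rw [e1, mul_inv_rev, mul_inv_rev, inv_eq_of_mul_eq_one_right ha,
      inv_eq_of_mul_eq_one_right hb]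
    try simp only [← mul_assoc]
  show Ne cs i * (sgen cs (i+1) * Ne cs i * sgen cs (i+1))
    = (sgen cs (i+1) * Ne cs i * sgen cs (i+1)) * Ne cs i
  calc Ne cs i * (sgen cs (i+1) * Ne cs i * sgen cs (i+1))
      = (Ne cs i * sgen cs (i+1)) * (Ne cs i * sgen cs (i+1)) := by simp only [← mul_assoc]
    _ = (sgen cs (i+1) * Ne cs i) * (sgen cs (i+1) * Ne cs i) := h2
    _ = (sgen cs (i+1) * Ne cs i * sgen cs (i+1)) * Ne cs i := by simp only [← mul_assoc]

lemma neg_comm {i j : ℕ} (h : i + 1 ≤ j) : Commute (Ne cs i) (Ne cs j) := by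
  induction j, h using Nat.le_induction with
  | base => exact neg_comm_succ cs i
  | succ j hj ih =>
    show Commute (Ne cs i) (sgen cs (j+1) * Ne cs j * sgen cs (j+1))
    exact Commute.mul_right
      (Commute.mul_right ((comm_s_neg_ge cs (show i + 2 ≤ j + 1 from by omega)).symm) ih)
      ((comm_s_neg_ge cs (show i + 2 ≤ j + 1 from by omega)).symm)

/-- `Fe k = Ne 0 * Ne 1 * ⋯ * Ne (k-1)` : negation of the first `k` coordinates. -/
def Fe : ℕ → W
  | 0 => 1
  | k + 1 => Fe k * Ne cs k

lemma comm_neg_F {i k : ℕ} (h : k ≤ i) : Commute (Ne cs i) (Fe cs k) := by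
  induction k with
  | zero => exact Commute.one_right _
  | succ k ih =>
    show Commute (Ne cs i) (Fe cs k * Ne cs k)
    exact Commute.mul_right (ih (by omega)) ((neg_comm cs (show k + 1 ≤ i from h)).symm)

lemma F_sq (k : ℕ) : Fe cs k * Fe cs k = 1 := by
  induction k with
  | zero => show (1 : W) * 1 = 1; rw [one_mul]
  | succ k ih =>
    show Fe cs k * Ne cs k * (Fe cs k * Ne cs k) = 1
    rw [show Fe cs k * Ne cs k * (Fe cs k * Ne cs k)
        = Fe cs k * (Ne cs k * Fe cs k) * Ne cs k from by simp only [mul_assoc],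
      (comm_neg_F cs (le_refl k)).eq, show Fe cs k * (Fe cs k * Ne cs k) * Ne cs k
        = Fe cs k * Fe cs k * (Ne cs k * Ne cs k) from by simp only [mul_assoc],
      ih, neg_mul_self cs k, one_mul]

lemma comm_s_F_low {j m : ℕ} (h : m + 1 ≤ j) : Commute (sgen cs j) (Fe cs m) := by
  induction m with
  | zero => exact Commute.one_right _
  | succ m ih =>
    show Commute (sgen cs j) (Fe cs m * Ne cs m)
    exact Commute.mul_right (ih (by omega)) (comm_s_neg_ge cs (by omega))

lemma comm_s_F {j k : ℕ} (h : j + 1 ≤ k) (hk : k ≤ n) : Commute (sgen cs j) (Fe cs k) := by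
  induction k, h using Nat.le_induction with
  | base =>
    rcases Nat.eq_zero_or_pos j with hj | hj
    · subst hj
      show Commute (sgen cs 0) (Fe cs 0 * Ne cs 0)
      show Commute (sgen cs 0) ((1 : W) * Ne cs 0)
      rw [one_mul]
      show Commute (sgen cs 0) (sgen cs 0)
      exact Commute.refl _
    · obtain ⟨j', rfl⟩ : ∃ j', j = j' + 1 := ⟨j - 1, by omega⟩
      show Commute (sgen cs (j'+1)) (Fe cs (j'+1) * Ne cs (j'+1))
      have hlow : Commute (sgen cs (j'+1)) (Fe cs j') := comm_s_F_low cs (by omega)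
      have hpair : Commute (sgen cs (j'+1)) (Ne cs j' * Ne cs (j'+1)) := by
        have e1 : sgen cs (j'+1) * Ne cs j' * sgen cs (j'+1) = Ne cs (j'+1) := rfl
        have e2 : sgen cs (j'+1) * Ne cs (j'+1) * sgen cs (j'+1) = Ne cs j' := by
          show sgen cs (j'+1) * (sgen cs (j'+1) * Ne cs j' * sgen cs (j'+1)) * sgen cs (j'+1)
            = Ne cs j'
          rw [show sgen cs (j'+1) * (sgen cs (j'+1) * Ne cs j' * sgen cs (j'+1)) * sgen cs (j'+1)
              = sgen cs (j'+1) * sgen cs (j'+1) * Ne cs j' * (sgen cs (j'+1) * sgen cs (j'+1))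
              from by simp only [mul_assoc], sgen_mul_self cs (j'+1), one_mul, mul_one]
        show sgen cs (j'+1) * (Ne cs j' * Ne cs (j'+1))
          = Ne cs j' * Ne cs (j'+1) * sgen cs (j'+1)
        calc sgen cs (j'+1) * (Ne cs j' * Ne cs (j'+1))
            = (sgen cs (j'+1) * Ne cs j' * sgen cs (j'+1)) *
              (sgen cs (j'+1) * Ne cs (j'+1) * sgen cs (j'+1)) * sgen cs (j'+1) := by
              rw [show (sgen cs (j'+1) * Ne cs j' * sgen cs (j'+1)) *
                  (sgen cs (j'+1) * Ne cs (j'+1) * sgen cs (j'+1)) * sgen cs (j'+1)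
                  = sgen cs (j'+1) * Ne cs j' * (sgen cs (j'+1) * sgen cs (j'+1)) *
                    Ne cs (j'+1) * (sgen cs (j'+1) * sgen cs (j'+1))
                  from by simp only [mul_assoc], sgen_mul_self cs (j'+1), mul_one, mul_one]
              simp only [mul_assoc]
          _ = Ne cs (j'+1) * Ne cs j' * sgen cs (j'+1) := by rw [e1, e2]
          _ = Ne cs j' * Ne cs (j'+1) * sgen cs (j'+1) := by
              rw [(neg_comm cs (le_refl (j' + 1))).symm.eq]
      have hF : Fe cs (j' + 1 + 1) = Fe cs j' * (Ne cs j' * Ne cs (j'+1)) := by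
        show Fe cs (j'+1) * Ne cs (j'+1) = Fe cs j' * (Ne cs j' * Ne cs (j'+1))
        show Fe cs j' * Ne cs j' * Ne cs (j'+1) = Fe cs j' * (Ne cs j' * Ne cs (j'+1))
        rw [mul_assoc]
      rw [show Fe cs (j'+1) * Ne cs (j'+1) = Fe cs (j'+1+1) from rfl, hF]
      exact Commute.mul_right hlow hpair
  | succ k hk ih =>
    show Commute (sgen cs j) (Fe cs k * Ne cs k)
    exact Commute.mul_right (ih (by omega))
      (comm_s_neg_lt cs (show j + 1 ≤ k from by omega) (by omega))

lemma comm_tau_F {p k : ℕ} (h : p ≤ k) (hk : k ≤ n) : Commute (tau cs p) (Fe cs k) := by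
  induction p with
  | zero => rw [tau_zero]; exact Commute.one_left _
  | succ p ih =>
    rw [tau_succ]
    exact Commute.mul_left (ih (by omega)) (comm_s_F cs (by omega) hk)

lemma Nexp (j : ℕ) : Dw cs 1 j * tau cs (j + 1) = Ne cs j := by
  induction j with
  | zero =>
    show Dw cs 1 0 * tau cs 1 = Ne cs 0
    rw [show Dw cs 1 0 = (1 : W) from rfl, one_mul,
      show (1:ℕ) = 0 + 1 from rfl, tau_succ, tau_zero, one_mul]
    rfl
  | succ j ih =>
    show sgen cs (1 + j) * Dw cs 1 j * tau cs (j + 1 + 1) = Ne cs (j + 1)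
    rw [show (1:ℕ) + j = j + 1 from by omega, tau_succ, ← mul_assoc,
      mul_assoc (sgen cs (j+1)) (Dw cs 1 j) (tau cs (j+1)), ih]
    rfl

lemma powUnroll {q : ℕ} (m : ℕ) (hm : m ≤ q) (hq : q + 1 ≤ n) :
    tau cs (q + 1) ^ (m + 1) = Dw cs 1 m * tau cs (q + 1) * tau cs q ^ m := by
  induction m with
  | zero =>
    rw [pow_one, pow_zero, mul_one, show Dw cs 1 0 = (1:W) from rfl, one_mul]
  | succ m ih =>
    have hKB := KeyB cs 1 m (show 1 ≤ q from by omega) (le_refl 1) (by omega) (by omega)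
    -- hKB : tau (q+1) ^ (1+m) * tau q = Dw (m+1) 1 * tau (q+1) ^ (1+m+1)
    have hDw1 : Dw cs (m + 1) 1 = sgen cs (m + 1) := by
      show sgen cs (m + 1 + 0) * Dw cs (m + 1) 0 = sgen cs (m + 1)
      rw [show Dw cs (m + 1) 0 = (1:W) from rfl, mul_one, Nat.add_zero]
    rw [hDw1] at hKB
    have hstep : tau cs (q + 1) ^ (m + 1 + 1)
        = sgen cs (m + 1) * (tau cs (q + 1) ^ (m + 1) * tau cs q) := by
      rw [show (1:ℕ) + m = m + 1 from by omega] at hKB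
      rw [hKB, ← mul_assoc, sgen_mul_self cs (m + 1), one_mul,
        show m + 1 + 1 = 1 + m + 1 from by omega]
    rw [hstep, ih (by omega), show Dw cs 1 (m + 1) = sgen cs (1 + m) * Dw cs 1 m from rfl,
      show (1:ℕ) + m = m + 1 from by omega, pow_succ]
    simp only [← mul_assoc]

lemma tauPowSelf {q : ℕ} (hq : q ≤ n) : tau cs q ^ q = Fe cs q := by
  induction q with
  | zero => rw [pow_zero]; rfl
  | succ q ih =>
    rw [powUnroll cs q (le_refl q) hq, ih (by omega), Nexp cs q]
    show Ne cs q * Fe cs q = Fe cs (q + 1)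
    rw [(comm_neg_F cs (le_refl q)).eq]
    rfl

lemma tau_tors {q : ℕ} (hq : q ≤ n) : tau cs q ^ q * tau cs q ^ q = 1 := by
  rw [tauPowSelf cs hq]; exact F_sq cs q

lemma comm_tau_tauq {p q : ℕ} (h : p ≤ q) (hq : q ≤ n) :
    Commute (tau cs p) (tau cs q ^ q) := by
  rw [tauPowSelf cs hq]; exact comm_tau_F cs h hq

lemma i_nat {p q e : ℕ} (hp : 1 ≤ p) (he : 1 ≤ e) (hpe : p + e ≤ q) (hq : q ≤ n) :
    ∀ rp : ℕ, 1 ≤ rp → rp < p →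
    tau cs q ^ e * tau cs p ^ rp
      = (tau cs e ^ e)⁻¹ * tau cs (e + rp) ^ e * tau cs (p + e) ^ rp * tau cs q ^ e := by
  intro rp hrp1
  induction rp, hrp1 using Nat.le_induction with
  | base =>
    intro hrp2
    have hREC := REC2 cs e hp he (by omega) hq
    have hW2 := W2 cs e 0 (by omega)
    rw [Nat.zero_add, Nat.zero_add] at hW2
    have hDw : Dw cs 1 e = (tau cs e ^ e)⁻¹ * tau cs (e + 1) ^ e := by
      rw [hW2, ← mul_assoc, inv_mul_cancel, one_mul]
    rw [pow_one, pow_one, hREC, hDw]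
  | succ rp hrp ih =>
    intro hrp2
    have ihe := ih (by omega)
    have hREC := REC2 cs e hp he (by omega) hq
    have hshift : tau cs (p + e) ^ rp * Dw cs 1 e = Dw cs (1 + rp) e * tau cs (p + e) ^ rp :=
      shiftPowDw cs rp e (le_refl 1) (by omega) (by omega)
    have hW2 : tau cs (rp + e + 1) ^ e = tau cs (rp + e) ^ e * Dw cs (rp + 1) e :=
      W2 cs e rp (by omega)
    calc tau cs q ^ e * tau cs p ^ (rp + 1)
        = tau cs q ^ e * tau cs p ^ rp * tau cs p := by rw [pow_succ, ← mul_assoc]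
      _ = (tau cs e ^ e)⁻¹ * tau cs (e + rp) ^ e * tau cs (p + e) ^ rp *
            (tau cs q ^ e * tau cs p) := by rw [ihe]; simp only [← mul_assoc]
      _ = (tau cs e ^ e)⁻¹ * tau cs (e + rp) ^ e * (tau cs (p + e) ^ rp * Dw cs 1 e) *
            tau cs (p + e) * tau cs q ^ e := by rw [hREC]; simp only [← mul_assoc]
      _ = (tau cs e ^ e)⁻¹ * (tau cs (e + rp) ^ e * Dw cs (1 + rp) e) *
            (tau cs (p + e) ^ rp * tau cs (p + e)) * tau cs q ^ e := by
          rw [hshift]; simp only [← mul_assoc]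
      _ = (tau cs e ^ e)⁻¹ * tau cs (e + (rp + 1)) ^ e * tau cs (p + e) ^ (rp + 1) *
            tau cs q ^ e := by
          rw [show (1:ℕ) + rp = rp + 1 from by omega, show e + rp = rp + e from by omega,
            ← hW2, show rp + e + 1 = e + (rp + 1) from by omega, ← pow_succ]

lemma ii_nat {p q e : ℕ} (hp : 1 ≤ p) (hpq : p < q) (hq : q ≤ n) (he : 1 ≤ e)
    (hqpe : q ≤ p + e) :
    ∀ rp : ℕ, 1 ≤ rp → rp < p → rp + e ≤ q →
    tau cs q ^ e * tau cs p ^ rp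
      = (tau cs e ^ (q - p))⁻¹ * tau cs (e + rp) ^ (q - p) * tau cs q ^ (e + rp) := by
  intro rp hrp1
  induction rp, hrp1 using Nat.le_induction with
  | base =>
    intro hrp2 hrpe
    have hB2 := B2 cs e hp hpq hq hqpe (by omega)
    rw [pow_one, hB2]
  | succ rp hrp ih =>
    intro hrp2 hrpe
    have ihe := ih (by omega) (by omega)
    have hB2 := B2 cs (e + rp) hp hpq hq (by omega) (by omega)
    calc tau cs q ^ e * tau cs p ^ (rp + 1)
        = tau cs q ^ e * tau cs p ^ rp * tau cs p := by rw [pow_succ, ← mul_assoc]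
      _ = (tau cs e ^ (q - p))⁻¹ * tau cs (e + rp) ^ (q - p) *
            (tau cs q ^ (e + rp) * tau cs p) := by rw [ihe]; simp only [← mul_assoc]
      _ = (tau cs e ^ (q - p))⁻¹ * (tau cs (e + rp) ^ (q - p) *
            (tau cs (e + rp) ^ (q - p))⁻¹) * tau cs (e + rp + 1) ^ (q - p) *
            tau cs q ^ (e + rp + 1) := by rw [hB2]; simp only [← mul_assoc]
      _ = (tau cs e ^ (q - p))⁻¹ * tau cs (e + (rp + 1)) ^ (q - p) *
            tau cs q ^ (e + (rp + 1)) := by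
          rw [mul_inv_cancel, mul_one, show e + rp + 1 = e + (rp + 1) from by omega]

lemma iii_aux {p e c d : ℕ} (hp : 1 ≤ p) (hd : 1 ≤ d) (hc : 1 ≤ c) (hcd : d < e)
    (hsum : e + c = p + d) (hq : p + d ≤ n) :
    ∀ u : ℕ, c + u < p →
    tau cs (p + d) ^ e * tau cs p ^ (c + u)
      = tau cs (e - d) ^ u * (tau cs e ^ (d + u))⁻¹ * (tau cs (p + d) ^ (p - u))⁻¹ := by
  intro u
  induction u with
  | zero =>
    intro hu
    have h1 := ii_nat cs hp (show p < p + d from by omega) hq (show 1 ≤ e from by omega)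
      (show p + d ≤ p + e from by omega) c hc (by omega) (by omega)
    rw [show p + d - p = d from by omega, hsum] at h1
    rw [Nat.add_zero, Nat.add_zero, Nat.sub_zero, pow_zero, one_mul, h1]
    have ht : tau cs (p + d) ^ d * tau cs (p + d) ^ (p + d) * tau cs (p + d) ^ p = 1 := by
      rw [← pow_add, ← pow_add, show d + (p + d) + p = (p + d) + (p + d) from by omega,
        pow_add]
      exact tau_tors cs hq
    have ht2 : tau cs (p + d) ^ d * tau cs (p + d) ^ (p + d) = (tau cs (p + d) ^ p)⁻¹ :=
      eq_inv_of_mul_eq_one_left ht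
    rw [mul_assoc, ht2]
  | succ u ih =>
    intro hu
    have ihe := ih (by omega)
    have hB2 := B2 cs (d + u) hp (show p < p + d from by omega) hq (by omega) (by omega)
    rw [show p + d - p = d from by omega] at hB2
    have hW2 := W2 cs d u (by omega)
    have hDw : Dw cs (u + 1) d = (tau cs (u + d) ^ d)⁻¹ * tau cs (u + d + 1) ^ d := by
      rw [hW2, ← mul_assoc, inv_mul_cancel, one_mul]
    have hKB := KeyB cs (p := e - d) d u (by omega) hd (by omega) (by omega)
    rw [show e - d + d = e from by omega, hDw, show u + d = d + u from by omega] at hKB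
    -- hKB : τ_e^{d+u} * τ_{e-d} = (τ_{d+u}^d)⁻¹ * τ_{d+u+1}^d * τ_e^{d+u+1}
    have f5 : (tau cs e ^ (d + u))⁻¹ * ((tau cs (d + u) ^ d)⁻¹ * tau cs (d + u + 1) ^ d)
        = tau cs (e - d) * (tau cs e ^ (d + u + 1))⁻¹ := by
      calc (tau cs e ^ (d + u))⁻¹ * ((tau cs (d + u) ^ d)⁻¹ * tau cs (d + u + 1) ^ d)
          = (tau cs e ^ (d + u))⁻¹ *
              ((tau cs (d + u) ^ d)⁻¹ * tau cs (d + u + 1) ^ d * tau cs e ^ (d + u + 1)) *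
              (tau cs e ^ (d + u + 1))⁻¹ := by
            have cancel : ∀ a b g : W, a * b = a * (b * g) * g⁻¹ := fun a b g => by
              rw [mul_assoc, mul_assoc, mul_inv_cancel, mul_one]
            exact cancel _ _ _
          _ = (tau cs e ^ (d + u))⁻¹ * (tau cs e ^ (d + u) * tau cs (e - d)) *
              (tau cs e ^ (d + u + 1))⁻¹ := by rw [← hKB]
          _ = tau cs (e - d) * (tau cs e ^ (d + u + 1))⁻¹ := by
            simp only [← mul_assoc]
            rw [inv_mul_cancel, one_mul]
    have f1 : (tau cs (p + d) ^ (p - u))⁻¹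
        = (tau cs (p + d) ^ (p + d))⁻¹ * tau cs (p + d) ^ (d + u) := by
      apply inv_eq_of_mul_eq_one_left
      rw [mul_assoc, ← pow_add, show d + u + (p - u) = p + d from by omega, inv_mul_cancel]
    have f4 : (tau cs (p + d) ^ (p - u - 1))⁻¹
        = (tau cs (p + d) ^ (p + d))⁻¹ * tau cs (p + d) ^ (d + u + 1) := by
      apply inv_eq_of_mul_eq_one_left
      rw [mul_assoc, ← pow_add, show d + u + 1 + (p - u - 1) = p + d from by omega,
        inv_mul_cancel]
    have c1 : Commute ((tau cs (p + d) ^ (p + d))⁻¹)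
        ((tau cs (d + u) ^ d)⁻¹ * tau cs (d + u + 1) ^ d) := by
      refine Commute.mul_right ?_ ?_
      · exact (((comm_tau_tauq cs (show d + u ≤ p + d from by omega) hq).pow_left
          d).inv_left.inv_right).symm
      · exact (((comm_tau_tauq cs (show d + u + 1 ≤ p + d from by omega) hq).pow_left
          d).inv_right).symm
    calc tau cs (p + d) ^ e * tau cs p ^ (c + (u + 1))
        = tau cs (p + d) ^ e * tau cs p ^ (c + u) * tau cs p := by
          rw [show c + (u + 1) = (c + u) + 1 from by omega, pow_succ, ← mul_assoc]
      _ = tau cs (e - d) ^ u * (tau cs e ^ (d + u))⁻¹ *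
            ((tau cs (p + d) ^ (p - u))⁻¹ * tau cs p) := by rw [ihe]; simp only [← mul_assoc]
      _ = tau cs (e - d) ^ u * (tau cs e ^ (d + u))⁻¹ *
            ((tau cs (p + d) ^ (p + d))⁻¹ * (tau cs (p + d) ^ (d + u) * tau cs p)) := by
          rw [f1]; simp only [← mul_assoc]
      _ = tau cs (e - d) ^ u * (tau cs e ^ (d + u))⁻¹ *
            ((tau cs (p + d) ^ (p + d))⁻¹ *
              ((tau cs (d + u) ^ d)⁻¹ * tau cs (d + u + 1) ^ d * tau cs (p + d) ^ (d + u + 1))) := by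
          rw [hB2]
      _ = tau cs (e - d) ^ u * ((tau cs e ^ (d + u))⁻¹ *
            ((tau cs (d + u) ^ d)⁻¹ * tau cs (d + u + 1) ^ d)) *
            ((tau cs (p + d) ^ (p + d))⁻¹ * tau cs (p + d) ^ (d + u + 1)) := by
          rw [show (tau cs (p + d) ^ (p + d))⁻¹ *
              ((tau cs (d + u) ^ d)⁻¹ * tau cs (d + u + 1) ^ d * tau cs (p + d) ^ (d + u + 1))
              = (tau cs (p + d) ^ (p + d))⁻¹ *
                ((tau cs (d + u) ^ d)⁻¹ * tau cs (d + u + 1) ^ d) * tau cs (p + d) ^ (d + u + 1)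
            from by simp only [← mul_assoc], c1.eq]
          simp only [← mul_assoc]
      _ = tau cs (e - d) ^ u * (tau cs (e - d) * (tau cs e ^ (d + u + 1))⁻¹) *
            (tau cs (p + d) ^ (p - u - 1))⁻¹ := by rw [f5, f4]
      _ = tau cs (e - d) ^ (u + 1) * (tau cs e ^ (d + (u + 1)))⁻¹ *
            (tau cs (p + d) ^ (p - (u + 1)))⁻¹ := by
          rw [show d + (u + 1) = d + u + 1 from by omega, show p - (u + 1) = p - u - 1
            from by omega, pow_succ (tau cs (e - d)) u]
          simp only [← mul_assoc]

end ExchAux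

/-- The exchange laws for `τ_q^{r_q} · τ_p^{r_p}` with `0 < r_q < q`, `0 < r_p < p`. -/
theorem exchange_laws_pos (cs : CoxeterSystem (BCoxeterMatrix n) W)
    (p q : ℕ) (hp : 1 ≤ p) (hpq : p < q) (hq : q ≤ n)
    (rq rp : ℕ) (hrq : 0 < rq ∧ rq < q) (hrp : 0 < rp ∧ rp < p) :
    (p + rq ≤ q →
      tau cs q ^ (rq : ℤ) * tau cs p ^ (rp : ℤ) =
        tau cs rq ^ (-(rq : ℤ)) * tau cs (rq + rp) ^ (rq : ℤ) *
          tau cs (p + rq) ^ (rp : ℤ) * tau cs q ^ (rq : ℤ)) ∧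
    (rp + rq ≤ q ∧ q ≤ p + rq →
      tau cs q ^ (rq : ℤ) * tau cs p ^ (rp : ℤ) =
        tau cs rq ^ ((p : ℤ) - q) * tau cs (rq + rp) ^ ((q : ℤ) - p) *
          tau cs q ^ ((rq : ℤ) + rp)) ∧
    (q ≤ rp + rq →
      tau cs q ^ (rq : ℤ) * tau cs p ^ (rp : ℤ) =
        tau cs (p + rq - q) ^ ((rq : ℤ) + rp - q) * tau cs rq ^ ((p : ℤ) - rp - rq) *
          tau cs q ^ ((rq : ℤ) + rp - p - q)) := by

  obtain ⟨hrq1, hrq2⟩ := hrq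
  obtain ⟨hrp1, hrp2⟩ := hrp
  refine ⟨?_, ?_, ?_⟩
  · intro h
    have key := ExchAux.i_nat cs hp hrq1 h hq rp hrp1 hrp2
    simp only [zpow_neg, zpow_natCast]
    exact key
  · rintro ⟨h1, h2⟩
    have key := ExchAux.ii_nat cs hp hpq hq hrq1 h2 rp hrp1 hrp2 (by omega)
    rw [show (p : ℤ) - q = -(((q - p : ℕ) : ℤ)) from by omega,
      show (q : ℤ) - p = ((q - p : ℕ) : ℤ) from by omega,
      show (rq : ℤ) + rp = ((rq + rp : ℕ) : ℤ) from by omega]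
    simp only [zpow_neg, zpow_natCast]
    exact key
  · intro h
    have key := ExchAux.iii_aux cs (p := p) (e := rq) (c := q - rq) (d := q - p)
      hp (by omega) (by omega) (by omega) (by omega) (by omega) (rp - (q - rq)) (by omega)
    rw [show p + (q - p) = q from by omega,
      show q - rq + (rp - (q - rq)) = rp from by omega] at key
    rw [show (rq : ℤ) + rp - q = ((rp - (q - rq) : ℕ) : ℤ) from by omega,
      show (p : ℤ) - rp - rq = -(((q - p + (rp - (q - rq)) : ℕ) : ℤ)) from by omega,
      show (rq : ℤ) + rp - p - q = -(((p - (rp - (q - rq)) : ℕ) : ℤ)) from by omega,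
      show p + rq - q = rq - (q - p) from by omega]
    simp only [zpow_neg, zpow_natCast]
    exact key
end

section
/- Let 1 ≤ p < q ≤ n and let r_q be an integer with 0 < r_q < q. Then the following exchange laws hold in W: (i) if q − r_q ≥ p then τ_q^{r_q}·τ_p^{−p} = τ_{r_q}^{−r_q}·τ_{p+r_q}^{−p−r_q}·τ_q^{r_q}; (ii) if q − r_q < p then τ_q^{r_q}·τ_p^{−p} = τ_{p+r_q−q}^{−p−r_q+q}·τ_{r_q}^{−r_q}·τ_q^{r_q−q}. -/
variable {n : ℕ} {W : Type*} [Group W]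

/-!
Put `t_j = s_j ⋯ s_1 s_0 s_1 ⋯ s_j` and `σ = s_1 ⋯ s_{q-1}`, so that `τ_q = t_0 σ`. Conjugation
by `σ` sends `t_j` to `t_{j+1}` for `j + 1 < q`, and `σ^q = 1` because `σ` is a Coxeter element
of type `A_{q-1}`. Telescoping gives `τ_q^k = t_0 ⋯ t_{k-1} · σ^k` for `k ≤ q`; in particular
`τ_k^k = t_0 ⋯ t_{k-1}`. The `t_j` are commuting involutions (conjugating by a power of `σ`
reduces `t_i t_j = t_j t_i` to `t_0 t_j = t_j t_0`, which comes from `(s_0 s_1)^4 = 1`), so each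
`τ_k^k` is an involution and `τ_q^q` commutes with `t_0` and hence with `σ`. The exchange laws
are a formal consequence of these identities.
-/

section Group

variable {G : Type*} [Group G]

theorem conj_pow_eq_of_conj_eq_succ {g : G} {f : ℕ → G} {m : ℕ}
    (hf : ∀ j, j + 1 < m → g * f j * g⁻¹ = f (j + 1)) :
    ∀ i j, i + j < m → g ^ i * f j * (g ^ i)⁻¹ = f (i + j)
  | 0, j, _ => by simp
  | i + 1, j, h => by
    calc g ^ (i + 1) * f j * (g ^ (i + 1))⁻¹ = g ^ i * (g * f j * g⁻¹) * (g ^ i)⁻¹ := by group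
      _ = f (i + 1 + j) := by
        rw [hf j (by omega), conj_pow_eq_of_conj_eq_succ hf i (j + 1) (by omega),
          Nat.add_right_comm, add_assoc]

theorem list_prod_map_range_mul_pow {g : G} {f : ℕ → G} {m : ℕ}
    (hf : ∀ j, j + 1 < m → g * f j * g⁻¹ = f (j + 1)) :
    ((List.range m).map f).prod * g ^ m = (f 0 * g) ^ m := by
  induction m with
  | zero => simp
  | succ m ih =>
    have hfm := conj_pow_eq_of_conj_eq_succ hf m 0 (by omega)
    rw [add_zero] at hfm
    rw [List.prod_range_succ, ← hfm, pow_succ (f 0 * g), ← ih fun j hj ↦ hf j (by omega)]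
    group

section Exchange

variable {a b : G} {U : ℕ → G} {q : ℕ}

theorem exchange_of_add_le (hpow : ∀ k ≤ q, a ^ k = U k * b ^ k) {p r : ℕ} (hpr : p + r ≤ q)
    (hr : (U r)⁻¹ = U r) :
    a ^ r * (U p)⁻¹ = (U r)⁻¹ * (U (p + r))⁻¹ * a ^ r := by
  have hU : ∀ k ≤ q, U k = a ^ k * (b ^ k)⁻¹ := fun k hk ↦ eq_mul_inv_of_mul_eq (hpow k hk).symm
  rw [hr, hU p (by omega), hU r (by omega), hU (p + r) hpr]
  group

theorem exchange_of_le_add (hpow : ∀ k ≤ q, a ^ k = U k * b ^ k)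
    (hinv : ∀ k ≤ q, (U k)⁻¹ = U k) (hb : b ^ q = 1) (hUb : Commute (U q) b)
    {p r k : ℕ} (hp : p ≤ q) (hr : r ≤ q) (hk : p + r = k + q) :
    a ^ r * (U p)⁻¹ = (U k)⁻¹ * (U r)⁻¹ * a ^ r * (a ^ q)⁻¹ := by
  have haq : a ^ q = U q := by rw [hpow q le_rfl, hb, mul_one]
  have hbk : b ^ k = b ^ r * b ^ p := by rw [← pow_add, add_comm, hk, pow_add, hb, mul_one]
  calc a ^ r * (U p)⁻¹ = a ^ (k + q) * (b ^ p)⁻¹ := by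
        rw [hinv p hp, ← hk, ← mul_inv_eq_iff_eq_mul.mpr (hpow p hp)]
        group
    _ = U k * U q * b ^ r := by
        rw [pow_add, hpow k (by omega), haq, mul_assoc (U k), ← (hUb.pow_right k).eq, hbk]
        group
    _ = (U k)⁻¹ * (U r)⁻¹ * a ^ r * (a ^ q)⁻¹ := by
        rw [hinv k (by omega), haq, hinv q le_rfl, hpow r hr, mul_assoc, (hUb.pow_right r).eq]
        group

end Exchange

end Group

theorem CoxeterSystem.wordProd_alternatingWord_eq_of_M_eq {B : Type*} {M : CoxeterMatrix B}
    (cs : CoxeterSystem M W) {i j : B} {m : ℕ} (hm : M i j = m) :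
    cs.wordProd (alternatingWord i j m) = cs.wordProd (alternatingWord j i m) := by
  have := cs.wordProd_braidWord_eq i j
  rwa [braidWord, braidWord, M.symmetric j, hm] at this

section TypeB

variable (cs : CoxeterSystem (BCoxeterMatrix n) W)

local notation "s" => sgen cs

theorem sgen_of_le {j : ℕ} (hj : n ≤ j) : s j = 1 := dif_neg (by omega)

theorem sgen_mul_self (j : ℕ) : s j * s j = 1 := by
  unfold sgen
  split
  · exact cs.simple_mul_simple_self _
  · simp

theorem sgen_inv (j : ℕ) : (s j)⁻¹ = s j := inv_eq_of_mul_eq_one_right (sgen_mul_self cs j)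

theorem commute_sgen {i j : ℕ} (h : i + 2 ≤ j) : Commute (s i) (s j) := by
  by_cases hj : j < n
  · have := cs.wordProd_alternatingWord_eq_of_M_eq (i := ⟨i, by omega⟩) (j := ⟨j, hj⟩) (m := 2)
      (by simp only [BCoxeterMatrix, Matrix.of_apply, Fin.mk.injEq]; split_ifs <;> omega)
    rw [commute_iff_eq]
    simpa [CoxeterSystem.alternatingWord, CoxeterSystem.wordProd, sgen, hj, (by omega : i < n)]
      using this
  · rw [sgen_of_le cs (j := j) (by omega)]
    exact Commute.one_right _

theorem sgen_braid {i : ℕ} (h1 : 1 ≤ i) (hi : i + 1 < n) :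
    s i * s (i + 1) * s i = s (i + 1) * s i * s (i + 1) := by
  have := cs.wordProd_alternatingWord_eq_of_M_eq (i := ⟨i, by omega⟩) (j := ⟨i + 1, hi⟩) (m := 3)
    (by simp [BCoxeterMatrix, Nat.one_le_iff_ne_zero.mp h1])
  simpa [CoxeterSystem.alternatingWord, CoxeterSystem.wordProd, sgen, hi, (by omega : i < n),
    mul_assoc] using this.symm

theorem sgen_braid_zero_one : s 0 * s 1 * s 0 * s 1 = s 1 * s 0 * s 1 * s 0 := by
  by_cases hi : 1 < n
  · have := cs.wordProd_alternatingWord_eq_of_M_eq (i := ⟨0, by omega⟩) (j := ⟨1, hi⟩) (m := 4)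
      (by simp [BCoxeterMatrix])
    simpa [CoxeterSystem.alternatingWord, CoxeterSystem.wordProd, sgen, hi, (by omega : 0 < n),
      mul_assoc] using this
  · simp [sgen_of_le cs (by omega : n ≤ 1), sgen_mul_self]

/-- For `a ≥ 1`, a Coxeter element of the type `A_l` parabolic subgroup on `s_a, …, s_{a+l-1}`. -/
def sgenProd (a l : ℕ) : W := ((List.range l).map fun j ↦ s (a + j)).prod

theorem tau_succ (m : ℕ) : tau cs (m + 1) = s 0 * sgenProd cs 1 m := by
  simp [tau, sgenProd, List.range_succ_eq_map, add_comm, Function.comp_def]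

theorem sgenProd_succ (a l : ℕ) : sgenProd cs a (l + 1) = sgenProd cs a l * s (a + l) :=
  List.prod_range_succ _ _

theorem sgenProd_succ' (a l : ℕ) : sgenProd cs a (l + 1) = s a * sgenProd cs (a + 1) l := by
  simp [sgenProd, List.prod_range_succ', add_assoc, add_comm 1]

theorem sgenProd_add (a l m : ℕ) :
    sgenProd cs a (l + m) = sgenProd cs a l * sgenProd cs (a + l) m := by
  simp [sgenProd, List.range_add, add_assoc, Function.comp_def]

theorem commute_sgen_sgenProd {k a l : ℕ} (h : k + 2 ≤ a ∨ a + l + 1 ≤ k) :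
    Commute (s k) (sgenProd cs a l) := by
  refine Commute.list_prod_right _ _ ?_
  simp only [List.mem_map, List.mem_range]
  rintro _ ⟨j, hj, rfl⟩
  rcases h with h | h
  · exact commute_sgen cs (by omega)
  · exact (commute_sgen cs (by omega)).symm

theorem sgenProd_conj_sgen {a l j : ℕ} (ha : 1 ≤ a) (hl : a + l ≤ n) (hj : j + 1 < l) :
    sgenProd cs a l * s (a + j) * (sgenProd cs a l)⁻¹ = s (a + (j + 1)) := by
  obtain ⟨e, rfl⟩ : ∃ e, l = j + 2 + e := ⟨l - (j + 2), by omega⟩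
  have hsplit : sgenProd cs a (j + 2 + e) =
      sgenProd cs a j * (s (a + j) * s (a + (j + 1))) * sgenProd cs (a + (j + 2)) e := by
    rw [sgenProd_add, sgenProd_succ, sgenProd_succ, mul_assoc (sgenProd cs a j)]
  have hR : sgenProd cs (a + (j + 2)) e * s (a + j) = s (a + j) * sgenProd cs (a + (j + 2)) e :=
    (commute_sgen_sgenProd cs (by omega)).eq.symm
  have hP : sgenProd cs a j * s (a + (j + 1)) = s (a + (j + 1)) * sgenProd cs a j :=
    (commute_sgen_sgenProd cs (by omega)).eq.symm
  have hbraid := sgen_braid cs (i := a + j) (by omega) (by omega)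
  rw [← add_assoc] at hP ⊢
  rw [hsplit]
  calc _ = sgenProd cs a j * (s (a + j) * s (a + j + 1) * s (a + j)) *
        (s (a + j) * s (a + j + 1))⁻¹ * (sgenProd cs a j)⁻¹ := by
        rw [mul_assoc _ _ (s (a + j)), hR]
        group
    _ = sgenProd cs a j * s (a + j + 1) * (sgenProd cs a j)⁻¹ := by
        rw [hbraid]
        group
    _ = s (a + j + 1) := by
        rw [hP]
        group

theorem sgenProd_pow_succ {a l : ℕ} (ha : 1 ≤ a) (hl : a + l ≤ n) :
    sgenProd cs a l ^ (l + 1) = 1 := by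
  induction l generalizing a with
  | zero => simp [sgenProd]
  | succ l ih =>
    -- `c := s_a ⋯ s_{a+l}` conjugates `s_a` successively to `s_{a+1}, …, s_{a+l}`, so
    -- `c · c^(l+1) = (s_a c)^(l+1)`, and `s_a c = s_{a+1} ⋯ s_{a+l}`.
    have key := list_prod_map_range_mul_pow (m := l + 1) (g := sgenProd cs a (l + 1))
      (f := fun j ↦ s (a + j)) fun j hj ↦ sgenProd_conj_sgen cs ha hl hj
    rw [← sgenProd, add_zero, sgenProd_succ' cs a l, ← mul_assoc, sgen_mul_self, one_mul,
      ih (by omega) (by omega), ← sgenProd_succ', ← pow_succ'] at key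
    exact key

/-- In the signed-permutation model of `Bₙ`, the sign change of the `(j+1)`-st coordinate. -/
def signFlip : ℕ → W
  | 0 => s 0
  | j + 1 => s (j + 1) * signFlip j * s (j + 1)

theorem sgenProd_conj_signFlip {m j : ℕ} (hm : m + 1 ≤ n) (hj : j < m) :
    sgenProd cs 1 m * signFlip cs j * (sgenProd cs 1 m)⁻¹ = signFlip cs (j + 1) := by
  induction j with
  | zero =>
    obtain ⟨m, rfl⟩ : ∃ m', m = m' + 1 := ⟨m - 1, by omega⟩
    have hR : Commute (s 0) (sgenProd cs (1 + 1) m) := commute_sgen_sgenProd cs (by omega)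
    rw [sgenProd_succ']
    show (s 1 * sgenProd cs (1 + 1) m) * s 0 * (s 1 * sgenProd cs (1 + 1) m)⁻¹ = s 1 * s 0 * s 1
    rw [mul_assoc (s 1), ← hR.eq, mul_inv_rev, sgen_inv]
    group
  | succ j ih =>
    have hs := sgenProd_conj_sgen cs (a := 1) (l := m) (j := j) le_rfl (by omega) (by omega)
    rw [add_comm 1 j, add_comm 1 (j + 1)] at hs
    calc _ = (sgenProd cs 1 m * s (j + 1) * (sgenProd cs 1 m)⁻¹) *
          (sgenProd cs 1 m * signFlip cs j * (sgenProd cs 1 m)⁻¹) *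
          (sgenProd cs 1 m * s (j + 1) * (sgenProd cs 1 m)⁻¹) := by
          rw [signFlip]
          group
      _ = signFlip cs (j + 2) := by
          rw [hs, ih (by omega)]
          rfl

theorem commute_signFlip_zero : ∀ k, Commute (signFlip cs 0) (signFlip cs k)
  | 0 => Commute.refl _
  | 1 => by
    show Commute (s 0) (s 1 * s 0 * s 1)
    rw [commute_iff_eq, ← mul_assoc, ← mul_assoc, sgen_braid_zero_one]
  | k + 2 => by
    show Commute (s 0) (s (k + 2) * signFlip cs (k + 1) * s (k + 2))
    exact ((commute_sgen cs (by omega)).mul_right (commute_signFlip_zero (k + 1))).mul_right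
      (commute_sgen cs (by omega))

theorem commute_signFlip {i j : ℕ} (hi : i < n) (hj : j < n) :
    Commute (signFlip cs i) (signFlip cs j) := by
  wlog hij : i ≤ j generalizing i j
  · exact (this hj hi (by omega)).symm
  obtain ⟨m, rfl⟩ : ∃ m, n = m + 1 := ⟨n - 1, by omega⟩
  have hconj := conj_pow_eq_of_conj_eq_succ (m := m + 1) (g := sgenProd cs 1 m)
    (f := signFlip cs) fun j hj ↦ sgenProd_conj_signFlip cs le_rfl (by omega)
  have hi' := hconj i 0 (by omega)
  have hj' := hconj i (j - i) (by omega)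
  rw [add_zero] at hi'
  rw [Nat.add_sub_cancel' hij] at hj'
  rw [← hi', ← hj', Commute.conj_iff]
  exact commute_signFlip_zero cs _

/-- `t_0 ⋯ t_{k-1}`, the longest element `-1` of `B_k`. -/
def signFlipProd (k : ℕ) : W := ((List.range k).map (signFlip cs)).prod

theorem commute_signFlip_signFlipProd {j k : ℕ} (hj : j < n) (hk : k ≤ n) :
    Commute (signFlip cs j) (signFlipProd cs k) := by
  refine Commute.list_prod_right _ _ ?_
  simp only [List.mem_map, List.mem_range]
  rintro _ ⟨i, hi, rfl⟩
  exact commute_signFlip cs hj (by omega)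

theorem signFlip_mul_self : ∀ j, signFlip cs j * signFlip cs j = 1
  | 0 => sgen_mul_self cs 0
  | j + 1 => by
    calc signFlip cs (j + 1) * signFlip cs (j + 1)
        = s (j + 1) * (signFlip cs j * (s (j + 1) * s (j + 1)) * signFlip cs j) * s (j + 1) := by
          rw [signFlip]
          group
      _ = 1 := by rw [sgen_mul_self, mul_one, signFlip_mul_self j, mul_one, sgen_mul_self]

theorem signFlipProd_mul_self {k : ℕ} (hk : k ≤ n) :
    signFlipProd cs k * signFlipProd cs k = 1 := by
  induction k with
  | zero => simp [signFlipProd]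
  | succ k ih =>
    have hc := commute_signFlip_signFlipProd cs (j := k) (k := k) (by omega) (by omega)
    calc signFlipProd cs (k + 1) * signFlipProd cs (k + 1)
        = signFlipProd cs k * (signFlip cs k * signFlipProd cs k) * signFlip cs k := by
          rw [signFlipProd, List.prod_range_succ, ← signFlipProd]
          group
      _ = 1 := by
          rw [hc.eq, ← mul_assoc, ih (by omega), one_mul, signFlip_mul_self]

theorem tau_pow_eq_signFlipProd_mul {m k : ℕ} (hm : m + 1 ≤ n) (hk : k ≤ m + 1) :
    tau cs (m + 1) ^ k = signFlipProd cs k * sgenProd cs 1 m ^ k := by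
  rw [signFlipProd, tau_succ, list_prod_map_range_mul_pow (f := signFlip cs)
    fun j hj ↦ sgenProd_conj_signFlip cs hm (by omega)]
  rfl

theorem tau_pow_self {k : ℕ} (hk : k ≤ n) : tau cs k ^ k = signFlipProd cs k := by
  cases k with
  | zero => simp [signFlipProd]
  | succ m =>
    rw [tau_pow_eq_signFlipProd_mul cs hk le_rfl, sgenProd_pow_succ cs le_rfl (by omega), mul_one]

theorem tau_pow_self_inv {k : ℕ} (hk : k ≤ n) : (tau cs k ^ k)⁻¹ = tau cs k ^ k :=
  inv_eq_of_mul_eq_one_right <| by rw [tau_pow_self cs hk, signFlipProd_mul_self cs hk]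

theorem commute_tau_pow_self_sgenProd {m : ℕ} (hm : m + 1 ≤ n) :
    Commute (tau cs (m + 1) ^ (m + 1)) (sgenProd cs 1 m) := by
  have hσ : sgenProd cs 1 m = s 0 * tau cs (m + 1) := by
    rw [tau_succ, ← mul_assoc, sgen_mul_self, one_mul]
  have h0 : Commute (tau cs (m + 1) ^ (m + 1)) (s 0) := by
    rw [tau_pow_self cs hm]
    exact (commute_signFlip_signFlipProd cs (j := 0) (by omega) hm).symm
  rw [hσ]
  exact h0.mul_right (Commute.self_pow _ _).symm

end TypeB

theorem exchange_laws_neg_full_general (cs : CoxeterSystem (BCoxeterMatrix n) W)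
    (p q : ℕ) (hpq : p < q) (hq : q ≤ n)
    (rq : ℕ) (hrq : 0 < rq ∧ rq < q) :
    (p + rq ≤ q →
      tau cs q ^ (rq : ℤ) * tau cs p ^ (-(p : ℤ)) =
        tau cs rq ^ (-(rq : ℤ)) * tau cs (p + rq) ^ (-((p : ℤ) + rq)) *
          tau cs q ^ (rq : ℤ)) ∧
    (q < p + rq →
      tau cs q ^ (rq : ℤ) * tau cs p ^ (-(p : ℤ)) =
        tau cs (p + rq - q) ^ (-(p : ℤ) - rq + q) * tau cs rq ^ (-(rq : ℤ)) *
          tau cs q ^ ((rq : ℤ) - q)) := by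
  obtain ⟨m, rfl⟩ : ∃ m, q = m + 1 := ⟨q - 1, by omega⟩
  have hpow : ∀ k ≤ m + 1, tau cs (m + 1) ^ k = tau cs k ^ k * sgenProd cs 1 m ^ k :=
    fun k hk ↦ by rw [tau_pow_self cs (by omega), tau_pow_eq_signFlipProd_mul cs hq hk]
  have hinv : ∀ k ≤ m + 1, (tau cs k ^ k)⁻¹ = tau cs k ^ k :=
    fun k hk ↦ tau_pow_self_inv cs (by omega)
  have hneg : ∀ k : ℕ, tau cs k ^ (-(k : ℤ)) = (tau cs k ^ k)⁻¹ := fun k ↦ by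
    rw [zpow_neg, zpow_natCast]
  refine ⟨fun h ↦ ?_, fun h ↦ ?_⟩
  · rw [← Nat.cast_add, hneg, hneg, hneg, zpow_natCast]
    exact exchange_of_add_le hpow h (hinv rq (by omega))
  · rw [show -(p : ℤ) - rq + (m + 1 : ℕ) = -((p + rq - (m + 1) : ℕ) : ℤ) by omega,
      hneg, hneg, hneg, zpow_sub, zpow_natCast, zpow_natCast, ← mul_assoc]
    exact exchange_of_le_add (p := p) (r := rq) (k := p + rq - (m + 1)) hpow hinv
      (sgenProd_pow_succ cs le_rfl (by omega)) (commute_tau_pow_self_sgenProd cs hq)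
      (by omega) (by omega) (by omega)

/-- The exchange laws for `τ_q^{r_q} · τ_p^{-p}` with `0 < r_q < q`. -/
theorem exchange_laws_neg_full (cs : CoxeterSystem (BCoxeterMatrix n) W)
    (p q : ℕ) (hp : 1 ≤ p) (hpq : p < q) (hq : q ≤ n)
    (rq : ℕ) (hrq : 0 < rq ∧ rq < q) :
    (p + rq ≤ q →
      tau cs q ^ (rq : ℤ) * tau cs p ^ (-(p : ℤ)) =
        tau cs rq ^ (-(rq : ℤ)) * tau cs (p + rq) ^ (-((p : ℤ) + rq)) *
          tau cs q ^ (rq : ℤ)) ∧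
    (q < p + rq →
      tau cs q ^ (rq : ℤ) * tau cs p ^ (-(p : ℤ)) =
        tau cs (p + rq - q) ^ (-(p : ℤ) - rq + q) * tau cs rq ^ (-(rq : ℤ)) *
          tau cs q ^ ((rq : ℤ) - q)) :=
  exchange_laws_neg_full_general cs p q hpq hq rq hrq
end

section
/- Let 1 ≤ p < q ≤ n and let r_q, r_p be integers with 0 < r_q < q and −p < r_p < 0. Then the following exchange laws hold in W: (i) if q − r_q ≥ p then τ_q^{r_q}·τ_p^{r_p} = τ_{r_q+r_p+p}^{r_q}·τ_{p+r_q}^{r_p−r_q}·τ_q^{r_q}; (ii) if r_p + p ≤ q − r_q ≤ p then τ_q^{r_q}·τ_p^{r_p} = τ_{p+r_q−q}^{−p−r_q+q}·τ_{r_q}^{p+r_q−q}·τ_{r_q+r_p+p}^{q−p}·τ_q^{p+r_p−q+r_q}; (iii) if q − r_q ≤ r_p + p then τ_q^{r_q}·τ_p^{r_p} = τ_{p+r_q−q}^{r_p}·τ_{r_q}^{−r_p}·τ_q^{r_q+r_p}. -/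
variable {n : ℕ} {W : Type*} [Group W]

namespace Bexch

variable (cs : CoxeterSystem (BCoxeterMatrix n) W)

local notation "σ" => sgen cs
local notation "τ" => tau cs

lemma BM_two {i j : ℕ} (hi : i < n) (hj : j < n) (h : i + 2 ≤ j) :
    (BCoxeterMatrix n).M ⟨i, hi⟩ ⟨j, hj⟩ = 2 := by
  simp only [BCoxeterMatrix, Matrix.of_apply, Fin.mk.injEq, Fin.val_mk]
  split_ifs <;> simp_all <;> omega

lemma BM_three {i : ℕ} (h1 : 1 ≤ i) (h2 : i + 1 < n) (hi : i < n) :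
    (BCoxeterMatrix n).M ⟨i, hi⟩ ⟨i+1, h2⟩ = 3 := by
  simp only [BCoxeterMatrix, Matrix.of_apply, Fin.mk.injEq, Fin.val_mk]
  split_ifs with u v w
  · omega
  · rcases v with ⟨v1, -⟩ | ⟨v1, -⟩
    · omega
    · exact v1.elim
  · rfl
  · exact absurd (Or.inr trivial) w

lemma BM_four (h0 : 0 < n) (h2 : 1 < n) :
    (BCoxeterMatrix n).M ⟨0, h0⟩ ⟨1, h2⟩ = 4 := by
  simp only [BCoxeterMatrix, Matrix.of_apply, Fin.mk.injEq, Fin.val_mk]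
  split_ifs <;> simp_all

lemma sgen_sq (j : ℕ) : σ j * σ j = 1 := by
  unfold sgen; split
  · exact cs.simple_mul_simple_self _
  · simp

lemma sgen_inv (j : ℕ) : (σ j)⁻¹ = σ j :=
  inv_eq_of_mul_eq_one_right (sgen_sq cs j)

lemma sgen_comm {i j : ℕ} (h : i + 2 ≤ j) : σ i * σ j = σ j * σ i := by
  by_cases hj : j < n; swap
  · unfold sgen; rw [dif_neg hj]; simp
  have hi : i < n := by omega
  have h3 := cs.simple_mul_simple_pow ⟨i, hi⟩ ⟨j, hj⟩
  rw [BM_two hi hj h, pow_succ, pow_one] at h3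
  have key : (cs.simple ⟨i, hi⟩ * cs.simple ⟨j, hj⟩) = (cs.simple ⟨i, hi⟩ * cs.simple ⟨j, hj⟩)⁻¹ :=
    eq_inv_of_mul_eq_one_left h3
  unfold sgen
  rw [dif_pos hi, dif_pos hj, key, mul_inv_rev, cs.inv_simple, cs.inv_simple]

lemma sgen_braid {i : ℕ} (h1 : 1 ≤ i) (h2 : i + 1 < n) :
    σ i * σ (i+1) * σ i = σ (i+1) * σ i * σ (i+1) := by
  have hi : i < n := by omega
  have h3 := cs.simple_mul_simple_pow ⟨i, hi⟩ ⟨i+1, h2⟩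
  rw [BM_three h1 h2 hi, pow_succ, pow_succ, pow_one] at h3
  set a := cs.simple ⟨i, hi⟩ with ha
  set b := cs.simple ⟨i+1, h2⟩ with hb
  have key : a * b * a = (b * a * b)⁻¹ := by
    apply eq_inv_of_mul_eq_one_left
    calc a * b * a * (b * a * b) = a * b * (a * b) * (a * b) := by group
    _ = 1 := h3
  unfold sgen
  rw [dif_pos hi, dif_pos h2, ← ha, ← hb, key, mul_inv_rev, mul_inv_rev, cs.inv_simple,
    cs.inv_simple]
  simp only [ha, hb, mul_inv_rev, cs.inv_simple, mul_assoc]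

lemma sgen_s0s1 : σ 0 * σ 1 * (σ 0 * σ 1) = σ 1 * σ 0 * (σ 1 * σ 0) := by
  by_cases h2 : 1 < n; swap
  · have e1 : σ 1 = 1 := by unfold sgen; rw [dif_neg (by omega)]
    rw [e1]; simp [sgen_sq]
  have h0 : 0 < n := by omega
  have h3 := cs.simple_mul_simple_pow ⟨0, h0⟩ ⟨1, h2⟩
  rw [BM_four h0 h2, pow_succ, pow_succ, pow_succ, pow_one] at h3
  set a := cs.simple ⟨0, h0⟩ with ha
  set b := cs.simple ⟨1, h2⟩ with hb
  have key : a * b * (a * b) = (a * b * (a * b))⁻¹ := by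
    apply eq_inv_of_mul_eq_one_left
    calc a * b * (a * b) * (a * b * (a * b)) = a * b * (a * b) * (a * b) * (a * b) := by group
    _ = 1 := h3
  unfold sgen
  rw [dif_pos h0, dif_pos h2, ← ha, ← hb, key]
  simp only [mul_inv_rev, cs.inv_simple]
  simp only [ha, hb, mul_inv_rev, cs.inv_simple, mul_assoc]

end Bexch

namespace Bexch

variable (cs : CoxeterSystem (BCoxeterMatrix n) W)

local notation "σ" => sgen cs
local notation "τ" => tau cs

lemma tau_zero : τ 0 = 1 := by simp [tau]

lemma tau_succ (k : ℕ) : τ (k+1) = τ k * σ k := by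
  unfold tau
  rw [List.range_succ, List.map_append, List.prod_append, List.map_singleton,
    List.prod_singleton]

lemma tau_one : τ 1 = σ 0 := by
  rw [show (1:ℕ) = 0 + 1 from rfl, tau_succ, tau_zero, one_mul]

lemma tau_succ_sgen (k : ℕ) : τ (k+1) * σ k = τ k := by
  rw [tau_succ, mul_assoc, sgen_sq, mul_one]

lemma sgen_tau_comm {k j : ℕ} (h : k + 1 ≤ j) : σ j * τ k = τ k * σ j := by
  induction k with
  | zero => rw [tau_zero, one_mul, mul_one]
  | succ k ih =>
      have hc : σ k * σ j = σ j * σ k := sgen_comm cs (by omega)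
      calc σ j * τ (k+1) = (σ j * τ k) * σ k := by rw [tau_succ]; group
      _ = τ k * (σ j * σ k) := by rw [ih (by omega)]; group
      _ = τ k * (σ k * σ j) := by rw [hc]
      _ = τ (k+1) * σ j := by rw [tau_succ]; group

lemma tau_sgen_shift {j q : ℕ} (h1 : 1 ≤ j) (h2 : j + 2 ≤ q) (hq : q ≤ n) :
    τ q * σ j = σ (j+1) * τ q := by
  induction q with
  | zero => omega
  | succ q ih =>
      rcases Nat.lt_or_ge (j+2) (q+1) with hlt | hge
      · have hj2 : j + 2 ≤ q := by omega
        have hc : σ q * σ j = σ j * σ q := (sgen_comm cs (by omega)).symm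
        calc τ (q+1) * σ j = τ q * (σ q * σ j) := by rw [tau_succ]; group
        _ = (τ q * σ j) * σ q := by rw [hc]; group
        _ = σ (j+1) * (τ q * σ q) := by rw [ih hj2 (by omega)]; group
        _ = σ (j+1) * τ (q+1) := by rw [tau_succ]
      · have hq' : q = j + 1 := by omega
        subst hq'
        have hbr : σ j * σ (j+1) * σ j = σ (j+1) * σ j * σ (j+1) :=
          sgen_braid cs h1 (by omega)
        have hc : σ (j+1) * τ j = τ j * σ (j+1) := sgen_tau_comm cs (by omega)
        calc τ (j+1+1) * σ j = τ j * (σ j * σ (j+1) * σ j) := by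
              rw [tau_succ, tau_succ]; group
        _ = (τ j * σ (j+1)) * (σ j * σ (j+1)) := by rw [hbr]; group
        _ = (σ (j+1) * τ j) * (σ j * σ (j+1)) := by rw [← hc]
        _ = σ (j+1) * τ (j+1+1) := by rw [tau_succ, tau_succ]; group


lemma tau_sgen0 {q : ℕ} (h2 : 2 ≤ q) (hq : q ≤ n) :
    τ q * σ 0 = σ 1 * σ 0 * σ 1 * τ q := by
  induction q with
  | zero => omega
  | succ q ih =>
      rcases Nat.lt_or_ge 2 (q+1) with hlt | hge
      · have hc : σ q * σ 0 = σ 0 * σ q := (sgen_comm cs (by omega)).symm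
        calc τ (q+1) * σ 0 = τ q * (σ q * σ 0) := by rw [tau_succ]; group
        _ = (τ q * σ 0) * σ q := by rw [hc]; group
        _ = σ 1 * σ 0 * σ 1 * (τ q * σ q) := by rw [ih (by omega) (by omega)]; group
        _ = σ 1 * σ 0 * σ 1 * τ (q+1) := by rw [tau_succ]
      · have hq' : q = 1 := by omega
        subst hq'
        have h01 : σ 0 * σ 1 * (σ 0 * σ 1) = σ 1 * σ 0 * (σ 1 * σ 0) := sgen_s0s1 cs
        calc τ 2 * σ 0 = σ 0 * σ 1 * σ 0 := by
              rw [show (2:ℕ) = 1 + 1 from rfl, tau_succ, tau_one]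
        _ = σ 0 * σ 1 * (σ 0 * σ 1) * σ 1 := by
              have he : σ 0 * σ 1 * (σ 0 * σ 1) * σ 1 = σ 0 * σ 1 * σ 0 * (σ 1 * σ 1) := by group
              rw [he, sgen_sq, mul_one]
        _ = σ 1 * σ 0 * (σ 1 * σ 0) * σ 1 := by rw [h01]
        _ = σ 1 * σ 0 * σ 1 * τ 2 := by
              rw [show (2:ℕ) = 1 + 1 from rfl, tau_succ, tau_one]; group

lemma K1 {p q : ℕ} (h1 : 1 ≤ p) (h2 : p < q) (hq : q ≤ n) :
    τ q * τ p = σ 1 * τ (p+1) * τ q := by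
  induction p with
  | zero => omega
  | succ p ih =>
      rcases Nat.eq_or_lt_of_le h1 with h1' | hlt
      · -- p + 1 = 1, i.e. p = 0
        have hp0 : p = 0 := by omega
        subst hp0
        calc τ q * τ 1 = τ q * σ 0 := by rw [tau_one]
        _ = σ 1 * σ 0 * σ 1 * τ q := tau_sgen0 cs (by omega) hq
        _ = σ 1 * τ (1+1) * τ q := by
              rw [show (1:ℕ)+1 = 0+1+1 from rfl, tau_succ, tau_succ, tau_zero]; group
      · have hp1 : 1 ≤ p := by omega
        have hsh : τ q * σ p = σ (p+1) * τ q := tau_sgen_shift cs hp1 (by omega) hq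
        calc τ q * τ (p+1) = (τ q * τ p) * σ p := by rw [tau_succ]; group
        _ = σ 1 * τ (p+1) * (τ q * σ p) := by rw [ih hp1 (by omega)]; group
        _ = σ 1 * τ (p+1) * (σ (p+1) * τ q) := by rw [hsh]
        _ = σ 1 * τ (p+1+1) * τ q := by rw [tau_succ cs (p+1)]; group

lemma K2 {k : ℕ} (h1 : 1 ≤ k) (hk : k + 1 ≤ n) :
    τ (k+1) * τ (k+1) = σ 1 * τ (k+1) * τ k := by
  calc τ (k+1) * τ (k+1) = (τ (k+1) * τ k) * σ k := by rw [tau_succ]; group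
  _ = σ 1 * τ (k+1) * (τ (k+1) * σ k) := by rw [K1 cs h1 (by omega) hk]; group
  _ = σ 1 * τ (k+1) * τ k := by rw [tau_succ_sgen]


def eps (cs : CoxeterSystem (BCoxeterMatrix n) W) : ℕ → W
  | 0 => 1
  | 1 => sgen cs 0
  | (i+2) => sgen cs (i+1) * eps cs (i+1) * sgen cs (i+1)

local notation "ε" => eps cs

lemma eps_one : ε 1 = σ 0 := rfl

lemma eps_succ {i : ℕ} (h : 1 ≤ i) : ε (i+1) = σ i * ε i * σ i := by
  match i, h with
  | (j+1), _ => rfl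

lemma E3 {i q : ℕ} (h1 : 1 ≤ i) (h2 : i + 1 ≤ q) (hq : q ≤ n) :
    τ q * ε i = ε (i+1) * τ q := by
  induction i with
  | zero => omega
  | succ i ih =>
      rcases Nat.eq_or_lt_of_le h1 with h1' | hlt
      · -- i = 0
        have hi0 : i = 0 := by omega
        subst hi0
        rw [eps_one, eps_succ cs (by omega : 1 ≤ 1), eps_one]
        exact tau_sgen0 cs (by omega) hq
      · have hi1 : 1 ≤ i := by omega
        have hsh : τ q * σ i = σ (i+1) * τ q := tau_sgen_shift cs hi1 (by omega) hq
        calc τ q * ε (i+1) = (τ q * σ i) * ε i * σ i := by rw [eps_succ cs hi1]; group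
        _ = σ (i+1) * (τ q * ε i) * σ i := by rw [hsh]; group
        _ = σ (i+1) * (ε (i+1) * (τ q * σ i)) := by rw [ih hi1 (by omega)]; group
        _ = σ (i+1) * ε (i+1) * σ (i+1) * τ q := by rw [hsh]; group
        _ = ε (i+1+1) * τ q := by rw [eps_succ cs (by omega : 1 ≤ i+1)]

lemma E4 {q : ℕ} (h1 : 1 ≤ q) : τ q * ε q = σ 0 * τ q := by
  induction q with
  | zero => omega
  | succ q ih =>
      rcases Nat.eq_or_lt_of_le h1 with h1' | hlt
      · have hq0 : q = 0 := by omega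
        subst hq0
        rw [tau_one, eps_one]
      · have hq1 : 1 ≤ q := by omega
        calc τ (q+1) * ε (q+1) = τ q * (σ q * σ q) * ε q * σ q := by
              rw [tau_succ, eps_succ cs hq1]; group
        _ = (τ q * ε q) * σ q := by rw [sgen_sq, mul_one]
        _ = σ 0 * τ (q+1) := by rw [ih hq1, tau_succ]; group

lemma eps_sq (i : ℕ) : ε i * ε i = 1 := by
  induction i with
  | zero => rw [eps]; group
  | succ i ih =>
      rcases Nat.eq_or_lt_of_le (Nat.zero_le i) with h0 | h1
      · rw [← h0, eps_one, sgen_sq]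
      · rw [eps_succ cs (by omega)]
        calc σ i * ε i * σ i * (σ i * ε i * σ i) = σ i * ε i * (σ i * σ i) * ε i * σ i := by
              simp only [mul_assoc]
        _ = σ i * (ε i * ε i) * σ i := by rw [sgen_sq, mul_one]; simp only [mul_assoc]
        _ = 1 := by rw [ih, mul_one, sgen_sq]

lemma eps_inv (i : ℕ) : (ε i)⁻¹ = ε i := inv_eq_of_mul_eq_one_right (eps_sq cs i)

lemma E1 {j q : ℕ} (hj : j < q) (hq : q ≤ n) : τ q ^ j * σ 0 = ε (j+1) * τ q ^ j := by
  induction j with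
  | zero => rw [pow_zero, eps_one, one_mul, mul_one]
  | succ j ih =>
      calc τ q ^ (j+1) * σ 0 = τ q * (τ q ^ j * σ 0) := by rw [pow_succ']; group
      _ = (τ q * ε (j+1)) * τ q ^ j := by rw [ih (by omega)]; group
      _ = ε (j+1+1) * τ q ^ (j+1) := by
            rw [E3 cs (by omega) (by omega) hq, pow_succ']; group

lemma E5 {q : ℕ} (hq : q ≤ n) : τ q ^ q * σ 0 = σ 0 * τ q ^ q := by
  rcases Nat.eq_zero_or_pos q with h0 | h1
  · subst h0; rw [pow_zero, one_mul, mul_one]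
  · obtain ⟨q', rfl⟩ : ∃ q', q = q' + 1 := ⟨q - 1, by omega⟩
    calc τ (q'+1) ^ (q'+1) * σ 0 = τ (q'+1) * (τ (q'+1) ^ q' * σ 0) := by rw [pow_succ']; group
    _ = (τ (q'+1) * ε (q'+1)) * τ (q'+1) ^ q' := by rw [E1 cs (by omega) hq]; group
    _ = σ 0 * τ (q'+1) ^ (q'+1) := by rw [E4 cs (by omega), pow_succ']; group


lemma zpow_coe_succ (x : W) (b : ℕ) : x ^ (((b+1:ℕ)):ℤ) = x ^ ((b:ℕ):ℤ) * x := by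
  push_cast
  exact zpow_add_one x (b:ℤ)

lemma S2 {q a : ℕ} (ha : a < q) (hq : q ≤ n) :
    ∀ b : ℕ, b ≤ a → τ q * τ a ^ ((b:ℕ):ℤ) = τ (a+1) ^ ((b:ℤ)+1) * (τ (a+1-b))⁻¹ * τ q := by
  intro b
  induction b with
  | zero =>
      intro _
      rw [Nat.cast_zero, zpow_zero, mul_one, zero_add, zpow_one, Nat.sub_zero]
      group
  | succ b ih =>
      intro hb
      have hb' : b ≤ a := by omega
      have hK : τ q * τ a = σ 1 * τ (a+1) * τ q := K1 cs (by omega) ha hq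
      have hK2 : τ (a+1) * τ (a-b) = σ 1 * τ (a-b+1) * τ (a+1) :=
        K1 cs (by omega) (by omega) (by omega)
      have hkey : (τ (a+1-b))⁻¹ * σ 1 * τ (a+1) = τ (a+1) * (τ (a-b))⁻¹ := by
        rw [show a + 1 - b = a - b + 1 from by omega]
        calc (τ (a-b+1))⁻¹ * σ 1 * τ (a+1)
            = (τ (a-b+1))⁻¹ * σ 1 * (σ 1 * τ (a-b+1) * τ (a+1)) * ((τ (a+1) * τ (a-b))⁻¹ * τ (a+1)) := by
              rw [← hK2]; group
          _ = (τ (a-b+1))⁻¹ * (σ 1 * σ 1) * τ (a-b+1) * τ (a+1) * ((τ (a+1) * τ (a-b))⁻¹ * τ (a+1)) := by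
              simp only [mul_assoc]
          _ = τ (a+1) * (τ (a-b))⁻¹ := by rw [sgen_sq]; group
      calc τ q * τ a ^ (((b+1:ℕ)):ℤ)
          = (τ q * τ a ^ ((b:ℕ):ℤ)) * τ a := by rw [zpow_coe_succ]; group
        _ = τ (a+1) ^ ((b:ℤ)+1) * (τ (a+1-b))⁻¹ * (τ q * τ a) := by rw [ih hb']; group
        _ = τ (a+1) ^ ((b:ℤ)+1) * ((τ (a+1-b))⁻¹ * σ 1 * τ (a+1)) * τ q := by rw [hK]; group
        _ = τ (a+1) ^ ((b:ℤ)+1) * (τ (a+1) * (τ (a-b))⁻¹) * τ q := by rw [hkey]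
        _ = τ (a+1) ^ (((b+1:ℕ)):ℤ) * τ (a+1) * (τ (a-b))⁻¹ * τ q := by
              rw [zpow_coe_succ]; group
        _ = τ (a+1) ^ ((((b+1:ℕ)):ℤ)+1) * (τ (a+1-(b+1)))⁻¹ * τ q := by
              rw [zpow_add_one, show a+1-(b+1) = a - b from by omega]

lemma S2conj {q a b : ℕ} (hb : b ≤ a) (ha : a < q) (hq : q ≤ n) :
    τ q * τ a ^ ((b:ℕ):ℤ) * (τ q)⁻¹ = τ (a+1) ^ ((b:ℤ)+1) * (τ (a+1-b))⁻¹ := by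
  rw [S2 cs ha hq b hb]; group

lemma S1conj {q a m : ℕ} (hm : m ≤ a) (ha : a < q) (hq : q ≤ n) :
    τ q * τ a ^ (-((m:ℕ):ℤ)) * (τ q)⁻¹ = τ (a+1-m) * τ (a+1) ^ (-(m:ℤ)-1) := by
  have h2 := congrArg Inv.inv (S2conj cs hm ha hq)
  simp only [mul_inv_rev, inv_inv, ← zpow_neg] at h2
  calc τ q * τ a ^ (-((m:ℕ):ℤ)) * (τ q)⁻¹
      = τ q * (τ a ^ (-((m:ℕ):ℤ)) * (τ q)⁻¹) := by group
    _ = τ (a+1-m) * τ (a+1) ^ (-(m:ℤ)-1) := by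
        rw [h2, show -((m:ℤ)+1) = -(m:ℤ)-1 from by ring]

lemma S1 {q a m : ℕ} (hm : m ≤ a) (ha : a < q) (hq : q ≤ n) :
    τ q * τ a ^ (-((m:ℕ):ℤ)) = τ (a+1-m) * τ (a+1) ^ (-(m:ℤ)-1) * τ q := by
  have h := S1conj cs hm ha hq
  calc τ q * τ a ^ (-((m:ℕ):ℤ))
      = (τ q * τ a ^ (-((m:ℕ):ℤ)) * (τ q)⁻¹) * τ q := by group
    _ = τ (a+1-m) * τ (a+1) ^ (-(m:ℤ)-1) * τ q := by rw [h]


lemma M2 {q e d : ℕ} (hq : q ≤ n) :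
    ∀ r : ℕ, e + d + r ≤ q →
      τ q ^ ((r:ℕ):ℤ) * τ (e+d) ^ ((e:ℕ):ℤ) * τ q ^ (-((r:ℕ):ℤ)) =
        τ (e+d+r) ^ ((e:ℤ)+(r:ℤ)) * τ (d+r) ^ (-((r:ℕ):ℤ)) := by
  intro r
  induction r with
  | zero =>
      intro _
      simp
  | succ r ih =>
      intro h
      have ihh := ih (by omega)
      have l2 : τ q * τ (e+d+r) ^ (((e+r:ℕ)):ℤ) =
          τ (e+d+r+1) ^ (((e+r:ℕ):ℤ)+1) * (τ (d+1))⁻¹ * τ q := by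
        have := S2 cs (show e+d+r < q from by omega) hq (e+r) (by omega)
        rwa [show e+d+r+1-(e+r) = d+1 from by omega] at this
      have l1 : τ q * τ (d+r) ^ (-((r:ℕ):ℤ)) = τ (d+1) * τ (d+r+1) ^ (-(r:ℤ)-1) * τ q := by
        have := S1 cs (show r ≤ d + r from by omega) (show d+r < q from by omega) hq
        rwa [show d+r+1-r = d+1 from by omega] at this
      have cast1 : τ q ^ (((r+1:ℕ)):ℤ) = τ q * τ q ^ ((r:ℕ):ℤ) := by
        push_cast
        rw [add_comm, zpow_add, zpow_one]
      have cast2 : τ q ^ (-((r+1:ℕ):ℤ)) = τ q ^ (-((r:ℕ):ℤ)) * (τ q)⁻¹ := by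
        push_cast
        rw [neg_add, zpow_add, zpow_neg_one]
      have caste : τ (e+d+r) ^ ((e:ℤ)+(r:ℤ)) = τ (e+d+r) ^ (((e+r:ℕ)):ℤ) := by push_cast; ring_nf
      calc τ q ^ (((r+1:ℕ)):ℤ) * τ (e+d) ^ ((e:ℕ):ℤ) * τ q ^ (-((r+1:ℕ):ℤ))
          = τ q * (τ q ^ ((r:ℕ):ℤ) * τ (e+d) ^ ((e:ℕ):ℤ) * τ q ^ (-((r:ℕ):ℤ))) * (τ q)⁻¹ := by
            rw [cast1, cast2]; group
        _ = τ q * (τ (e+d+r) ^ ((e:ℤ)+(r:ℤ)) * τ (d+r) ^ (-((r:ℕ):ℤ))) * (τ q)⁻¹ := by rw [ihh]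
        _ = (τ q * τ (e+d+r) ^ (((e+r:ℕ)):ℤ)) * (τ (d+r) ^ (-((r:ℕ):ℤ))) * (τ q)⁻¹ := by
            rw [caste]; group
        _ = τ (e+d+r+1) ^ (((e+r:ℕ):ℤ)+1) * (τ (d+1))⁻¹ * (τ q * τ (d+r) ^ (-((r:ℕ):ℤ))) * (τ q)⁻¹ := by
            rw [l2]; group
        _ = τ (e+d+r+1) ^ (((e+r:ℕ):ℤ)+1) * ((τ (d+1))⁻¹ * τ (d+1)) * τ (d+r+1) ^ (-(r:ℤ)-1) * (τ q * (τ q)⁻¹) := by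
            rw [l1]; group
        _ = τ (e+d+r+1) ^ (((e+r:ℕ):ℤ)+1) * τ (d+r+1) ^ (-(r:ℤ)-1) := by group
        _ = τ (e+d+(r+1)) ^ ((e:ℤ)+((r+1:ℕ):ℤ)) * τ (d+(r+1)) ^ (-((r+1:ℕ):ℤ)) := by
            rw [show e+d+r+1 = e+d+(r+1) from by omega, show d+r+1 = d+(r+1) from by omega,
              show (((e+r:ℕ):ℤ)+1) = (e:ℤ)+((r+1:ℕ):ℤ) from by push_cast; ring,
              show (-(r:ℤ)-1) = -((r+1:ℕ):ℤ) from by push_cast; ring]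

lemma M1 {q e d r : ℕ} (h : e + d + r ≤ q) (hq : q ≤ n) :
    τ q ^ ((r:ℕ):ℤ) * τ (e+d) ^ (-((e:ℕ):ℤ)) * τ q ^ (-((r:ℕ):ℤ)) =
      τ (d+r) ^ ((r:ℕ):ℤ) * τ (e+d+r) ^ (-(e:ℤ)-(r:ℤ)) := by
  have h2 := congrArg Inv.inv (M2 cs hq r h)
  simp only [mul_inv_rev, ← zpow_neg, neg_neg] at h2
  calc τ q ^ ((r:ℕ):ℤ) * τ (e+d) ^ (-((e:ℕ):ℤ)) * τ q ^ (-((r:ℕ):ℤ))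
      = τ q ^ ((r:ℕ):ℤ) * (τ (e+d) ^ (-((e:ℕ):ℤ)) * τ q ^ (-((r:ℕ):ℤ))) := by group
    _ = τ (d+r) ^ ((r:ℕ):ℤ) * τ (e+d+r) ^ (-(e:ℤ)-(r:ℤ)) := by
        rw [h2, show -((e:ℤ)+(r:ℤ)) = -(e:ℤ)-(r:ℤ) from by ring]


lemma Ylem {k : ℕ} (hk : k + 1 ≤ n) :
    ∀ g : ℕ, g ≤ k →
      τ (k+1) ^ ((g:ℤ)+1) * τ k ^ (-((g:ℕ):ℤ)) = ε (g+1) * (τ (g+1))⁻¹ * τ (k+1) := by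
  intro g
  induction g with
  | zero =>
      intro _
      rw [Nat.cast_zero, zero_add, zpow_one, neg_zero, zpow_zero, mul_one, eps_one, tau_one,
        sgen_inv, sgen_sq, one_mul]
  | succ g ih =>
      intro hg
      have hk1 : 1 ≤ k := by omega
      have ihh := ih (by omega)
      have hE3 : τ (k+1) * ε (g+1) = ε (g+2) * τ (k+1) :=
        E3 cs (by omega) (by omega) hk
      have hS1 := S1 cs (show 1 ≤ g+1 from by omega) (show g+1 < k+1 from by omega) hk
      rw [show g+1+1-1 = g+1 from by omega] at hS1
      have hS1' : τ (k+1) * (τ (g+1))⁻¹ = τ (g+1) * τ (g+2) ^ (-(2:ℤ)) * τ (k+1) := by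
        rw [show ((1:ℕ):ℤ) = (1:ℤ) from rfl] at hS1
        rw [show ((τ (g+1))⁻¹ : W) = τ (g+1) ^ (-1 : ℤ) from by rw [zpow_neg, zpow_one]]
        rw [hS1, show g+1+1 = g+2 from by omega, show ((-1:ℤ)-1 : ℤ) = -(2:ℤ) from by ring]
      have hK2a : τ (k+1) * (τ (k+1) * (τ k)⁻¹) = σ 1 * τ (k+1) := by
        have := K2 cs hk1 hk
        calc τ (k+1) * (τ (k+1) * (τ k)⁻¹) = (τ (k+1) * τ (k+1)) * (τ k)⁻¹ := by group
        _ = σ 1 * τ (k+1) * τ k * (τ k)⁻¹ := by rw [this]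
        _ = σ 1 * τ (k+1) := by group
      have hK2b : τ (g+2) ^ (-(2:ℤ)) * σ 1 = (τ (g+1))⁻¹ * (τ (g+2))⁻¹ := by
        have h2 := K2 cs (show 1 ≤ g+1 from by omega) (show g+1+1 ≤ n from by omega)
        rw [show g+1+1 = g+2 from by omega] at h2
        have h3 : τ (g+2) ^ (-(2:ℤ)) = (τ (g+1))⁻¹ * (τ (g+2))⁻¹ * σ 1 := by
          have h4 : (σ 1 * τ (g+2) * τ (g+1))⁻¹ = (τ (g+1))⁻¹ * (τ (g+2))⁻¹ * σ 1 := by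
            simp only [mul_inv_rev, sgen_inv]
            group
          rw [← h4, ← h2]
          group
        rw [h3, mul_assoc, mul_assoc, sgen_sq, mul_one]
      calc τ (k+1) ^ (((g+1:ℕ):ℤ)+1) * τ k ^ (-((g+1:ℕ):ℤ))
          = τ (k+1) * (τ (k+1) ^ ((g:ℤ)+1) * τ k ^ (-((g:ℕ):ℤ))) * (τ k)⁻¹ := by
            push_cast; group
        _ = τ (k+1) * (ε (g+1) * (τ (g+1))⁻¹ * τ (k+1)) * (τ k)⁻¹ := by rw [ihh]
        _ = (τ (k+1) * ε (g+1)) * ((τ (g+1))⁻¹ * (τ (k+1) * (τ k)⁻¹)) := by group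
        _ = ε (g+2) * (τ (k+1) * (τ (g+1))⁻¹) * (τ (k+1) * (τ k)⁻¹) := by
            rw [hE3]
            group
        _ = ε (g+2) * (τ (g+1) * τ (g+2) ^ (-(2:ℤ)) * τ (k+1)) * (τ (k+1) * (τ k)⁻¹) := by
            rw [hS1']
        _ = ε (g+2) * τ (g+1) * τ (g+2) ^ (-(2:ℤ)) * (τ (k+1) * (τ (k+1) * (τ k)⁻¹)) := by
            group
        _ = ε (g+2) * τ (g+1) * (τ (g+2) ^ (-(2:ℤ)) * σ 1) * τ (k+1) := by
            rw [hK2a]; group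
        _ = ε (g+2) * (τ (g+1) * (τ (g+1))⁻¹) * (τ (g+2))⁻¹ * τ (k+1) := by
            rw [hK2b]; group
        _ = ε (g+1+1) * (τ (g+1+1))⁻¹ * τ (k+1) := by
            rw [show g+1+1 = g+2 from by omega]; group

lemma Ecomm1 {k : ℕ} (hk : k ≤ n) :
    σ 0 * τ k ^ (-((k:ℕ):ℤ)) = τ k ^ (-((k:ℕ):ℤ)) * σ 0 := by
  have hc : Commute (τ k ^ (k:ℕ)) (σ 0) := E5 cs hk
  have h2 : τ k ^ (-((k:ℕ):ℤ)) = (τ k ^ (k:ℕ))⁻¹ := by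
    rw [← zpow_natCast, ← zpow_neg]
  rw [h2]
  exact (hc.inv_left.symm).eq

lemma Ecomm2 {g a' : ℕ} (h : g + a' + 1 ≤ n) (hg : 1 ≤ g) :
    σ 0 * τ (g+a'+1) ^ ((a'+1:ℕ)) = τ (g+a'+1) ^ ((a'+1:ℕ)) * ε (g+1) := by
  have e1 : τ (g+a'+1) ^ g * σ 0 = ε (g+1) * τ (g+a'+1) ^ g :=
    E1 cs (by omega) h
  have e5 : τ (g+a'+1) ^ (g+a'+1) * σ 0 = σ 0 * τ (g+a'+1) ^ (g+a'+1) := E5 cs h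
  apply mul_right_cancel (b := τ (g+a'+1) ^ g)
  calc σ 0 * τ (g+a'+1) ^ (a'+1) * τ (g+a'+1) ^ g
      = σ 0 * τ (g+a'+1) ^ (g+a'+1) := by
        rw [mul_assoc, ← pow_add, show a'+1+g = g+a'+1 from by omega]
    _ = τ (g+a'+1) ^ (g+a'+1) * σ 0 := by rw [e5]
    _ = τ (g+a'+1) ^ (a'+1) * (τ (g+a'+1) ^ g * σ 0) := by
        rw [← mul_assoc, ← pow_add, show a'+1+g = g+a'+1 from by omega]
    _ = τ (g+a'+1) ^ (a'+1) * ε (g+1) * τ (g+a'+1) ^ g := by rw [e1]; group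


lemma Case2 {p q g m d : ℕ} (hp : p = m+d+1) (hq : q = p + g) (hg : 1 ≤ g)
    (hn : q ≤ n) : ∀ a : ℕ, a ≤ m →
      τ q ^ ((g:ℤ)+(a:ℤ)) * τ p ^ (-(m:ℤ)) =
        τ a ^ (-(a:ℤ)) * τ (g+a) ^ ((a:ℕ):ℤ) * τ (g+a+d+1) ^ ((g:ℕ):ℤ) *
          τ q ^ ((a:ℤ)-(m:ℤ)) := by
  intro a
  induction a with
  | zero =>
      intro _
      have hM := M1 cs (e := m) (d := d+1) (r := g) (by omega) hn
      rw [show m+(d+1) = p from by omega, show (d+1)+g = g+0+d+1 from by omega,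
        show p+g = q from hq.symm] at hM
      have hM' : τ q ^ ((g:ℕ):ℤ) * τ p ^ (-(m:ℤ)) =
          τ (g+0+d+1) ^ ((g:ℕ):ℤ) * τ q ^ (-(m:ℤ)-(g:ℤ)) * τ q ^ ((g:ℕ):ℤ) := by
        calc τ q ^ ((g:ℕ):ℤ) * τ p ^ (-(m:ℤ))
            = (τ q ^ ((g:ℕ):ℤ) * τ p ^ (-(m:ℤ)) * τ q ^ (-((g:ℕ):ℤ))) * τ q ^ ((g:ℕ):ℤ) := by
              group
          _ = τ (g+0+d+1) ^ ((g:ℕ):ℤ) * τ q ^ (-(m:ℤ)-(g:ℤ)) * τ q ^ ((g:ℕ):ℤ) := by rw [hM]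
      calc τ q ^ ((g:ℤ)+((0:ℕ):ℤ)) * τ p ^ (-(m:ℤ))
          = τ q ^ ((g:ℕ):ℤ) * τ p ^ (-(m:ℤ)) := by norm_num
        _ = τ (g+0+d+1) ^ ((g:ℕ):ℤ) * τ q ^ (-(m:ℤ)-(g:ℤ)) * τ q ^ ((g:ℕ):ℤ) := hM'
        _ = τ 0 ^ (-((0:ℕ):ℤ)) * τ (g+0) ^ ((0:ℕ):ℤ) * τ (g+0+d+1) ^ ((g:ℕ):ℤ) *
              τ q ^ (((0:ℕ):ℤ)-(m:ℤ)) := by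
            norm_num
            group
  | succ a ih =>
      intro ha
      have ihh := ih (by omega)
      have hP1 : τ q * τ a ^ (-((a:ℕ):ℤ)) = τ 1 * τ (a+1) ^ (-(a:ℤ)-1) * τ q := by
        have := S1 cs (le_refl a) (show a < q from by omega) hn
        rwa [show a+1-a = 1 from by omega] at this
      have hP2 : τ q * τ (g+a) ^ ((a:ℕ):ℤ) = τ (g+a+1) ^ ((a:ℤ)+1) * (τ (g+1))⁻¹ * τ q := by
        have := S2 cs (show g+a < q from by omega) hn a (by omega)
        rwa [show g+a+1-a = g+1 from by omega] at this
      have hP3 : τ q * τ (g+a+d+1) ^ ((g:ℕ):ℤ) =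
          τ (g+a+d+2) ^ ((g:ℤ)+1) * (τ (a+d+2))⁻¹ * τ q := by
        have := S2 cs (show g+a+d+1 < q from by omega) hn g (by omega)
        rwa [show g+a+d+1+1-g = a+d+2 from by omega, show g+a+d+1+1 = g+a+d+2 from by omega]
          at this
      have hC1 : τ 1 * τ (a+1) ^ (-(a:ℤ)-1) = τ (a+1) ^ (-(a:ℤ)-1) * τ 1 := by
        have := Ecomm1 cs (show a+1 ≤ n from by omega)
        rw [show (-((a+1:ℕ):ℤ)) = -(a:ℤ)-1 from by push_cast; ring] at this
        rw [tau_one]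
        exact this
      have hC2 : τ 1 * τ (g+a+1) ^ ((a:ℤ)+1) = τ (g+a+1) ^ ((a:ℤ)+1) * ε (g+1) := by
        have := Ecomm2 cs (a' := a) (show g+a+1 ≤ n from by omega) hg
        rw [← zpow_natCast (τ (g+a+1)) (a+1), show ((a+1:ℕ):ℤ) = (a:ℤ)+1 from by push_cast; ring]
          at this
        rw [tau_one]
        exact this
      have hY : ε (g+1) * (τ (g+1))⁻¹ =
          τ (g+a+d+2) ^ ((g:ℤ)+1) * τ (g+a+d+1) ^ (-((g:ℕ):ℤ)) * (τ (g+a+d+2))⁻¹ := by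
        have h6 := Ylem cs (show (g+a+d+1)+1 ≤ n from by omega) g (by omega)
        rw [show g+a+d+1+1 = g+a+d+2 from by omega] at h6
        rw [eq_mul_inv_iff_mul_eq]
        exact h6.symm
      have hM : τ (g+a+d+2) ^ ((g:ℕ):ℤ) * (τ (a+d+2))⁻¹ =
          τ (g+a+d+1) ^ ((g:ℕ):ℤ) * (τ (g+a+d+2))⁻¹ := by
        have h5 := M1 cs (q := g+a+d+2) (e := 1) (d := a+d+1) (r := g)
          (show 1+(a+d+1)+g ≤ g+a+d+2 from by omega) (show g+a+d+2 ≤ n from by omega)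
        rw [show 1+(a+d+1) = a+d+2 from by omega, show (a+d+1)+g = g+a+d+1 from by omega,
          show a+d+2+g = g+a+d+2 from by omega, Nat.cast_one] at h5
        rw [show ((τ (a+d+2))⁻¹ : W) = τ (a+d+2) ^ (-(1:ℤ)) from by rw [zpow_neg, zpow_one],
          show ((τ (g+a+d+2))⁻¹ : W) = τ (g+a+d+2) ^ (-(1:ℤ)) from by rw [zpow_neg, zpow_one]]
        calc τ (g+a+d+2) ^ ((g:ℕ):ℤ) * τ (a+d+2) ^ (-(1:ℤ))
            = (τ (g+a+d+2) ^ ((g:ℕ):ℤ) * τ (a+d+2) ^ (-(1:ℤ)) * τ (g+a+d+2) ^ (-((g:ℕ):ℤ))) *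
                τ (g+a+d+2) ^ ((g:ℕ):ℤ) := by group
          _ = (τ (g+a+d+1) ^ ((g:ℕ):ℤ) * τ (g+a+d+2) ^ (-(1:ℤ)-(g:ℤ))) *
                τ (g+a+d+2) ^ ((g:ℕ):ℤ) := by rw [h5]
          _ = τ (g+a+d+1) ^ ((g:ℕ):ℤ) * τ (g+a+d+2) ^ (-(1:ℤ)) := by group
      have e0 : τ q ^ ((g:ℤ)+((a+1:ℕ):ℤ)) = τ q * τ q ^ ((g:ℤ)+(a:ℤ)) := by
        push_cast
        rw [show (g:ℤ)+((a:ℤ)+1) = 1+((g:ℤ)+(a:ℤ)) from by ring, zpow_add, zpow_one]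
      calc τ q ^ ((g:ℤ)+((a+1:ℕ):ℤ)) * τ p ^ (-(m:ℤ))
          = τ q * (τ q ^ ((g:ℤ)+(a:ℤ)) * τ p ^ (-(m:ℤ))) := by rw [e0]; group
        _ = τ q * (τ a ^ (-(a:ℤ)) * τ (g+a) ^ ((a:ℕ):ℤ) * τ (g+a+d+1) ^ ((g:ℕ):ℤ) *
              τ q ^ ((a:ℤ)-(m:ℤ))) := by rw [ihh]
        _ = (τ q * τ a ^ (-(a:ℤ))) * (τ (g+a) ^ ((a:ℕ):ℤ) * (τ (g+a+d+1) ^ ((g:ℕ):ℤ) *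
              τ q ^ ((a:ℤ)-(m:ℤ)))) := by group
        _ = (τ 1 * τ (a+1) ^ (-(a:ℤ)-1) * τ q) * (τ (g+a) ^ ((a:ℕ):ℤ) *
              (τ (g+a+d+1) ^ ((g:ℕ):ℤ) * τ q ^ ((a:ℤ)-(m:ℤ)))) := by rw [hP1]
        _ = τ 1 * τ (a+1) ^ (-(a:ℤ)-1) * ((τ q * τ (g+a) ^ ((a:ℕ):ℤ)) *
              (τ (g+a+d+1) ^ ((g:ℕ):ℤ) * τ q ^ ((a:ℤ)-(m:ℤ)))) := by group
        _ = τ 1 * τ (a+1) ^ (-(a:ℤ)-1) * ((τ (g+a+1) ^ ((a:ℤ)+1) * (τ (g+1))⁻¹ * τ q) *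
              (τ (g+a+d+1) ^ ((g:ℕ):ℤ) * τ q ^ ((a:ℤ)-(m:ℤ)))) := by rw [hP2]
        _ = τ 1 * τ (a+1) ^ (-(a:ℤ)-1) * (τ (g+a+1) ^ ((a:ℤ)+1) * (τ (g+1))⁻¹ *
              ((τ q * τ (g+a+d+1) ^ ((g:ℕ):ℤ)) * τ q ^ ((a:ℤ)-(m:ℤ)))) := by group
        _ = τ 1 * τ (a+1) ^ (-(a:ℤ)-1) * (τ (g+a+1) ^ ((a:ℤ)+1) * (τ (g+1))⁻¹ *
              ((τ (g+a+d+2) ^ ((g:ℤ)+1) * (τ (a+d+2))⁻¹ * τ q) * τ q ^ ((a:ℤ)-(m:ℤ)))) := by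
            rw [hP3]
        _ = (τ 1 * τ (a+1) ^ (-(a:ℤ)-1)) * τ (g+a+1) ^ ((a:ℤ)+1) * ((τ (g+1))⁻¹ *
              (τ (g+a+d+2) ^ ((g:ℤ)+1) * ((τ (a+d+2))⁻¹ *
              (τ q * τ q ^ ((a:ℤ)-(m:ℤ)))))) := by group
        _ = (τ (a+1) ^ (-(a:ℤ)-1) * τ 1) * τ (g+a+1) ^ ((a:ℤ)+1) * ((τ (g+1))⁻¹ *
              (τ (g+a+d+2) ^ ((g:ℤ)+1) * ((τ (a+d+2))⁻¹ *
              (τ q * τ q ^ ((a:ℤ)-(m:ℤ)))))) := by rw [hC1]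
        _ = τ (a+1) ^ (-(a:ℤ)-1) * (τ 1 * τ (g+a+1) ^ ((a:ℤ)+1)) * ((τ (g+1))⁻¹ *
              (τ (g+a+d+2) ^ ((g:ℤ)+1) * ((τ (a+d+2))⁻¹ *
              (τ q * τ q ^ ((a:ℤ)-(m:ℤ)))))) := by group
        _ = τ (a+1) ^ (-(a:ℤ)-1) * (τ (g+a+1) ^ ((a:ℤ)+1) * ε (g+1)) * ((τ (g+1))⁻¹ *
              (τ (g+a+d+2) ^ ((g:ℤ)+1) * ((τ (a+d+2))⁻¹ *
              (τ q * τ q ^ ((a:ℤ)-(m:ℤ)))))) := by rw [hC2]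
        _ = τ (a+1) ^ (-(a:ℤ)-1) * τ (g+a+1) ^ ((a:ℤ)+1) * (ε (g+1) * (τ (g+1))⁻¹) *
              (τ (g+a+d+2) ^ ((g:ℤ)+1) * (τ (a+d+2))⁻¹) *
              (τ q * τ q ^ ((a:ℤ)-(m:ℤ))) := by group
        _ = τ (a+1) ^ (-(a:ℤ)-1) * τ (g+a+1) ^ ((a:ℤ)+1) *
              (τ (g+a+d+2) ^ ((g:ℤ)+1) * τ (g+a+d+1) ^ (-((g:ℕ):ℤ)) * (τ (g+a+d+2))⁻¹) *
              (τ (g+a+d+2) ^ ((g:ℤ)+1) * (τ (a+d+2))⁻¹) *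
              (τ q * τ q ^ ((a:ℤ)-(m:ℤ))) := by rw [hY]
        _ = τ (a+1) ^ (-(a:ℤ)-1) * τ (g+a+1) ^ ((a:ℤ)+1) *
              (τ (g+a+d+2) ^ ((g:ℤ)+1) * τ (g+a+d+1) ^ (-((g:ℕ):ℤ))) *
              (τ (g+a+d+2) ^ ((g:ℕ):ℤ) * (τ (a+d+2))⁻¹) *
              (τ q * τ q ^ ((a:ℤ)-(m:ℤ))) := by group
        _ = τ (a+1) ^ (-(a:ℤ)-1) * τ (g+a+1) ^ ((a:ℤ)+1) *
              (τ (g+a+d+2) ^ ((g:ℤ)+1) * τ (g+a+d+1) ^ (-((g:ℕ):ℤ))) *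
              (τ (g+a+d+1) ^ ((g:ℕ):ℤ) * (τ (g+a+d+2))⁻¹) *
              (τ q * τ q ^ ((a:ℤ)-(m:ℤ))) := by rw [hM]
        _ = τ (a+1) ^ (-(a:ℤ)-1) * τ (g+a+1) ^ ((a:ℤ)+1) * τ (g+a+d+2) ^ ((g:ℕ):ℤ) *
              τ q ^ ((a:ℤ)+1-(m:ℤ)) := by group
        _ = τ (a+1) ^ (-((a+1:ℕ):ℤ)) * τ (g+(a+1)) ^ (((a+1:ℕ)):ℤ) *
              τ (g+(a+1)+d+1) ^ ((g:ℕ):ℤ) * τ q ^ (((a+1:ℕ):ℤ)-(m:ℤ)) := by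
            rw [show g+(a+1) = g+a+1 from by omega, show g+a+1+d+1 = g+a+d+2 from by omega,
              show (-((a+1:ℕ):ℤ)) = -(a:ℤ)-1 from by push_cast; ring,
              show (((a+1:ℕ)):ℤ) = (a:ℤ)+1 from by push_cast; ring]


lemma Case3 {p q g m d : ℕ} (hp : p = m+d+1) (hq : q = p + g) (hg : 1 ≤ g) (hm : 1 ≤ m)
    (hn : q ≤ n) : ∀ b : ℕ, b ≤ d →
      τ q ^ ((g:ℤ)+(m:ℤ)+(b:ℤ)) * τ p ^ (-(m:ℤ)) =
        τ (m+b) ^ (-(m:ℤ)) * τ (g+m+b) ^ ((m:ℕ):ℤ) * τ q ^ ((g:ℤ)+(b:ℤ)) := by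
  intro b
  induction b with
  | zero =>
      intro _
      have h2 := Case2 cs hp hq hg hn m (le_refl m)
      rw [show g+m+d+1 = q from by omega] at h2
      calc τ q ^ ((g:ℤ)+(m:ℤ)+((0:ℕ):ℤ)) * τ p ^ (-(m:ℤ))
          = τ q ^ ((g:ℤ)+(m:ℤ)) * τ p ^ (-(m:ℤ)) := by norm_num
        _ = τ m ^ (-(m:ℤ)) * τ (g+m) ^ ((m:ℕ):ℤ) * τ q ^ ((g:ℕ):ℤ) * τ q ^ ((m:ℤ)-(m:ℤ)) := h2
        _ = τ (m+0) ^ (-(m:ℤ)) * τ (g+m+0) ^ ((m:ℕ):ℤ) * τ q ^ ((g:ℤ)+((0:ℕ):ℤ)) := by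
            rw [show m+0 = m from by omega, show g+m+0 = g+m from by omega]
            group
  | succ b ih =>
      intro hb
      have ihh := ih (by omega)
      have hP1 : τ q * τ (m+b) ^ (-(m:ℤ)) = τ (b+1) * τ (m+b+1) ^ (-(m:ℤ)-1) * τ q := by
        have := S1 cs (show m ≤ m+b from by omega) (show m+b < q from by omega) hn
        rwa [show m+b+1-m = b+1 from by omega] at this
      have hP2 : τ q * τ (g+m+b) ^ ((m:ℕ):ℤ) =
          τ (g+m+b+1) ^ ((m:ℤ)+1) * (τ (g+b+1))⁻¹ * τ q := by
        have := S2 cs (show g+m+b < q from by omega) hn m (by omega)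
        rwa [show g+m+b+1-m = g+b+1 from by omega] at this
      have hA : τ (g+m+b+1) ^ ((m:ℤ)+1) * (τ (g+b+1))⁻¹ =
          τ (g+m+b+1) * τ (g+m+b) ^ ((m:ℕ):ℤ) * (τ (g+m+b+1))⁻¹ := by
        have h5 := M1 cs (q := g+m+b+1) (e := 1) (d := g+b) (r := m)
          (show 1+(g+b)+m ≤ g+m+b+1 from by omega) (show g+m+b+1 ≤ n from by omega)
        rw [show 1+(g+b) = g+b+1 from by omega, show (g+b)+m = g+m+b from by omega,
          show g+b+1+m = g+m+b+1 from by omega, Nat.cast_one] at h5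
        rw [show ((τ (g+b+1))⁻¹ : W) = τ (g+b+1) ^ (-(1:ℤ)) from by rw [zpow_neg, zpow_one]]
        calc τ (g+m+b+1) ^ ((m:ℤ)+1) * τ (g+b+1) ^ (-(1:ℤ))
            = τ (g+m+b+1) *
                (τ (g+m+b+1) ^ ((m:ℕ):ℤ) * τ (g+b+1) ^ (-(1:ℤ)) * τ (g+m+b+1) ^ (-((m:ℕ):ℤ))) *
                τ (g+m+b+1) ^ ((m:ℕ):ℤ) := by group
          _ = τ (g+m+b+1) * (τ (g+m+b) ^ ((m:ℕ):ℤ) * τ (g+m+b+1) ^ (-(1:ℤ)-(m:ℤ))) *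
                τ (g+m+b+1) ^ ((m:ℕ):ℤ) := by rw [h5]
          _ = τ (g+m+b+1) * τ (g+m+b) ^ ((m:ℕ):ℤ) * (τ (g+m+b+1))⁻¹ := by
              rw [show ((τ (g+m+b+1))⁻¹ : W) = τ (g+m+b+1) ^ (-(1:ℤ)) from by
                rw [zpow_neg, zpow_one]]
              group
      have hgam : ∀ k : ℕ, m ≤ k → k+1 ≤ n →
          τ (m+1) * ε (m+1) = τ (k+1) * (τ k ^ ((m:ℕ):ℤ) * τ (k+1) ^ (-((m:ℤ)+1))) := by
        intro k hk1 hk2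
        have hY2 := Ylem cs hk2 m hk1
        have h7 := congrArg Inv.inv hY2
        simp only [mul_inv_rev, inv_inv, ← zpow_neg, neg_neg, eps_inv] at h7
        rw [eq_inv_mul_iff_mul_eq] at h7
        rw [← h7]
        done
      have hγ1 := hgam (g+m+b) (by omega) (by omega)
      have hγ2 := hgam (m+b) (by omega) (by omega)
      have hD : τ (m+b+1) ^ ((m:ℕ):ℤ) * τ (b+1) ^ (-(1:ℤ)) * τ (m+b+1) ^ (-((m:ℕ):ℤ)) =
          τ (m+b) ^ ((m:ℕ):ℤ) * τ (m+b+1) ^ (-((m:ℤ)+1)) := by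
        have h5 := M1 cs (q := m+b+1) (e := 1) (d := b) (r := m)
          (show 1+b+m ≤ m+b+1 from by omega) (show m+b+1 ≤ n from by omega)
        rw [show 1+b = b+1 from by omega, show b+m = m+b from by omega,
          show b+1+m = m+b+1 from by omega, Nat.cast_one,
          show (-(1:ℤ)-(m:ℤ)) = -((m:ℤ)+1) from by ring] at h5
        exact h5
      have e0 : τ q ^ ((g:ℤ)+(m:ℤ)+((b+1:ℕ):ℤ)) = τ q * τ q ^ ((g:ℤ)+(m:ℤ)+(b:ℤ)) := by
        push_cast
        rw [show (g:ℤ)+(m:ℤ)+((b:ℤ)+1) = 1+((g:ℤ)+(m:ℤ)+(b:ℤ)) from by ring, zpow_add, zpow_one]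
      calc τ q ^ ((g:ℤ)+(m:ℤ)+((b+1:ℕ):ℤ)) * τ p ^ (-(m:ℤ))
          = τ q * (τ q ^ ((g:ℤ)+(m:ℤ)+(b:ℤ)) * τ p ^ (-(m:ℤ))) := by rw [e0]; group
        _ = τ q * (τ (m+b) ^ (-(m:ℤ)) * τ (g+m+b) ^ ((m:ℕ):ℤ) * τ q ^ ((g:ℤ)+(b:ℤ))) := by
            rw [ihh]
        _ = (τ q * τ (m+b) ^ (-(m:ℤ))) * (τ (g+m+b) ^ ((m:ℕ):ℤ) * τ q ^ ((g:ℤ)+(b:ℤ))) := by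
            group
        _ = (τ (b+1) * τ (m+b+1) ^ (-(m:ℤ)-1) * τ q) *
              (τ (g+m+b) ^ ((m:ℕ):ℤ) * τ q ^ ((g:ℤ)+(b:ℤ))) := by rw [hP1]
        _ = τ (b+1) * τ (m+b+1) ^ (-(m:ℤ)-1) *
              ((τ q * τ (g+m+b) ^ ((m:ℕ):ℤ)) * τ q ^ ((g:ℤ)+(b:ℤ))) := by group
        _ = τ (b+1) * τ (m+b+1) ^ (-(m:ℤ)-1) *
              ((τ (g+m+b+1) ^ ((m:ℤ)+1) * (τ (g+b+1))⁻¹ * τ q) * τ q ^ ((g:ℤ)+(b:ℤ))) := by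
            rw [hP2]
        _ = τ (b+1) * τ (m+b+1) ^ (-(m:ℤ)-1) *
              ((τ (g+m+b+1) ^ ((m:ℤ)+1) * (τ (g+b+1))⁻¹) * (τ q * τ q ^ ((g:ℤ)+(b:ℤ)))) := by
            group
        _ = τ (b+1) * τ (m+b+1) ^ (-(m:ℤ)-1) *
              ((τ (g+m+b+1) * τ (g+m+b) ^ ((m:ℕ):ℤ) * (τ (g+m+b+1))⁻¹) *
                (τ q * τ q ^ ((g:ℤ)+(b:ℤ)))) := by rw [hA]
        _ = τ (b+1) * τ (m+b+1) ^ (-(m:ℤ)-1) *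
              ((τ (g+m+b+1) * (τ (g+m+b) ^ ((m:ℕ):ℤ) * τ (g+m+b+1) ^ (-((m:ℤ)+1)))) *
                (τ (g+m+b+1) ^ ((m:ℕ):ℤ) * (τ q * τ q ^ ((g:ℤ)+(b:ℤ))))) := by group
        _ = τ (b+1) * τ (m+b+1) ^ (-(m:ℤ)-1) *
              ((τ (m+1) * ε (m+1)) * (τ (g+m+b+1) ^ ((m:ℕ):ℤ) * (τ q * τ q ^ ((g:ℤ)+(b:ℤ))))) := by
            rw [hγ1]
        _ = τ (b+1) * τ (m+b+1) ^ (-(m:ℤ)-1) *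
              ((τ (m+b+1) * (τ (m+b) ^ ((m:ℕ):ℤ) * τ (m+b+1) ^ (-((m:ℤ)+1)))) *
                (τ (g+m+b+1) ^ ((m:ℕ):ℤ) * (τ q * τ q ^ ((g:ℤ)+(b:ℤ))))) := by rw [hγ2]
        _ = τ (b+1) * τ (m+b+1) ^ (-(m:ℤ)) *
              ((τ (m+b) ^ ((m:ℕ):ℤ) * τ (m+b+1) ^ (-((m:ℤ)+1))) *
                (τ (g+m+b+1) ^ ((m:ℕ):ℤ) * (τ q * τ q ^ ((g:ℤ)+(b:ℤ))))) := by group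
        _ = τ (b+1) * τ (m+b+1) ^ (-(m:ℤ)) *
              ((τ (m+b+1) ^ ((m:ℕ):ℤ) * τ (b+1) ^ (-(1:ℤ)) * τ (m+b+1) ^ (-((m:ℕ):ℤ))) *
                (τ (g+m+b+1) ^ ((m:ℕ):ℤ) * (τ q * τ q ^ ((g:ℤ)+(b:ℤ))))) := by rw [hD]
        _ = τ (m+b+1) ^ (-(m:ℤ)) * τ (g+m+b+1) ^ ((m:ℕ):ℤ) * τ q ^ ((g:ℤ)+((b+1:ℕ):ℤ)) := by
            push_cast
            group
        _ = τ (m+(b+1)) ^ (-(m:ℤ)) * τ (g+m+(b+1)) ^ ((m:ℕ):ℤ) * τ q ^ ((g:ℤ)+((b+1:ℕ):ℤ)) := by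
            rw [show m+(b+1) = m+b+1 from by omega, show g+m+(b+1) = g+m+b+1 from by omega]

end Bexch

/-- The exchange laws for `τ_q^{r_q} · τ_p^{r_p}` with `0 < r_q < q`, `-p < r_p < 0`. -/
theorem exchange_laws_neg (cs : CoxeterSystem (BCoxeterMatrix n) W)
    (p q : ℕ) (hp : 1 ≤ p) (hpq : p < q) (hq : q ≤ n)
    (rq rp : ℤ) (hrq : 0 < rq ∧ rq < (q : ℤ)) (hrp : -(p : ℤ) < rp ∧ rp < 0) :
    ((p : ℤ) ≤ (q : ℤ) - rq →
      tau cs q ^ rq * tau cs p ^ rp =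
        tau cs (rq + rp + p).toNat ^ rq * tau cs ((p : ℤ) + rq).toNat ^ (rp - rq) *
          tau cs q ^ rq) ∧
    (rp + p ≤ (q : ℤ) - rq ∧ (q : ℤ) - rq ≤ (p : ℤ) →
      tau cs q ^ rq * tau cs p ^ rp =
        tau cs ((p : ℤ) + rq - q).toNat ^ (-(p : ℤ) - rq + q) *
          tau cs rq.toNat ^ ((p : ℤ) + rq - q) *
          tau cs (rq + rp + p).toNat ^ ((q : ℤ) - p) *
          tau cs q ^ ((p : ℤ) + rp - q + rq)) ∧
    ((q : ℤ) - rq ≤ rp + p →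
      tau cs q ^ rq * tau cs p ^ rp =
        tau cs ((p : ℤ) + rq - q).toNat ^ rp * tau cs rq.toNat ^ (-rp) *
          tau cs q ^ (rq + rp)) := by
  obtain ⟨r, hr⟩ : ∃ r : ℕ, rq = (r:ℤ) := ⟨rq.toNat, by omega⟩
  obtain ⟨m, hm⟩ : ∃ m : ℕ, rp = -(m:ℤ) := ⟨(-rp).toNat, by omega⟩
  subst hr hm
  obtain ⟨hr1, hr2⟩ := hrq
  obtain ⟨hm1, hm2⟩ := hrp
  have hr1' : 1 ≤ r := by omega
  have hr2' : r < q := by omega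
  have hm1' : 1 ≤ m := by omega
  have hm2' : m < p := by omega
  refine ⟨?_, ?_, ?_⟩
  · intro h
    have hcond : p + r ≤ q := by omega
    have hM := Bexch.M1 cs (q := q) (e := m) (d := p - m) (r := r) (by omega) hq
    rw [show m+(p-m) = p from by omega] at hM
    rw [show ((r:ℤ) + -(m:ℤ) + (p:ℤ)).toNat = (p-m)+r from by omega,
      show (((p:ℤ) + (r:ℤ))).toNat = p+r from by omega]
    calc tau cs q ^ (r:ℤ) * tau cs p ^ (-(m:ℤ))
        = (tau cs q ^ (r:ℤ) * tau cs p ^ (-(m:ℤ)) * tau cs q ^ (-((r:ℕ):ℤ))) *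
            tau cs q ^ (r:ℤ) := by group
      _ = tau cs ((p-m)+r) ^ ((r:ℕ):ℤ) * tau cs (p+r) ^ (-(m:ℤ)-(r:ℤ)) * tau cs q ^ (r:ℤ) := by
          rw [hM]
      _ = tau cs ((p-m)+r) ^ ((r:ℕ):ℤ) * tau cs (p+r) ^ (-(m:ℤ) - (r:ℤ)) * tau cs q ^ (r:ℤ) := by
          norm_num
  · rintro ⟨h1, h2⟩
    have hC := Bexch.Case2 cs (p := p) (q := q) (g := q-p) (m := m) (d := p-m-1)
      (by omega) (by omega) (by omega) hq (p+r-q) (by omega)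
    rw [show ((r:ℤ) + -(m:ℤ) + (p:ℤ)).toNat = (q-p)+(p+r-q)+(p-m-1)+1 from by omega,
      show (((p:ℤ) + (r:ℤ) - (q:ℤ))).toNat = p+r-q from by omega,
      show (((r:ℤ)):ℤ).toNat = (q-p)+(p+r-q) from by omega,
      show (-(p:ℤ) - (r:ℤ) + (q:ℤ)) = -((p+r-q:ℕ):ℤ) from by omega,
      show ((p:ℤ) + (r:ℤ) - (q:ℤ)) = ((p+r-q:ℕ):ℤ) from by omega,
      show ((q:ℤ) - (p:ℤ)) = ((q-p:ℕ):ℤ) from by omega,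
      show ((p:ℤ) + -(m:ℤ) - (q:ℤ) + (r:ℤ)) = ((p+r-q:ℕ):ℤ) - (m:ℤ) from by omega,
      show ((r:ℤ)) = ((q-p:ℕ):ℤ) + ((p+r-q:ℕ):ℤ) from by omega]
    exact hC
  · intro h
    have hC := Bexch.Case3 cs (p := p) (q := q) (g := q-p) (m := m) (d := p-m-1)
      (by omega) (by omega) (by omega) (by omega) hq (p+r-q-m) (by omega)
    rw [show (((p:ℤ) + (r:ℤ) - (q:ℤ))).toNat = m+(p+r-q-m) from by omega,
      show (((r:ℤ)):ℤ).toNat = (q-p)+m+(p+r-q-m) from by omega,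
      show (-(-(m:ℤ))) = ((m:ℕ):ℤ) from by omega,
      show ((r:ℤ) + -(m:ℤ)) = ((q-p:ℕ):ℤ) + ((p+r-q-m:ℕ):ℤ) from by omega,
      show ((r:ℤ)) = ((q-p:ℕ):ℤ) + (m:ℤ) + ((p+r-q-m:ℕ):ℤ) from by omega]
    exact hC
end
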